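/- arXiv:2506.01913 — 9 statements merged into one kernel-verified Lean document; each statement's English description precedes it below -/
import Mathlib

section
/- Let f : E → ℝ be differentiable with L-smooth gradient with respect to ‖·‖, i.e. ‖∇f(x) − ∇f(y)‖_* ≤ L‖x − y‖ for all x, y ∈ E, and suppose f* := inf_{x∈E} f(x) > −∞. Let γ, ρ > 0 and let the iterates satisfy x^{k+1} = x^k + γρ·lmo(∇f(x^k)) for k = 1, …, n. Then min_{1≤k≤n} ‖∇f(x^k)‖_* ≤ (1/n)·Σ_{k=1}^n ‖∇f(x^k)‖_* ≤ (f(x¹) − f*)/(γρn) + Lγρ/2. -/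
open scoped RealInnerProductSpace

/-- Convergence of the unconstrained conditional gradient method (uCG)
under `L`-smoothness: the minimum (and average) dual gradient norm over the first `n`
iterates is bounded by `(f(x¹) − f*)/(γρn) + Lγρ/2`. -/
theorem uCG_rate
    {E : Type*} [NormedAddCommGroup E] [InnerProductSpace ℝ E] [FiniteDimensional ℝ E]
    -- the (possibly non-Euclidean) norm `‖·‖` on `E`
    (Nm : E → ℝ)
    (hNm0 : Nm 0 = 0)
    (hNmpos : ∀ z : E, z ≠ 0 → 0 < Nm z)
    (hNmsmul : ∀ (a : ℝ) (z : E), Nm (a • z) = |a| * Nm z)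
    (hNmadd : ∀ z w : E, Nm (z + w) ≤ Nm z + Nm w)
    -- the dual norm `‖d‖_* = sup {⟨d,x⟩ : ‖x‖ ≤ 1}`
    (Dstar : E → ℝ)
    (hDstar : ∀ d : E, IsLUB ((fun z => ⟪d, z⟫) '' {z : E | Nm z ≤ 1}) (Dstar d))
    -- the linear minimization oracle `lmo(d) ∈ argmin {⟨d,x⟩ : ‖x‖ ≤ 1}`
    (lmo : E → E)
    (hlmo : ∀ d : E, Nm (lmo d) ≤ 1 ∧ ∀ z : E, Nm z ≤ 1 → ⟪d, lmo d⟫ ≤ ⟪d, z⟫)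
    -- `f` differentiable with gradient `f'`
    (f : E → ℝ) (f' : E → E)
    (hdiff : ∀ z, HasGradientAt f (f' z) z)
    -- `L`-smoothness and the associated descent inequality
    (L : ℝ) (hL : 0 < L)
    (hsmooth : ∀ z w : E, Dstar (f' z - f' w) ≤ L * Nm (z - w))
    (hdesc : ∀ z w : E, f w ≤ f z + ⟪f' z, w - z⟫ + L / 2 * (Nm (w - z)) ^ 2)
    -- `f* = inf f > -∞`
    (fstar : ℝ) (hfstar : IsGLB (Set.range f) fstar)
    (γ ρ : ℝ) (hγ : 0 < γ) (hρ : 0 < ρ)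
    (n : ℕ) (hn : 1 ≤ n)
    -- the iterates
    (x : ℕ → E)
    (hupdate : ∀ k, 1 ≤ k → k ≤ n → x (k + 1) = x k + (γ * ρ) • lmo (f' (x k))) :
    (Finset.Icc 1 n).inf' (Finset.nonempty_Icc.mpr hn) (fun k => Dstar (f' (x k)))
        ≤ (1 / (n : ℝ)) * ∑ k ∈ Finset.Icc 1 n, Dstar (f' (x k)) ∧
    (1 / (n : ℝ)) * ∑ k ∈ Finset.Icc 1 n, Dstar (f' (x k))
        ≤ (f (x 1) - fstar) / (γ * ρ * n) + L * γ * ρ / 2 := by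

  have hNmnn : ∀ z : E, 0 ≤ Nm z := by
    intro z
    by_cases h : z = 0
    · simp [h, hNm0]
    · exact (hNmpos z h).le
  set S : ℝ := ∑ k ∈ Finset.Icc 1 n, Dstar (f' (x k)) with hS
  have hnpos : (0:ℝ) < n := by exact_mod_cast hn
  have hγρ : 0 < γ * ρ := mul_pos hγ hρ
  -- min ≤ average
  have hmin : (Finset.Icc 1 n).inf' (Finset.nonempty_Icc.mpr hn) (fun k => Dstar (f' (x k)))
      ≤ (1 / (n : ℝ)) * S := by
    have hcard : (Finset.Icc 1 n).card = n := by simp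
    have hle : (Finset.Icc 1 n).card •
        ((Finset.Icc 1 n).inf' (Finset.nonempty_Icc.mpr hn) (fun k => Dstar (f' (x k)))) ≤ S :=
      Finset.card_nsmul_le_sum _ _ _ (fun i hi => Finset.inf'_le _ hi)
    rw [hcard, nsmul_eq_mul] at hle
    rw [div_mul_eq_mul_div, le_div_iff₀ hnpos, one_mul, mul_comm]
    exact hle
  -- per-step descent
  have key : ∀ k, 1 ≤ k → k ≤ n →
      f (x (k+1)) ≤ f (x k) - γ * ρ * Dstar (f' (x k)) + L / 2 * (γ * ρ)^2 := by
    intro k hk1 hkn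
    set d := f' (x k) with hd
    set s := lmo d with hs
    have hstep : x (k+1) - x k = (γ * ρ) • s := by
      rw [hupdate k hk1 hkn]; abel
    have hds : ⟪d, s⟫ ≤ -Dstar d := by
      have hub : Dstar d ≤ -⟪d, s⟫ := by
        refine (hDstar d).2 ?_
        rintro v ⟨z, hz, rfl⟩
        have hnz : Nm (-z) ≤ 1 := by
          have := hNmsmul (-1) z
          simp at this
          rw [show -z = (-1 : ℝ) • z by simp, hNmsmul]
          simpa using hz
        have := (hlmo d).2 (-z) hnz
        simp only [inner_neg_right] at this
        linarith
      linarith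
    have hNs : Nm ((γ * ρ) • s) ≤ γ * ρ := by
      rw [hNmsmul, abs_of_pos hγρ]
      nlinarith [(hlmo d).1, hNmnn s]
    have hsq : (Nm ((γ * ρ) • s))^2 ≤ (γ * ρ)^2 := by
      nlinarith [hNmnn ((γ * ρ) • s)]
    have := hdesc (x k) (x (k+1))
    rw [hstep] at this
    rw [real_inner_smul_right] at this
    have h1 : γ * ρ * ⟪d, s⟫ ≤ γ * ρ * (-Dstar d) := by
      exact mul_le_mul_of_nonneg_left hds hγρ.le
    nlinarith
  -- telescoping sum
  have htel : ∀ m, m ≤ n → γ * ρ * (∑ k ∈ Finset.Icc 1 m, Dstar (f' (x k)))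
      ≤ f (x 1) - f (x (m+1)) + m * (L / 2 * (γ * ρ)^2) := by
    intro m
    induction m with
    | zero => intro _; simp
    | succ m ih =>
      intro hm
      have hm' : m ≤ n := le_trans (Nat.le_succ m) hm
      have ihm := ih hm'
      rw [Finset.sum_Icc_succ_top (Nat.one_le_iff_ne_zero.mpr (Nat.succ_ne_zero m))]
      have hk := key (m+1) (Nat.le_add_left 1 m) hm
      push_cast
      nlinarith
  have hfin := htel n le_rfl
  have hflb : fstar ≤ f (x (n+1)) := hfstar.1 ⟨x (n+1), rfl⟩
  have hsum : γ * ρ * S ≤ f (x 1) - fstar + n * (L / 2 * (γ * ρ)^2) := by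
    rw [hS]; nlinarith
  refine ⟨hmin, ?_⟩
  have e1 : (f (x 1) - fstar) / (γ * ρ * ↑n) + L * γ * ρ / 2 - (1 / (↑n:ℝ)) * S
      = ((f (x 1) - fstar) + ↑n * (L / 2 * (γ * ρ)^2) - γ * ρ * S) / (γ * ρ * ↑n) := by
    field_simp
  have h3 : 0 ≤ ((f (x 1) - fstar) + ↑n * (L / 2 * (γ * ρ)^2) - γ * ρ * S) / (γ * ρ * ↑n) :=
    div_nonneg (by linarith) (by positivity)
  linarith [e1, h3]
end

section
/- Let f : E → ℝ be (L₀,L₁)-smooth with respect to ‖·‖ with f* := inf_{x∈E} f(x) > −∞ and Δ := f(x¹) − f*. Let γ, ρ > 0 with γρ ≤ 1/(2L₁), and let the iterates satisfy x^{k+1} = x^k + γρ·lmo(∇f(x^k)) for k = 1, …, n. Then min_{1≤k≤n} ‖∇f(x^k)‖_* ≤ 2Δ/(γρn) + 2L₀γρ. -/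
open scoped RealInnerProductSpace

set_option maxHeartbeats 1000000 in
/-- Convergence of uCG under `(L₀,L₁)`-smoothness with `γρ ≤ 1/(2L₁)`:
`min_{1≤k≤n} ‖∇f(x^k)‖_* ≤ 2Δ/(γρn) + 2L₀γρ` where `Δ = f(x¹) − f*`. -/
theorem uCG_rate_L0L1
    {E : Type*} [NormedAddCommGroup E] [InnerProductSpace ℝ E] [FiniteDimensional ℝ E]
    -- the (possibly non-Euclidean) norm `‖·‖` on `E`
    (Nm : E → ℝ)
    (hNm0 : Nm 0 = 0)
    (hNmpos : ∀ z : E, z ≠ 0 → 0 < Nm z)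
    (hNmsmul : ∀ (a : ℝ) (z : E), Nm (a • z) = |a| * Nm z)
    (hNmadd : ∀ z w : E, Nm (z + w) ≤ Nm z + Nm w)
    -- the dual norm `‖d‖_* = sup {⟨d,x⟩ : ‖x‖ ≤ 1}`
    (Dstar : E → ℝ)
    (hDstar : ∀ d : E, IsLUB ((fun z => ⟪d, z⟫) '' {z : E | Nm z ≤ 1}) (Dstar d))
    -- the lmo: `lmo(d) ∈ argmin {⟨d,x⟩ : ‖x‖ ≤ 1}`, `⟨d, lmo(d)⟩ = −‖d‖_*`, `‖lmo(d)‖ ≤ 1`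
    (lmo : E → E)
    (hlmo : ∀ d : E, Nm (lmo d) ≤ 1 ∧ ∀ z : E, Nm z ≤ 1 → ⟪d, lmo d⟫ ≤ ⟪d, z⟫)
    (hlmo_eq : ∀ d : E, ⟪d, lmo d⟫ = -(Dstar d))
    -- `f` differentiable with gradient `f'`
    (f : E → ℝ) (f' : E → E)
    (hdiff : ∀ z, HasGradientAt f (f' z) z)
    -- `(L₀,L₁)`-smoothness (the condition `‖x−y‖ ≤ 1/L₁` is encoded as `L₁‖x−y‖ ≤ 1`)
    (L0 L1 : ℝ) (hL0 : 0 ≤ L0) (hL1 : 0 ≤ L1)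
    (hsmooth : ∀ z w : E, L1 * Nm (z - w) ≤ 1 →
      Dstar (f' z - f' w) ≤ (L0 + L1 * Dstar (f' z)) * Nm (z - w))
    (hdesc : ∀ z w : E, L1 * Nm (w - z) ≤ 1 →
      f w ≤ f z + ⟪f' z, w - z⟫ + (L0 + L1 * Dstar (f' z)) / 2 * (Nm (w - z)) ^ 2)
    -- `f* = inf f > -∞`
    (fstar : ℝ) (hfstar : IsGLB (Set.range f) fstar)
    -- stepsize and radius with `γρ ≤ 1/(2L₁)`
    (γ ρ : ℝ) (hγ : 0 < γ) (hρ : 0 < ρ) (hγρ : 2 * L1 * (γ * ρ) ≤ 1)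
    (n : ℕ) (hn : 1 ≤ n)
    -- the uCG iterates
    (x : ℕ → E)
    (hupdate : ∀ k, 1 ≤ k → k ≤ n → x (k + 1) = x k + (γ * ρ) • lmo (f' (x k))) :
    (Finset.Icc 1 n).inf' (Finset.nonempty_Icc.mpr hn) (fun k => Dstar (f' (x k)))
      ≤ 2 * (f (x 1) - fstar) / (γ * ρ * n) + 2 * L0 * γ * ρ := by
  set c := γ * ρ with hcdef
  have hc : 0 < c := mul_pos hγ hρ
  set M := (Finset.Icc 1 n).inf' (Finset.nonempty_Icc.mpr hn)
      (fun k => Dstar (f' (x k))) with hMdef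
  -- nonnegativity of Nm
  have hNnn : ∀ z : E, 0 ≤ Nm z := by
    intro z
    by_cases h : z = 0
    · simp [h, hNm0]
    · exact (hNmpos z h).le
  -- nonnegativity of Dstar
  have hDnn : ∀ d : E, 0 ≤ Dstar d := by
    intro d
    have : (0 : ℝ) ∈ (fun z => ⟪d, z⟫) '' {z : E | Nm z ≤ 1} :=
      ⟨0, by simp [hNm0], by simp⟩
    exact (hDstar d).1 this
  -- per-step decrease
  have step : ∀ k, 1 ≤ k → k ≤ n →
      f (x (k + 1)) ≤ f (x k) - (c / 2) * M + L0 / 2 * c ^ 2 := by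
    intro k hk1 hk2
    set g := f' (x k) with hg
    set s := lmo g with hs
    have hNs : Nm s ≤ 1 := (hlmo g).1
    have hNs0 : 0 ≤ Nm s := hNnn s
    have hxk : x (k + 1) = x k + c • s := hupdate k hk1 hk2
    have hdiffv : x (k + 1) - x k = c • s := by rw [hxk]; abel
    have hNw : Nm (x (k + 1) - x k) = c * Nm s := by
      rw [hdiffv, hNmsmul, abs_of_pos hc]
    have hcond : L1 * Nm (x (k + 1) - x k) ≤ 1 := by
      have h1 : L1 * (c * Nm s) ≤ L1 * c := by
        have := mul_le_mul_of_nonneg_left hNs (mul_nonneg hL1 hc.le)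
        nlinarith
      nlinarith
    have hd := hdesc (x k) (x (k + 1)) hcond
    have hinner : ⟪g, x (k + 1) - x k⟫ = -(c * Dstar g) := by
      rw [hdiffv, real_inner_smul_right, hlmo_eq]
      ring
    have hDg : 0 ≤ Dstar g := hDnn g
    have hMle : M ≤ Dstar g := by
      exact Finset.inf'_le _ (Finset.mem_Icc.mpr ⟨hk1, hk2⟩)
    have hL1c : L1 * c ≤ 1 / 2 := by linarith
    -- bound the quadratic term
    have hss : Nm s * Nm s ≤ 1 := by nlinarith
    have hsq : (Nm (x (k + 1) - x k)) ^ 2 ≤ c ^ 2 := by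
      rw [hNw]
      nlinarith [sq_nonneg c, mul_nonneg hc.le hc.le]
    have hquad : (L0 + L1 * Dstar g) / 2 * (Nm (x (k + 1) - x k)) ^ 2
        ≤ L0 / 2 * c ^ 2 + (c / 4) * Dstar g := by
      rw [hNw]
      have h1 : (L0 + L1 * Dstar g) / 2 * (c * Nm s) ^ 2
          ≤ (L0 + L1 * Dstar g) / 2 * c ^ 2 := by
        apply mul_le_mul_of_nonneg_left _ (by positivity)
        nlinarith [sq_nonneg c, mul_nonneg hc.le hc.le]
      have h2 : L1 * c * (c * Dstar g) ≤ 1 / 2 * (c * Dstar g) :=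
        mul_le_mul_of_nonneg_right hL1c (mul_nonneg hc.le hDg)
      nlinarith [h1, h2]
    have : f (x (k + 1)) ≤ f (x k) - c * Dstar g + (L0 / 2 * c ^ 2 + (c / 4) * Dstar g) := by
      rw [hinner] at hd
      linarith
    nlinarith
  -- telescoping
  have claim : ∀ j, j ≤ n →
      f (x (j + 1)) ≤ f (x 1) + (j : ℝ) * (-(c / 2) * M + L0 / 2 * c ^ 2) := by
    intro j
    induction j with
    | zero => intro _; simp
    | succ j ih =>
      intro hj
      have h1 := step (j + 1) (Nat.succ_le_succ (Nat.zero_le j)) hj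
      have h2 := ih (Nat.le_of_succ_le hj)
      push_cast
      push_cast at h2
      linarith
  have hkey := claim n le_rfl
  have hlow : fstar ≤ f (x (n + 1)) := hfstar.1 ⟨x (n + 1), rfl⟩
  have hn1 : (1 : ℝ) ≤ (n : ℝ) := by exact_mod_cast hn
  have hcn : (0 : ℝ) < γ * ρ * (n : ℝ) := by positivity
  have hΔ : (n : ℝ) * ((c / 2) * M - L0 / 2 * c ^ 2) ≤ f (x 1) - fstar := by
    nlinarith [hkey, hlow]
  have h2LC : 2 * L0 * γ * ρ = 2 * L0 * c := by rw [hcdef]; ring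
  rw [← sub_le_iff_le_add, h2LC, le_div_iff₀ hcn]
  have hcn' : γ * ρ * (n : ℝ) = c * n := by rw [hcdef]
  rw [hcn']
  nlinarith [hΔ, mul_nonneg (mul_nonneg hL0 (sq_nonneg c)) (le_trans zero_le_one hn1)]
end

section
/- Let f : E → ℝ be (L₀,L₁)-smooth with respect to ‖·‖. Fix γ, ρ > 0 with γ ≤ 1/(L₀ + ρL₁), and for x ∈ E set τ := min{1, ρ/‖∇f(x)‖_*} and x⁺ := x − γτ·[∇f(x)]^♯. Then f(x⁺) ≤ f(x) − (γτ/2)·‖∇f(x)‖_*². In particular, if ‖∇f(x)‖_* > ρ then f(x⁺) ≤ f(x) − (γρ/2)‖∇f(x)‖_*, and if ‖∇f(x)‖_* ≤ ρ then f(x⁺) ≤ f(x) − (γ/2)‖∇f(x)‖_*². -/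
open scoped RealInnerProductSpace

/-- One-step descent property of GGNC under `(L₀,L₁)`-smoothness:
with `τ = min{1, ρ/‖∇f(x)‖_*}` and `x⁺ = x − γτ[∇f(x)]^♯`,
`f(x⁺) ≤ f(x) − (γτ/2)‖∇f(x)‖_*²`; in particular the two clipping regimes. -/
theorem GGNC_descent_step
    {E : Type*} [NormedAddCommGroup E] [InnerProductSpace ℝ E] [FiniteDimensional ℝ E]
    -- the (possibly non-Euclidean) norm `‖·‖` on `E`
    (Nm : E → ℝ)
    (hNm0 : Nm 0 = 0)
    (hNmpos : ∀ z : E, z ≠ 0 → 0 < Nm z)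
    (hNmsmul : ∀ (a : ℝ) (z : E), Nm (a • z) = |a| * Nm z)
    (hNmadd : ∀ z w : E, Nm (z + w) ≤ Nm z + Nm w)
    -- the dual norm `‖d‖_* = sup {⟨d,x⟩ : ‖x‖ ≤ 1}`
    (Dstar : E → ℝ)
    (hDstar : ∀ d : E, IsLUB ((fun z => ⟪d, z⟫) '' {z : E | Nm z ≤ 1}) (Dstar d))
    -- the sharp operator `d^♯ ∈ argmax {⟨d,x⟩ − ½‖x‖²}`, with `⟨d,d^♯⟩ = ‖d^♯‖² = ‖d‖_*²`
    (sharp : E → E)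
    (hsharp : ∀ d z : E, ⟪d, z⟫ - (Nm z) ^ 2 / 2 ≤ ⟪d, sharp d⟫ - (Nm (sharp d)) ^ 2 / 2)
    (hsharp_eq : ∀ d : E, ⟪d, sharp d⟫ = (Nm (sharp d)) ^ 2 ∧
      (Nm (sharp d)) ^ 2 = (Dstar d) ^ 2)
    -- `f` differentiable with gradient `f'`
    (f : E → ℝ) (f' : E → E)
    (hdiff : ∀ z, HasGradientAt f (f' z) z)
    -- `(L₀,L₁)`-smoothness (the condition `‖x−y‖ ≤ 1/L₁` is encoded as `L₁‖x−y‖ ≤ 1`)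
    (L0 L1 : ℝ) (hL0 : 0 ≤ L0) (hL1 : 0 ≤ L1)
    (hsmooth : ∀ z w : E, L1 * Nm (z - w) ≤ 1 →
      Dstar (f' z - f' w) ≤ (L0 + L1 * Dstar (f' z)) * Nm (z - w))
    (hdesc : ∀ z w : E, L1 * Nm (w - z) ≤ 1 →
      f w ≤ f z + ⟪f' z, w - z⟫ + (L0 + L1 * Dstar (f' z)) / 2 * (Nm (w - z)) ^ 2)
    -- stepsize and radius: `γ ≤ 1/(L₀ + ρL₁)`
    (γ ρ : ℝ) (hγ : 0 < γ) (hρ : 0 < ρ) (hγle : γ * (L0 + ρ * L1) ≤ 1)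
    (x : E) :
    f (x - (γ * min 1 (ρ / Dstar (f' x))) • sharp (f' x))
        ≤ f x - γ * min 1 (ρ / Dstar (f' x)) / 2 * (Dstar (f' x)) ^ 2 ∧
    (ρ < Dstar (f' x) →
      f (x - (γ * min 1 (ρ / Dstar (f' x))) • sharp (f' x))
        ≤ f x - γ * ρ / 2 * Dstar (f' x)) ∧
    (Dstar (f' x) ≤ ρ →
      f (x - (γ * min 1 (ρ / Dstar (f' x))) • sharp (f' x))
        ≤ f x - γ / 2 * (Dstar (f' x)) ^ 2) := by
  set D := Dstar (f' x) with hD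
  set s := sharp (f' x) with hs
  set t := min 1 (ρ / D) with ht
  have hNmnn : ∀ z : E, 0 ≤ Nm z := by
    intro z
    rcases eq_or_ne z 0 with h | h
    · simp [h, hNm0]
    · exact (hNmpos z h).le
  have hDnn : 0 ≤ D := by
    have h0 : (fun z => ⟪f' x, z⟫) 0 ∈ (fun z => ⟪f' x, z⟫) '' {z : E | Nm z ≤ 1} := by
      exact Set.mem_image_of_mem _ (by simp [hNm0])
    have := (hDstar (f' x)).1 h0
    simpa using this
  have hNs : Nm s = D := by
    have h := (hsharp_eq (f' x)).2
    nlinarith [hNmnn s]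
  have hinner : ⟪f' x, s⟫ = D ^ 2 := by
    rw [(hsharp_eq (f' x)).1, (hsharp_eq (f' x)).2]
  have ht0 : 0 ≤ t := le_min (by norm_num) (div_nonneg hρ.le hDnn)
  have ht1 : t ≤ 1 := min_le_left _ _
  have htD : t * D ≤ ρ := by
    rcases eq_or_lt_of_le hDnn with h | h
    · simp [← h]; positivity
    · have : t ≤ ρ / D := min_le_right _ _
      calc t * D ≤ (ρ / D) * D := by nlinarith
        _ = ρ := by field_simp
  have htDnn : 0 ≤ t * D := mul_nonneg ht0 hDnn
  -- norm of the step
  have hstep : Nm ((x - (γ * t) • s) - x) = γ * t * D := by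
    have : (x - (γ * t) • s) - x = (-(γ * t)) • s := by
      rw [neg_smul]; abel
    rw [this, hNmsmul, hNs, abs_neg, abs_of_nonneg (by positivity)]
  have hA : γ * t * (L0 + L1 * D) ≤ 1 := by
    have h1 : γ * L1 * (t * D) ≤ γ * L1 * ρ :=
      mul_le_mul_of_nonneg_left htD (mul_nonneg hγ.le hL1)
    have h2 : γ * L0 * t ≤ γ * L0 * 1 :=
      mul_le_mul_of_nonneg_left ht1 (mul_nonneg hγ.le hL0)
    nlinarith
  have hcond : L1 * Nm ((x - (γ * t) • s) - x) ≤ 1 := by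
    rw [hstep]
    nlinarith [mul_nonneg (mul_nonneg hγ.le hL0) ht0]
  have hinn : ⟪f' x, (x - (γ * t) • s) - x⟫ = -(γ * t) * D ^ 2 := by
    have : (x - (γ * t) • s) - x = (-(γ * t)) • s := by
      rw [neg_smul]; abel
    rw [this, real_inner_smul_right, hinner]
  have hmain : f (x - (γ * t) • s) ≤ f x - γ * t / 2 * D ^ 2 := by
    have h := hdesc x (x - (γ * t) • s) hcond
    rw [hinn, hstep] at h
    have hkey : (L0 + L1 * D) / 2 * (γ * t * D) ^ 2 ≤ γ * t / 2 * D ^ 2 := by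
      have hB := mul_le_mul_of_nonneg_left hA
        (show (0:ℝ) ≤ γ * t * D ^ 2 / 2 by positivity)
      nlinarith [hB]
    linarith
  refine ⟨hmain, ?_, ?_⟩
  · intro hlt
    have hDpos : 0 < D := hρ.trans hlt
    have htval : t = ρ / D := min_eq_right (by
      rw [div_le_one hDpos]; exact hlt.le)
    have : γ * t / 2 * D ^ 2 = γ * ρ / 2 * D := by
      rw [htval]; field_simp
    linarith [hmain, this.symm.le]
  · intro hle
    rcases eq_or_lt_of_le hDnn with h | h
    · have : D ^ 2 = 0 := by rw [← h]; ring
      rw [this] at hmain ⊢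
      linarith
    · have htval : t = 1 := min_eq_left (by
        rw [le_div_iff₀ h]; linarith)
      have heq : γ * t / 2 * D ^ 2 = γ / 2 * D ^ 2 := by rw [htval]; ring
      linarith
end

section
/- Let f : E → ℝ be (L₀,L₁)-smooth with respect to ‖·‖. For any x ∈ E and γ, ρ > 0 with γρ ≤ 1/L₁, the step x⁺ := x + γρ·lmo(∇f(x)) satisfies f(x⁺) ≤ f(x) + L₀γ²ρ² + (L₁γρ − 1)·γρ·‖∇f(x)‖_*. In particular, if γρ ≤ 1/(2L₁) then (γρ/2)·‖∇f(x)‖_* ≤ f(x) − f(x⁺) + L₀γ²ρ². -/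
open scoped RealInnerProductSpace

/-- One-step estimate for uCG under `(L₀,L₁)`-smoothness: with
`x⁺ = x + γρ·lmo(∇f(x))` and `γρ ≤ 1/L₁`,
`f(x⁺) ≤ f(x) + L₀γ²ρ² + (L₁γρ − 1)γρ‖∇f(x)‖_*`; and if moreover `γρ ≤ 1/(2L₁)`
then `(γρ/2)‖∇f(x)‖_* ≤ f(x) − f(x⁺) + L₀γ²ρ²`. -/
theorem uCG_step_L0L1
    {E : Type*} [NormedAddCommGroup E] [InnerProductSpace ℝ E] [FiniteDimensional ℝ E]
    -- the (possibly non-Euclidean) norm `‖·‖` on `E`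
    (Nm : E → ℝ)
    (hNm0 : Nm 0 = 0)
    (hNmpos : ∀ z : E, z ≠ 0 → 0 < Nm z)
    (hNmsmul : ∀ (a : ℝ) (z : E), Nm (a • z) = |a| * Nm z)
    (hNmadd : ∀ z w : E, Nm (z + w) ≤ Nm z + Nm w)
    -- the dual norm `‖d‖_* = sup {⟨d,x⟩ : ‖x‖ ≤ 1}`
    (Dstar : E → ℝ)
    (hDstar : ∀ d : E, IsLUB ((fun z => ⟪d, z⟫) '' {z : E | Nm z ≤ 1}) (Dstar d))
    -- the lmo: `lmo(d) ∈ argmin {⟨d,x⟩ : ‖x‖ ≤ 1}`, `⟨d, lmo(d)⟩ = −‖d‖_*`, `‖lmo(d)‖ ≤ 1`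
    (lmo : E → E)
    (hlmo : ∀ d : E, Nm (lmo d) ≤ 1 ∧ ∀ z : E, Nm z ≤ 1 → ⟪d, lmo d⟫ ≤ ⟪d, z⟫)
    (hlmo_eq : ∀ d : E, ⟪d, lmo d⟫ = -(Dstar d))
    -- `f` differentiable with gradient `f'`
    (f : E → ℝ) (f' : E → E)
    (hdiff : ∀ z, HasGradientAt f (f' z) z)
    -- `(L₀,L₁)`-smoothness (the condition `‖x−y‖ ≤ 1/L₁` is encoded as `L₁‖x−y‖ ≤ 1`)
    (L0 L1 : ℝ) (hL0 : 0 ≤ L0) (hL1 : 0 ≤ L1)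
    (hsmooth : ∀ z w : E, L1 * Nm (z - w) ≤ 1 →
      Dstar (f' z - f' w) ≤ (L0 + L1 * Dstar (f' z)) * Nm (z - w))
    (hdesc : ∀ z w : E, L1 * Nm (w - z) ≤ 1 →
      f w ≤ f z + ⟪f' z, w - z⟫ + (L0 + L1 * Dstar (f' z)) / 2 * (Nm (w - z)) ^ 2)
    -- stepsize and radius with `γρ ≤ 1/L₁`
    (γ ρ : ℝ) (hγ : 0 < γ) (hρ : 0 < ρ) (hγρ : L1 * (γ * ρ) ≤ 1)
    (x : E) :
    f (x + (γ * ρ) • lmo (f' x))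
        ≤ f x + L0 * γ ^ 2 * ρ ^ 2 + (L1 * γ * ρ - 1) * (γ * ρ) * Dstar (f' x) ∧
    (2 * L1 * (γ * ρ) ≤ 1 →
      γ * ρ / 2 * Dstar (f' x)
        ≤ f x - f (x + (γ * ρ) • lmo (f' x)) + L0 * γ ^ 2 * ρ ^ 2) := by

  set c := γ * ρ with hc
  have hcpos : 0 < c := mul_pos hγ hρ
  set s := lmo (f' x) with hs
  have hNs : Nm s ≤ 1 := (hlmo (f' x)).1
  have hNs0 : 0 ≤ Nm s := by
    rcases eq_or_ne s 0 with h | h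
    · simp [h, hNm0]
    · exact (hNmpos s h).le
  have hD0 : 0 ≤ Dstar (f' x) := by
    have h0 : (0:ℝ) ∈ (fun z => ⟪f' x, z⟫) '' {z : E | Nm z ≤ 1} :=
      ⟨0, by simp [hNm0], by simp⟩
    exact (hDstar (f' x)).1 h0
  have hinner : ⟪f' x, c • s⟫ = c * (-(Dstar (f' x))) := by
    rw [real_inner_smul_right, hlmo_eq]
  have hNw : Nm ((x + c • s) - x) = c * Nm s := by
    rw [add_sub_cancel_left, hNmsmul, abs_of_pos hcpos]
  have hcond : L1 * Nm ((x + c • s) - x) ≤ 1 := by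
    rw [hNw]
    calc L1 * (c * Nm s) ≤ L1 * (c * 1) := by
          apply mul_le_mul_of_nonneg_left _ hL1
          exact mul_le_mul_of_nonneg_left hNs hcpos.le
      _ = L1 * c := by ring
      _ ≤ 1 := hγρ
  have key := hdesc x (x + c • s) hcond
  rw [add_sub_cancel_left] at key
  rw [hinner] at key
  have hsq : (Nm (c • s)) ^ 2 ≤ c ^ 2 := by
    rw [hNmsmul, abs_of_pos hcpos]
    nlinarith [mul_le_mul hNs hNs hNs0 zero_le_one, sq_nonneg c, hcpos.le]
  have hc2 : c ^ 2 = γ ^ 2 * ρ ^ 2 := by rw [hc]; ring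
  have main : f (x + c • s) ≤ f x + L0 * γ ^ 2 * ρ ^ 2 + (L1 * γ * ρ - 1) * c * Dstar (f' x) := by
    have h1 : (L0 + L1 * Dstar (f' x)) / 2 * (Nm (c • s)) ^ 2
        ≤ (L0 + L1 * Dstar (f' x)) / 2 * c ^ 2 := by
      apply mul_le_mul_of_nonneg_left hsq
      positivity
    have main' : f (x + c • s) ≤ f x + L0 * c ^ 2 + (L1 * c - 1) * c * Dstar (f' x) := by
      nlinarith [key, h1, mul_nonneg hL0 (sq_nonneg c),
        mul_nonneg (mul_nonneg hL1 hD0) (sq_nonneg c)]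
    have e1 : f x + L0 * γ ^ 2 * ρ ^ 2 + (L1 * γ * ρ - 1) * c * Dstar (f' x)
        = f x + L0 * c ^ 2 + (L1 * c - 1) * c * Dstar (f' x) := by
      simp only [hc]; ring
    linarith [main', e1.ge]
  refine ⟨main, fun h2 => ?_⟩
  have : (L1 * γ * ρ - 1) * c * Dstar (f' x) ≤ -(c / 2) * Dstar (f' x) := by
    apply mul_le_mul_of_nonneg_right _ hD0
    have : L1 * γ * ρ = L1 * c := by rw [hc]; ring
    nlinarith
  linarith
end

section
/- Let d ∈ E with d ≠ 0. (i) If v ∈ argmax_{x∈E} {⟨d,x⟩ − ½‖x‖²}, then ⟨d,v⟩ = ‖v‖² = ‖d‖_*², and −v/‖d‖_* ∈ argmin_{x : ‖x‖ ≤ 1} ⟨d,x⟩. (ii) Conversely, if u ∈ argmin_{x : ‖x‖ ≤ 1} ⟨d,x⟩, then −‖d‖_*·u ∈ argmax_{x∈E} {⟨d,x⟩ − ½‖x‖²}. -/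
open scoped RealInnerProductSpace

/-- Duality between the sharp operator and the lmo: for `d ≠ 0`,
(i) any maximizer `v` of `x ↦ ⟨d,x⟩ − ½‖x‖²` satisfies `⟨d,v⟩ = ‖v‖² = ‖d‖_*²` and
`−v/‖d‖_*` is a minimizer of `⟨d,·⟩` over the unit ball; (ii) conversely, any
minimizer `u` of `⟨d,·⟩` over the unit ball yields a maximizer `−‖d‖_*·u`. -/
theorem sharp_lmo_duality
    {E : Type*} [NormedAddCommGroup E] [InnerProductSpace ℝ E] [FiniteDimensional ℝ E]
    -- the (possibly non-Euclidean) norm `‖·‖` on `E`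
    (Nm : E → ℝ)
    (hNm0 : Nm 0 = 0)
    (hNmpos : ∀ z : E, z ≠ 0 → 0 < Nm z)
    (hNmsmul : ∀ (a : ℝ) (z : E), Nm (a • z) = |a| * Nm z)
    (hNmadd : ∀ z w : E, Nm (z + w) ≤ Nm z + Nm w)
    -- the dual norm `‖d‖_* = sup {⟨d,x⟩ : ‖x‖ ≤ 1}`
    (Dstar : E → ℝ)
    (hDstar : ∀ d : E, IsLUB ((fun z => ⟪d, z⟫) '' {z : E | Nm z ≤ 1}) (Dstar d))
    (d : E) (hd : d ≠ 0) :
    -- (i)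
    (∀ v : E, (∀ z : E, ⟪d, z⟫ - (Nm z) ^ 2 / 2 ≤ ⟪d, v⟫ - (Nm v) ^ 2 / 2) →
      ⟪d, v⟫ = (Nm v) ^ 2 ∧ (Nm v) ^ 2 = (Dstar d) ^ 2 ∧
      Nm ((-(Dstar d)⁻¹) • v) ≤ 1 ∧
      ∀ z : E, Nm z ≤ 1 → ⟪d, (-(Dstar d)⁻¹) • v⟫ ≤ ⟪d, z⟫) ∧
    -- (ii)
    (∀ u : E, Nm u ≤ 1 → (∀ z : E, Nm z ≤ 1 → ⟪d, u⟫ ≤ ⟪d, z⟫) →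
      ∀ z : E, ⟪d, z⟫ - (Nm z) ^ 2 / 2
        ≤ ⟪d, (-(Dstar d)) • u⟫ - (Nm ((-(Dstar d)) • u)) ^ 2 / 2) := by
  have hNmnn : ∀ z : E, 0 ≤ Nm z := by
    intro z
    by_cases h : z = 0
    · simp [h, hNm0]
    · exact (hNmpos z h).le
  have hNmneg : ∀ z : E, Nm (-z) = Nm z := by
    intro z
    have := hNmsmul (-1) z
    simpa using this
  set D := Dstar d with hD
  have hub : ∀ z : E, Nm z ≤ 1 → ⟪d, z⟫ ≤ D := by
    intro z hz
    exact (hDstar d).1 ⟨z, hz, rfl⟩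
  have hDpos : 0 < D := by
    have hdpos : 0 < Nm d := hNmpos d hd
    have h1 : Nm ((Nm d)⁻¹ • d) ≤ 1 := by
      rw [hNmsmul, abs_of_pos (inv_pos.mpr hdpos), inv_mul_cancel₀ hdpos.ne']
    have h2 : ⟪d, (Nm d)⁻¹ • d⟫ = (Nm d)⁻¹ * ⟪d, d⟫ := real_inner_smul_right _ _ _
    have hdd : (0:ℝ) < ⟪d, d⟫ := by
      rw [real_inner_self_eq_norm_sq]
      exact pow_pos (norm_pos_iff.mpr hd) 2
    have h3 : (0:ℝ) < (Nm d)⁻¹ * ⟪d, d⟫ := mul_pos (inv_pos.mpr hdpos) hdd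
    calc (0:ℝ) < (Nm d)⁻¹ * ⟪d, d⟫ := h3
      _ = ⟪d, (Nm d)⁻¹ • d⟫ := h2.symm
      _ ≤ D := hub _ h1
  have hCS : ∀ z : E, ⟪d, z⟫ ≤ D * Nm z := by
    intro z
    by_cases hz : z = 0
    · simp [hz, hNm0]
    · have ht : 0 < Nm z := hNmpos z hz
      have h1 : Nm ((Nm z)⁻¹ • z) ≤ 1 := by
        rw [hNmsmul, abs_of_pos (inv_pos.mpr ht), inv_mul_cancel₀ ht.ne']
      have h2 := hub _ h1
      rw [real_inner_smul_right] at h2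
      calc ⟪d, z⟫ = Nm z * ((Nm z)⁻¹ * ⟪d, z⟫) := by field_simp
        _ ≤ Nm z * D := mul_le_mul_of_nonneg_left h2 ht.le
        _ = D * Nm z := mul_comm _ _
  have hupper : ∀ z : E, ⟪d, z⟫ - (Nm z) ^ 2 / 2 ≤ D ^ 2 / 2 := by
    intro z
    have h1 := hCS z
    nlinarith [sq_nonneg (Nm z - D)]
  constructor
  · intro v hv
    set M := ⟪d, v⟫ - (Nm v) ^ 2 / 2 with hM
    have hMlow : D ^ 2 / 2 ≤ M := by
      have hub2 : ∀ x ∈ ((fun z => ⟪d, z⟫) '' {z : E | Nm z ≤ 1}), x ≤ (M + D ^ 2 / 2) / D := by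
        rintro x ⟨z, hz, rfl⟩
        have h1 := hv (D • z)
        rw [real_inner_smul_right, hNmsmul, abs_of_pos hDpos] at h1
        have hzn : 0 ≤ Nm z := hNmnn z
        rw [le_div_iff₀ hDpos]
        have hz1 : Nm z ≤ 1 := hz
        have h0 : 0 ≤ (1 - Nm z) * (1 + Nm z) := mul_nonneg (by linarith) (by linarith)
        have hsq : (D * Nm z) ^ 2 ≤ D ^ 2 := by nlinarith [mul_nonneg (sq_nonneg D) h0]
        show ⟪d, z⟫ * D ≤ M + D ^ 2 / 2
        nlinarith
      have h2 := (hDstar d).2 hub2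
      rw [le_div_iff₀ hDpos] at h2
      nlinarith
    have h1 := hCS v
    have hNv : Nm v = D := by nlinarith [sq_nonneg (Nm v - D)]
    have hdv : ⟪d, v⟫ = D ^ 2 := by nlinarith
    have hsm : ⟪d, (-(D)⁻¹) • v⟫ = -D := by
      rw [real_inner_smul_right, hdv]
      field_simp
    refine ⟨by rw [hdv, hNv], by rw [hNv], ?_, ?_⟩
    · rw [hNmsmul, hNv, abs_neg, abs_of_pos (inv_pos.mpr hDpos),
        inv_mul_cancel₀ hDpos.ne']
    · intro z hz
      have h2 := hub (-z) (by rw [hNmneg]; exact hz)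
      rw [inner_neg_right] at h2
      rw [hsm]
      linarith
  · intro u hu hmin z
    have hupb : ∀ x ∈ ((fun z => ⟪d, z⟫) '' {z : E | Nm z ≤ 1}), x ≤ -⟪d, u⟫ := by
      rintro x ⟨w, hw, rfl⟩
      have := hmin (-w) (by rw [hNmneg]; exact hw)
      rw [inner_neg_right] at this
      show ⟪d, w⟫ ≤ -⟪d, u⟫
      linarith
    have hDle : D ≤ -⟪d, u⟫ := (hDstar d).2 hupb
    have hge : -D ≤ ⟪d, u⟫ := by
      have := hub (-u) (by rw [hNmneg]; exact hu)
      rw [inner_neg_right] at this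
      linarith
    have hdu : ⟪d, u⟫ = -D := by linarith
    have hval : ⟪d, (-D) • u⟫ = D ^ 2 := by
      rw [real_inner_smul_right, hdu]; ring
    have hnw : Nm ((-D) • u) ≤ D := by
      rw [hNmsmul, abs_neg, abs_of_pos hDpos]
      nlinarith
    have hnwn : 0 ≤ Nm ((-D) • u) := hNmnn _
    have h3 := hupper z
    rw [hval]
    nlinarith
end

section
/- Suppose f : E → ℝ is (L₀,L₁)-smooth with respect to ‖·‖. Consider the GGNC iterates x^{k+1} = x^k − γη_k v^k with v^k = −lmo(d^k), η_k = min{ρ, ⟨d^k, v^k⟩}, where d^k = α_k·g_k + (1−α_k)·d^{k−1}, d⁰ = 0, g_k is a stochastic gradient at x^k that is conditionally unbiased with conditional variance (in the inner-product norm ‖·‖₂) at most σ², and α_k ∈ (0,1]. Let λ^k := d^k − ∇f(x^k) and ζ_* := sup_{x≠0} ‖x‖₂/‖x‖_*. Then for all k, E[‖λ^k‖₂²] ≤ (1 − α_k/2)·E[‖λ^{k−1}‖₂²] + α_k²σ² + (4γ²ζ_*²ρ²/α_k)·(L₀² + L₁²·E[‖∇f(x^k)‖_*²]). -/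
/-!
Write `λᵏ = αₖ eₖ + (1 - αₖ)(λᵏ⁻¹ + ∇f(xᵏ⁻¹) - ∇f(xᵏ))` with the noise `eₖ = gₖ - ∇f(xᵏ)`.
The second summand is `𝓕ₖ`-measurable and `eₖ` has zero conditional mean, so the cross term
has zero expectation and `E‖λᵏ‖₂² = αₖ² E‖eₖ‖₂² + (1 - αₖ)² E‖λᵏ⁻¹ + ∇f(xᵏ⁻¹) - ∇f(xᵏ)‖₂²`.
The first term is at most `αₖ²σ²`; Young's inequality with weight `αₖ/2` splits the second, and
the gradient drift is controlled by `(L₀,L₁)`-smoothness because a GGNC step has `‖·‖`-length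
at most `γρ ≤ 1/L₁`, together with `‖·‖₂ ≤ ζ_* ‖·‖_*`.
-/

open MeasureTheory
open scoped RealInnerProductSpace

theorem norm_one_sub_smul_add_sq_le {E : Type*} [SeminormedAddCommGroup E] [NormedSpace ℝ E]
    {a : ℝ} (ha0 : 0 < a) (ha1 : a ≤ 1) (u v : E) :
    ‖(1 - a) • (u + v)‖ ^ 2 ≤ (1 - a / 2) * ‖u‖ ^ 2 + 2 / a * ‖v‖ ^ 2 := by
  have hscalar : ∀ b c : ℝ, (1 - a) ^ 2 * (b + c) ^ 2 ≤ (1 - a / 2) * b ^ 2 + 2 / a * c ^ 2 := by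
    intro b c
    have young : a * (b + c) ^ 2 ≤ a * (1 + a / 2) * b ^ 2 + (a + 2) * c ^ 2 := by
      nlinarith [sq_nonneg (a * b - 2 * c)]
    have h1 : (1 - a) ^ 2 * (1 + a / 2) ≤ 1 - a / 2 := by
      nlinarith [mul_le_mul_of_nonneg_left (mul_le_one₀ ha1 ha0.le ha1) ha0.le]
    have h2 : (1 - a) ^ 2 * (a + 2) ≤ 2 := by nlinarith
    rw [div_mul_eq_mul_div, ← sub_le_iff_le_add', le_div_iff₀ ha0]
    nlinarith [mul_le_mul_of_nonneg_left young (sq_nonneg (1 - a)),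
      mul_le_mul_of_nonneg_right h1 (mul_nonneg ha0.le (sq_nonneg b)),
      mul_le_mul_of_nonneg_right h2 (sq_nonneg c)]
  rw [norm_smul, mul_pow, Real.norm_eq_abs, sq_abs]
  calc (1 - a) ^ 2 * ‖u + v‖ ^ 2 ≤ (1 - a) ^ 2 * (‖u‖ + ‖v‖) ^ 2 := by
        gcongr; exact norm_add_le u v
    _ ≤ _ := hscalar _ _

theorem sq_norm_sub_le_of_smooth {E : Type*} [NormedAddCommGroup E] {Nm Dstar : E → ℝ}
    {f' : E → E} {L0 L1 ζ r : ℝ}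
    (hL0 : 0 ≤ L0) (hL1 : 0 ≤ L1) (hD : ∀ u, 0 ≤ Dstar u)
    (hsmooth : ∀ z w : E, L1 * Nm (z - w) ≤ 1 →
      Dstar (f' z - f' w) ≤ (L0 + L1 * Dstar (f' z)) * Nm (z - w))
    (hζ : ∀ z : E, ‖z‖ ≤ ζ * Dstar z) {z w : E} (hzw : Nm (z - w) ≤ r) (hr : L1 * r ≤ 1) :
    ‖f' w - f' z‖ ^ 2 ≤ 2 * ζ ^ 2 * r ^ 2 * (L0 ^ 2 + L1 ^ 2 * Dstar (f' z) ^ 2) := by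
  set A := L0 + L1 * Dstar (f' z)
  have hA : 0 ≤ A := add_nonneg hL0 (mul_nonneg hL1 (hD _))
  have hDzw : Dstar (f' z - f' w) ≤ A * r :=
    (hsmooth z w ((mul_le_mul_of_nonneg_left hzw hL1).trans hr)).trans
      (mul_le_mul_of_nonneg_left hzw hA)
  have hnorm : ‖f' w - f' z‖ ≤ |ζ| * (A * r) := by
    rw [norm_sub_rev]
    exact (hζ _).trans ((mul_le_mul_of_nonneg_right (le_abs_self ζ) (hD _)).trans
      (mul_le_mul_of_nonneg_left hDzw (abs_nonneg ζ)))
  calc ‖f' w - f' z‖ ^ 2 ≤ (|ζ| * (A * r)) ^ 2 := pow_le_pow_left₀ (norm_nonneg _) hnorm 2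
    _ = ζ ^ 2 * r ^ 2 * A ^ 2 := by rw [mul_pow, mul_pow, sq_abs]; ring
    _ ≤ ζ ^ 2 * r ^ 2 * (2 * (L0 ^ 2 + L1 ^ 2 * Dstar (f' z) ^ 2)) := by
        gcongr; nlinarith [sq_nonneg (L0 - L1 * Dstar (f' z))]
    _ = _ := by ring

section DualNorm

variable {E : Type*} [NormedAddCommGroup E] [InnerProductSpace ℝ E] {Nm : E → ℝ}

theorem nonneg_of_isLUB_inner_image {d : E} {s : ℝ} (h0 : Nm 0 ≤ 1)
    (hs : IsLUB ((fun z => ⟪d, z⟫) '' {z : E | Nm z ≤ 1}) s) : 0 ≤ s :=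
  hs.1 ⟨0, h0, inner_zero_right d⟩

theorem inner_neg_nonneg_of_forall_inner_le {d v : E} (h0 : Nm 0 ≤ 1)
    (hv : ∀ z : E, Nm z ≤ 1 → ⟪d, v⟫ ≤ ⟪d, z⟫) : 0 ≤ ⟪d, -v⟫ := by
  simpa [inner_neg_right] using hv 0 h0

theorem ggnc_step_length_le (hsmul : ∀ (a : ℝ) (z : E), Nm (a • z) = |a| * Nm z)
    {d v : E} (h0 : Nm 0 ≤ 1) (hv : Nm v ≤ 1 ∧ ∀ z : E, Nm z ≤ 1 → ⟪d, v⟫ ≤ ⟪d, z⟫)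
    {γ ρ : ℝ} (hγ : 0 ≤ γ) (hρ : 0 ≤ ρ) (y : E) :
    Nm (y - (γ * min ρ ⟪d, -v⟫) • (-v) - y) ≤ γ * ρ := by
  have hη : 0 ≤ γ * min ρ ⟪d, -v⟫ :=
    mul_nonneg hγ (le_min hρ (inner_neg_nonneg_of_forall_inner_le h0 hv.2))
  rw [smul_neg, sub_neg_eq_add, add_sub_cancel_left, hsmul, abs_of_nonneg hη]
  calc γ * min ρ ⟪d, -v⟫ * Nm v ≤ γ * min ρ ⟪d, -v⟫ * 1 := by gcongr; exact hv.1
    _ ≤ γ * ρ := by rw [mul_one]; gcongr; exact min_le_left _ _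

end DualNorm

theorem measurable_of_hasGradientAt {E : Type*} [NormedAddCommGroup E] [InnerProductSpace ℝ E]
    [CompleteSpace E] [MeasurableSpace E] [BorelSpace E] {f : E → ℝ} {f' : E → E}
    (hf : ∀ z, HasGradientAt f (f' z) z) : Measurable f' := by
  rw [show f' = gradient f from funext fun z => (hf z).gradient.symm]
  borelize (E →L[ℝ] ℝ)
  exact (InnerProductSpace.toDual ℝ E).symm.continuous.measurable.comp (measurable_fderiv ℝ f)

section Lp

variable {Ω E : Type*} {mΩ : MeasurableSpace Ω} {μ : Measure Ω} [NormedAddCommGroup E]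

theorem memLp_two_of_sq_norm_le {f : Ω → E} {B : Ω → ℝ} (hf : AEStronglyMeasurable f μ)
    (hB : Integrable B μ) (hfB : ∀ ω, ‖f ω‖ ^ 2 ≤ B ω) : MemLp f 2 μ :=
  (memLp_two_iff_integrable_sq_norm hf).2 <| hB.mono' (hf.norm.pow 2) <|
    ae_of_all _ fun ω => by rw [Real.norm_eq_abs, abs_of_nonneg (sq_nonneg _)]; exact hfB ω

theorem MemLp.of_smul_add [NormedSpace ℝ E] {p : ENNReal} {a : ℝ} (ha : a ≠ 0) {e c : Ω → E}
    (h : MemLp (fun ω => a • e ω + c ω) p μ) (hc : MemLp c p μ) : MemLp e p μ := by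
  convert (h.sub hc).const_smul a⁻¹ using 1
  funext ω
  simp [ha]

end Lp

section ConditionalExpectation

variable {Ω E : Type*} {m mΩ : MeasurableSpace Ω} {μ : Measure Ω}
  [NormedAddCommGroup E] [InnerProductSpace ℝ E] [CompleteSpace E]

theorem integral_inner_eq_zero_of_condExp_eq_zero (hm : m ≤ mΩ) [SigmaFinite (μ.trim hm)]
    {c e : Ω → E} (hc : StronglyMeasurable[m] c) (hce : Integrable (fun ω => ⟪c ω, e ω⟫) μ)
    (he : Integrable e μ) (he0 : μ[e|m] =ᵐ[μ] 0) : ∫ ω, ⟪c ω, e ω⟫ ∂μ = 0 := by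
  have hpull : μ[fun ω => ⟪c ω, e ω⟫|m] =ᵐ[μ] fun ω => ⟪c ω, (μ[e|m]) ω⟫ :=
    condExp_bilin_of_stronglyMeasurable_left (innerSL ℝ) hc hce he
  rw [← integral_condExp hm, integral_congr_ae hpull]
  refine integral_eq_zero_of_ae ?_
  filter_upwards [he0] with ω hω
  simp [hω]

theorem condExp_sub_eq_zero_of_condExp_eq (hm : m ≤ mΩ) [SigmaFinite (μ.trim hm)]
    {g h : Ω → E} (hh : StronglyMeasurable[m] h) (hgh : Integrable (g - h) μ)
    (hg : μ[g|m] =ᵐ[μ] h) : μ[g - h|m] =ᵐ[μ] 0 := by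
  have hhi : Integrable h μ := integrable_condExp.congr hg
  have hgi : Integrable g μ := by simpa using hgh.add hhi
  filter_upwards [condExp_sub hgi hhi m, hg] with ω hω hgω
  simp [hω, hgω, condExp_of_stronglyMeasurable hm hh hhi]

theorem integral_le_of_ae_condExp_le [IsProbabilityMeasure μ] (hm : m ≤ mΩ) {f : Ω → ℝ}
    {C : ℝ} (hf : ∀ᵐ ω ∂μ, (μ[f|m]) ω ≤ C) : ∫ ω, f ω ∂μ ≤ C := by
  rw [← integral_condExp hm]
  simpa using integral_mono_ae integrable_condExp (integrable_const C) hf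

theorem integral_norm_smul_add_sq [IsFiniteMeasure μ] (hm : m ≤ mΩ) (a : ℝ) {e c : Ω → E}
    (he : MemLp e 2 μ) (hc : MemLp c 2 μ) (hcm : StronglyMeasurable[m] c)
    (he0 : μ[e|m] =ᵐ[μ] 0) :
    ∫ ω, ‖a • e ω + c ω‖ ^ 2 ∂μ = a ^ 2 * ∫ ω, ‖e ω‖ ^ 2 ∂μ + ∫ ω, ‖c ω‖ ^ 2 ∂μ := by
  have hce : Integrable (fun ω => ⟪c ω, e ω⟫) μ :=
    memLp_one_iff_integrable.1 ((innerSL ℝ).memLp_of_bilin 1 hc he)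
  have hcross := integral_inner_eq_zero_of_condExp_eq_zero hm hcm hce (he.integrable one_le_two) he0
  have he2 := (he.integrable_norm_pow two_ne_zero).const_mul (a ^ 2)
  have hce2 : Integrable (fun ω => 2 * a * ⟪c ω, e ω⟫) μ := hce.const_mul _
  have hexpand : ∀ ω,
      ‖a • e ω + c ω‖ ^ 2 = a ^ 2 * ‖e ω‖ ^ 2 + 2 * a * ⟪c ω, e ω⟫ + ‖c ω‖ ^ 2 := by
    intro ω
    rw [norm_add_sq_real, norm_smul, mul_pow, Real.norm_eq_abs, sq_abs, real_inner_smul_left,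
      real_inner_comm]
    ring
  simp_rw [hexpand]
  rw [integral_add (f := fun ω => a ^ 2 * ‖e ω‖ ^ 2 + 2 * a * ⟪c ω, e ω⟫) (he2.add hce2)
      (hc.integrable_norm_pow two_ne_zero), integral_add he2 hce2,
    integral_const_mul, integral_const_mul, hcross]
  ring

theorem integral_norm_smul_add_one_sub_smul_sq_le [IsFiniteMeasure μ] (hm : m ≤ mΩ) {a : ℝ}
    (ha0 : 0 < a) (ha1 : a ≤ 1) {e u v : Ω → E} {B : Ω → ℝ} (he : MemLp e 2 μ)
    (he0 : μ[e|m] =ᵐ[μ] 0) (hu : MemLp u 2 μ) (hv : MemLp v 2 μ) (hum : StronglyMeasurable[m] u)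
    (hvm : StronglyMeasurable[m] v) (hB : Integrable B μ) (hvB : ∀ ω, ‖v ω‖ ^ 2 ≤ B ω) :
    ∫ ω, ‖a • e ω + (1 - a) • (u ω + v ω)‖ ^ 2 ∂μ
      ≤ a ^ 2 * ∫ ω, ‖e ω‖ ^ 2 ∂μ + ((1 - a / 2) * ∫ ω, ‖u ω‖ ^ 2 ∂μ + 2 / a * ∫ ω, B ω ∂μ) := by
  have hc : MemLp (fun ω => (1 - a) • (u ω + v ω)) 2 μ := (hu.add hv).const_smul _
  rw [integral_norm_smul_add_sq hm a he hc ((hum.add hvm).const_smul _) he0]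
  gcongr
  have hu2 := (hu.integrable_norm_pow two_ne_zero).const_mul (1 - a / 2)
  calc ∫ ω, ‖(1 - a) • (u ω + v ω)‖ ^ 2 ∂μ
      ≤ ∫ ω, ((1 - a / 2) * ‖u ω‖ ^ 2 + 2 / a * B ω) ∂μ :=
        integral_mono (hc.integrable_norm_pow two_ne_zero) (hu2.add (hB.const_mul _)) fun ω =>
          (norm_one_sub_smul_add_sq_le ha0 ha1 _ _).trans (by gcongr; exact hvB ω)
    _ = _ := by rw [integral_add hu2 (hB.const_mul _), integral_const_mul, integral_const_mul]

theorem integral_norm_sq_momentum_error_le [IsProbabilityMeasure μ] (hm : m ≤ mΩ) {a σ : ℝ}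
    (ha0 : 0 < a) (ha1 : a ≤ 1) {g d d' G G' : Ω → E} {B : Ω → ℝ}
    (hd' : ∀ ω, d' ω = a • g ω + (1 - a) • d ω) (hdm : StronglyMeasurable[m] d)
    (hGm : StronglyMeasurable[m] G) (hG'm : StronglyMeasurable[m] G')
    (hg : μ[g|m] =ᵐ[μ] G) (hgvar : ∀ᵐ ω ∂μ, (μ[fun ω => ‖g ω - G ω‖ ^ 2|m]) ω ≤ σ ^ 2)
    (herr' : MemLp (fun ω => d' ω - G ω) 2 μ) (herr : MemLp (fun ω => d ω - G' ω) 2 μ)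
    (hB : Integrable B μ) (hGB : ∀ ω, ‖G' ω - G ω‖ ^ 2 ≤ B ω) :
    ∫ ω, ‖d' ω - G ω‖ ^ 2 ∂μ
      ≤ (1 - a / 2) * ∫ ω, ‖d ω - G' ω‖ ^ 2 ∂μ + a ^ 2 * σ ^ 2 + 2 / a * ∫ ω, B ω ∂μ := by
  set e : Ω → E := g - G
  have hsplit : ∀ ω, d' ω - G ω = a • e ω + (1 - a) • ((d ω - G' ω) + (G' ω - G ω)) := by
    intro ω
    rw [hd']
    simp only [e, Pi.sub_apply, smul_sub, sub_smul, one_smul, smul_add]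
    abel
  have hv : MemLp (fun ω => G' ω - G ω) 2 μ :=
    memLp_two_of_sq_norm_le ((hG'm.sub hGm).mono hm).aestronglyMeasurable hB hGB
  have he : MemLp e 2 μ :=
    MemLp.of_smul_add (c := fun ω => (1 - a) • ((d ω - G' ω) + (G' ω - G ω))) ha0.ne'
      (by simpa only [hsplit] using herr') ((herr.add hv).const_smul (1 - a))
  have he0 := condExp_sub_eq_zero_of_condExp_eq hm hGm (he.integrable one_le_two) hg
  have hvar : ∫ ω, ‖e ω‖ ^ 2 ∂μ ≤ σ ^ 2 := integral_le_of_ae_condExp_le hm hgvar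
  calc ∫ ω, ‖d' ω - G ω‖ ^ 2 ∂μ
      = ∫ ω, ‖a • e ω + (1 - a) • ((d ω - G' ω) + (G' ω - G ω))‖ ^ 2 ∂μ := by simp_rw [hsplit]
    _ ≤ a ^ 2 * ∫ ω, ‖e ω‖ ^ 2 ∂μ
        + ((1 - a / 2) * ∫ ω, ‖d ω - G' ω‖ ^ 2 ∂μ + 2 / a * ∫ ω, B ω ∂μ) :=
      integral_norm_smul_add_one_sub_smul_sq_le hm ha0 ha1 he he0 herr hv (hdm.sub hG'm)
        (hG'm.sub hGm) hB hGB
    _ ≤ _ := by linarith [mul_le_mul_of_nonneg_left hvar (sq_nonneg a)]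

end ConditionalExpectation

theorem GGNC_error_recursion_general
    {E : Type*} [NormedAddCommGroup E] [InnerProductSpace ℝ E] [FiniteDimensional ℝ E]
    {Ω : Type*} {mΩ : MeasurableSpace Ω} (μ : Measure Ω) [IsProbabilityMeasure μ]
    (ℱ : Filtration ℕ mΩ)
    -- the (possibly non-Euclidean) norm `‖·‖` on `E` (`‖·‖₂` is the inner-product norm)
    (Nm : E → ℝ)
    (hNm0 : Nm 0 = 0)
    (hNmsmul : ∀ (a : ℝ) (z : E), Nm (a • z) = |a| * Nm z)
    -- the dual norm `‖d‖_* = sup {⟨d,x⟩ : ‖x‖ ≤ 1}`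
    (Dstar : E → ℝ)
    (hDstar : ∀ d : E, IsLUB ((fun z => ⟪d, z⟫) '' {z : E | Nm z ≤ 1}) (Dstar d))
    -- the linear minimization oracle `lmo(d) ∈ argmin {⟨d,x⟩ : ‖x‖ ≤ 1}`
    (lmo : E → E)
    (hlmo : ∀ d : E, Nm (lmo d) ≤ 1 ∧ ∀ z : E, Nm z ≤ 1 → ⟪d, lmo d⟫ ≤ ⟪d, z⟫)
    -- `f` differentiable with gradient `f'`
    (f : E → ℝ) (f' : E → E)
    (hdiff : ∀ z, HasGradientAt f (f' z) z)
    -- `(L₀,L₁)`-smoothness (the condition `‖x−y‖ ≤ 1/L₁` is encoded as `L₁‖x−y‖ ≤ 1`)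
    (L0 L1 : ℝ) (hL0 : 0 ≤ L0) (hL1 : 0 ≤ L1)
    (hsmooth : ∀ z w : E, L1 * Nm (z - w) ≤ 1 →
      Dstar (f' z - f' w) ≤ (L0 + L1 * Dstar (f' z)) * Nm (z - w))
    -- parameters; the step satisfies `γη_k ≤ γρ ≤ 1/L₁`
    (γ ρ σ : ℝ) (hγ : 0 < γ) (hρ : 0 < ρ) (hγρ : L1 * (γ * ρ) ≤ 1)
    (α : ℕ → ℝ) (hα : ∀ k, 1 ≤ k → 0 < α k ∧ α k ≤ 1)
    -- the iterates, momentum estimator and stochastic gradients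
    (x d g : ℕ → Ω → E)
    (hd : ∀ k, 1 ≤ k → ∀ ω, d k ω = α k • g k ω + (1 - α k) • d (k - 1) ω)
    (hx : ∀ (k : ℕ) (ω : Ω), x (k + 1) ω =
      x k ω - (γ * min ρ ⟪d k ω, -lmo (d k ω)⟫) • (-lmo (d k ω)))
    -- the filtration is generated by the iterates
    (hx_adapted : ∀ k, StronglyMeasurable[ℱ k] (x k))
    (hd_adapted : ∀ k, StronglyMeasurable[ℱ (k + 1)] (d k))
    -- the stochastic gradient is conditionally unbiased with variance at most `σ²`
    (hg_unbiased : ∀ k, 1 ≤ k → μ[g k | ℱ k] =ᵐ[μ] fun ω => f' (x k ω))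
    (hg_var : ∀ k, 1 ≤ k →
      ∀ᵐ ω ∂μ, (μ[fun ω' => ‖g k ω' - f' (x k ω')‖ ^ 2 | ℱ k]) ω ≤ σ ^ 2)
    -- integrability of the quantities appearing in the statement
    (herrint : ∀ k, Integrable (fun ω => ‖d k ω - f' (x k ω)‖ ^ 2) μ)
    (hgradint : ∀ k, Integrable (fun ω => (Dstar (f' (x k ω))) ^ 2) μ)
    -- the norm-equivalence constant `ζ_* = sup ‖·‖₂/‖·‖_*`
    (ζs : ℝ) (hζs : ∀ z : E, ‖z‖ ≤ ζs * Dstar z) :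
    ∀ k, 1 ≤ k →
      ∫ ω, ‖d k ω - f' (x k ω)‖ ^ 2 ∂μ
        ≤ (1 - α k / 2) * ∫ ω, ‖d (k - 1) ω - f' (x (k - 1) ω)‖ ^ 2 ∂μ
          + (α k) ^ 2 * σ ^ 2
          + 4 * γ ^ 2 * ζs ^ 2 * ρ ^ 2 / α k *
              (L0 ^ 2 + L1 ^ 2 * ∫ ω, (Dstar (f' (x k ω))) ^ 2 ∂μ) := by
  intro k hk
  obtain ⟨n, rfl⟩ := Nat.exists_eq_add_of_le' hk
  rw [Nat.add_sub_cancel]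
  obtain ⟨ha0, ha1⟩ := hα (n + 1) hk
  borelize E
  have hNm0' : Nm 0 ≤ 1 := hNm0 ▸ zero_le_one
  have hgradx : ∀ j, StronglyMeasurable[ℱ j] fun ω => f' (x j ω) := fun j =>
    ((measurable_of_hasGradientAt hdiff).comp (hx_adapted j).measurable).stronglyMeasurable
  have herr : ∀ j, MemLp (fun ω => d j ω - f' (x j ω)) 2 μ := fun j =>
    (memLp_two_iff_integrable_sq_norm (((hd_adapted j).mono (ℱ.le _)).aestronglyMeasurable.sub
      ((hgradx j).mono (ℱ.le _)).aestronglyMeasurable)).2 (herrint j)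
  have hdrift : ∀ ω, ‖f' (x n ω) - f' (x (n + 1) ω)‖ ^ 2
      ≤ 2 * ζs ^ 2 * (γ * ρ) ^ 2 * (L0 ^ 2 + L1 ^ 2 * Dstar (f' (x (n + 1) ω)) ^ 2) := fun ω =>
    sq_norm_sub_le_of_smooth hL0 hL1 (fun u => nonneg_of_isLUB_inner_image hNm0' (hDstar u))
      hsmooth hζs (by rw [hx]; exact ggnc_step_length_le hNmsmul hNm0' (hlmo _) hγ.le hρ.le _) hγρ
  have hB : Integrable (fun ω =>
      2 * ζs ^ 2 * (γ * ρ) ^ 2 * (L0 ^ 2 + L1 ^ 2 * Dstar (f' (x (n + 1) ω)) ^ 2)) μ :=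
    ((integrable_const _).add ((hgradint _).const_mul _)).const_mul _
  have key := integral_norm_sq_momentum_error_le (ℱ.le (n + 1)) ha0 ha1
    (fun ω => by simpa using hd (n + 1) hk ω) (hd_adapted n) (hgradx _)
    ((hgradx n).mono (ℱ.mono n.le_succ)) (hg_unbiased _ hk) (hg_var _ hk) (herr _) (herr n)
    hB hdrift
  rw [integral_const_mul, integral_add (integrable_const _) ((hgradint _).const_mul _),
    integral_const, integral_const_mul, probReal_univ, one_smul] at key
  convert key using 2
  ring

/-- Recursive control of the momentum estimator error for GGNC under
`(L₀,L₁)`-smoothness: with `λ^k = d^k − ∇f(x^k)` and `ζ_*` the norm-equivalence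
constant `‖·‖₂ ≤ ζ_*‖·‖_*`,
`E‖λ^k‖₂² ≤ (1 − α_k/2)E‖λ^{k−1}‖₂² + α_k²σ² + (4γ²ζ_*²ρ²/α_k)(L₀² + L₁²E‖∇f(x^k)‖_*²)`. -/
theorem GGNC_error_recursion
    {E : Type*} [NormedAddCommGroup E] [InnerProductSpace ℝ E] [FiniteDimensional ℝ E]
    {Ω : Type*} {mΩ : MeasurableSpace Ω} (μ : Measure Ω) [IsProbabilityMeasure μ]
    (ℱ : Filtration ℕ mΩ)
    -- the (possibly non-Euclidean) norm `‖·‖` on `E` (`‖·‖₂` is the inner-product norm)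
    (Nm : E → ℝ)
    (hNm0 : Nm 0 = 0)
    (hNmpos : ∀ z : E, z ≠ 0 → 0 < Nm z)
    (hNmsmul : ∀ (a : ℝ) (z : E), Nm (a • z) = |a| * Nm z)
    (hNmadd : ∀ z w : E, Nm (z + w) ≤ Nm z + Nm w)
    -- the dual norm `‖d‖_* = sup {⟨d,x⟩ : ‖x‖ ≤ 1}`
    (Dstar : E → ℝ)
    (hDstar : ∀ d : E, IsLUB ((fun z => ⟪d, z⟫) '' {z : E | Nm z ≤ 1}) (Dstar d))
    -- the linear minimization oracle `lmo(d) ∈ argmin {⟨d,x⟩ : ‖x‖ ≤ 1}`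
    (lmo : E → E)
    (hlmo : ∀ d : E, Nm (lmo d) ≤ 1 ∧ ∀ z : E, Nm z ≤ 1 → ⟪d, lmo d⟫ ≤ ⟪d, z⟫)
    -- `f` differentiable with gradient `f'`
    (f : E → ℝ) (f' : E → E)
    (hdiff : ∀ z, HasGradientAt f (f' z) z)
    -- `(L₀,L₁)`-smoothness (the condition `‖x−y‖ ≤ 1/L₁` is encoded as `L₁‖x−y‖ ≤ 1`)
    (L0 L1 : ℝ) (hL0 : 0 ≤ L0) (hL1 : 0 ≤ L1)
    (hsmooth : ∀ z w : E, L1 * Nm (z - w) ≤ 1 →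
      Dstar (f' z - f' w) ≤ (L0 + L1 * Dstar (f' z)) * Nm (z - w))
    -- parameters; the step satisfies `γη_k ≤ γρ ≤ 1/L₁`
    (γ ρ σ : ℝ) (hγ : 0 < γ) (hρ : 0 < ρ) (hσ : 0 ≤ σ) (hγρ : L1 * (γ * ρ) ≤ 1)
    (α : ℕ → ℝ) (hα : ∀ k, 1 ≤ k → 0 < α k ∧ α k ≤ 1)
    -- the iterates, momentum estimator and stochastic gradients
    (x d g : ℕ → Ω → E)
    (hd0 : ∀ ω, d 0 ω = 0)
    (hd : ∀ k, 1 ≤ k → ∀ ω, d k ω = α k • g k ω + (1 - α k) • d (k - 1) ω)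
    (hx : ∀ (k : ℕ) (ω : Ω), x (k + 1) ω =
      x k ω - (γ * min ρ ⟪d k ω, -lmo (d k ω)⟫) • (-lmo (d k ω)))
    -- the filtration is generated by the iterates
    (hx_adapted : ∀ k, StronglyMeasurable[ℱ k] (x k))
    (hd_adapted : ∀ k, StronglyMeasurable[ℱ (k + 1)] (d k))
    -- the stochastic gradient is conditionally unbiased with variance at most `σ²`
    (hg_unbiased : ∀ k, 1 ≤ k → μ[g k | ℱ k] =ᵐ[μ] fun ω => f' (x k ω))
    (hg_var : ∀ k, 1 ≤ k →
      ∀ᵐ ω ∂μ, (μ[fun ω' => ‖g k ω' - f' (x k ω')‖ ^ 2 | ℱ k]) ω ≤ σ ^ 2)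
    -- integrability of the quantities appearing in the statement
    (herrint : ∀ k, Integrable (fun ω => ‖d k ω - f' (x k ω)‖ ^ 2) μ)
    (hgradint : ∀ k, Integrable (fun ω => (Dstar (f' (x k ω))) ^ 2) μ)
    -- the norm-equivalence constant `ζ_* = sup ‖·‖₂/‖·‖_*`
    (ζs : ℝ) (hζs : ∀ z : E, ‖z‖ ≤ ζs * Dstar z) :
    ∀ k, 1 ≤ k →
      ∫ ω, ‖d k ω - f' (x k ω)‖ ^ 2 ∂μ
        ≤ (1 - α k / 2) * ∫ ω, ‖d (k - 1) ω - f' (x (k - 1) ω)‖ ^ 2 ∂μ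
          + (α k) ^ 2 * σ ^ 2
          + 4 * γ ^ 2 * ζs ^ 2 * ρ ^ 2 / α k *
              (L0 ^ 2 + L1 ^ 2 * ∫ ω, (Dstar (f' (x k ω))) ^ 2 ∂μ) :=
  GGNC_error_recursion_general μ ℱ Nm hNm0 hNmsmul Dstar hDstar lmo hlmo f f' hdiff L0 L1 hL0 hL1
    hsmooth γ ρ σ hγ hρ hγρ α hα x d g hd hx hx_adapted hd_adapted hg_unbiased hg_var herrint
    hgradint ζs hζs
end

section
/- Suppose f : E → ℝ is (L₀,L₁)-smooth with respect to ‖·‖ with f* := inf f > −∞ and Δ := f(x¹) − f*. Consider the GGNC iterates x^{k+1} = x^k − γη_k v^k with v^k = −lmo(d^k), η_k = min{ρ, ⟨d^k, v^k⟩}, constant stepsize γ ≤ 1/L₀ and γρ ≤ 1/(2L₁), where d^k = α_k·g_k + (1−α_k)·d^{k−1}, d⁰ = 0, and g_k is a conditionally unbiased stochastic gradient at x^k with conditional variance (in ‖·‖₂) at most σ². Let λ^k := d^k − ∇f(x^k), ζ := sup_{x≠0} ‖x‖_*/‖x‖₂, and ε_n := (1/n)·Σ_{k=1}^n [ (7/4)ρζ·√(E[‖λ^k‖₂²])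 + (ζ/4)·E[‖λ^k‖₂²] ]. Then (1/n)·Σ_{k=1}^n E[‖∇f(x^k)‖_*] ≤ 4√Δ/√(γn) + 8Δ/(γρn) + 4√(ε_n) + 8ε_n/ρ. -/
/-!
A step of length `γη`, `η = min ρ ‖d‖_*`, along `-lmo d` moves by at most `γρ ≤ 1/(2L₁)` in `‖·‖`,
so the `(L₀,L₁)` descent inequality applies; since `‖∇f‖_* ≤ ‖d‖_* + ‖λ‖_*` it yields the
pathwise decrease `f(x^{k+1}) + (γ/4)·min(ρ,‖∇f(x^k)‖_*)·‖∇f(x^k)‖_* ≤ f(x^k) + 2γρζ‖λ^k‖₂`.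
Taking expectations and telescoping bounds `T := Σ_k E[min(ρ,‖∇f(x^k)‖_*)·‖∇f(x^k)‖_*]` by
`4Δ/γ + 8ρζ Σ_k √E‖λ^k‖₂²`. Finally `t ≤ √(min(ρ,t)·t) + min(ρ,t)·t/ρ`, Jensen for `√` and
Cauchy–Schwarz over `k` give `Σ_k E‖∇f(x^k)‖_* ≤ √(nT) + T/ρ`.
-/

open MeasureTheory
open scoped RealInnerProductSpace

def IsDualNorm {E : Type*} [NormedAddCommGroup E] [InnerProductSpace ℝ E]
    (p : Seminorm ℝ E) (D : E → ℝ) : Prop :=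
  ∀ d : E, IsLUB ((fun z => ⟪d, z⟫) '' {z : E | p z ≤ 1}) (D d)

theorem min_mul_self_le_of_le_add {ρ a b c : ℝ} (hρ : 0 ≤ ρ) (ha : 0 ≤ a) (hb : 0 ≤ b)
    (hc : 0 ≤ c) (hbac : b ≤ a + c) : min ρ b * b ≤ min ρ a * a + 3 * (ρ * c) := by
  rcases le_total ρ b with h1 | h1 <;> rcases le_total ρ a with h2 | h2
  · rw [min_eq_left h1, min_eq_left h2]; nlinarith
  · rw [min_eq_left h1, min_eq_right h2]
    nlinarith [mul_nonneg (by linarith : (0:ℝ) ≤ a + c - ρ) ha,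
      mul_nonneg (sub_nonneg.2 h2) hc]
  · rw [min_eq_right h1, min_eq_left h2]; nlinarith
  · rw [min_eq_right h1, min_eq_right h2]
    rcases le_total c ρ with h3 | h3
    · nlinarith [mul_self_le_mul_self hb hbac, mul_nonneg (sub_nonneg.2 h2) hc]
    · nlinarith [mul_self_le_mul_self hb h1]

theorem le_sqrt_min_mul_self_add_div {ρ t : ℝ} (hρ : 0 < ρ) (ht : 0 ≤ t) :
    t ≤ √(min ρ t * t) + min ρ t * t / ρ := by
  rcases le_total t ρ with h | h
  · rw [min_eq_right h, Real.sqrt_mul_self ht]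
    have : 0 ≤ t * t / ρ := by positivity
    linarith
  · rw [min_eq_left h, mul_div_cancel_left₀ t hρ.ne']
    linarith [Real.sqrt_nonneg (ρ * t)]

/-- Here `a = ‖d‖_*`, `b = ‖∇f‖_*`, and `c` bounds the dual norm of the error `d - ∇f`. -/
theorem lmo_step_scalar_bound {γ ρ L0 L1 a b c : ℝ} (hγ : 0 ≤ γ) (hρ : 0 ≤ ρ) (hL1 : 0 ≤ L1)
    (hγL0 : γ * L0 ≤ 1) (hγρ : 2 * L1 * (γ * ρ) ≤ 1) (ha : 0 ≤ a) (hb : 0 ≤ b) (hc : 0 ≤ c)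
    (hbac : b ≤ a + c) :
    -(γ * min ρ a * (a - c)) + (L0 + L1 * b) / 2 * (γ * min ρ a) ^ 2
      ≤ -(γ / 4 * (min ρ b * b)) + 2 * γ * ρ * c := by
  set η := min ρ a with hη
  have hη0 : 0 ≤ η := le_min hρ ha
  have hηρ : η ≤ ρ := min_le_left _ _
  have hηa : η ≤ a := min_le_right _ _
  have hs : 0 ≤ γ * η := mul_nonneg hγ hη0
  have hL0' : L0 * (γ * η) ^ 2 ≤ γ * η * η := by
    nlinarith [mul_le_mul_of_nonneg_right hγL0 (mul_nonneg hγ (mul_nonneg hη0 hη0))]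
  have hL1' : L1 * b * (γ * η) ^ 2 ≤ γ * η * b / 2 := by
    have : 2 * L1 * (γ * η) ≤ 1 := by
      nlinarith [mul_le_mul_of_nonneg_left hηρ (by positivity : (0:ℝ) ≤ 2 * L1 * γ)]
    nlinarith [mul_le_mul_of_nonneg_right this (mul_nonneg hs hb)]
  have hkey : min ρ b * b ≤ η * a + 3 * (ρ * c) := min_mul_self_le_of_le_add hρ ha hb hc hbac
  nlinarith [mul_le_mul_of_nonneg_left hηa hs, mul_le_mul_of_nonneg_left hbac hs,
    mul_le_mul_of_nonneg_left hkey (by positivity : (0:ℝ) ≤ γ / 4),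
    mul_nonneg (mul_nonneg hγ (sub_nonneg.2 hηρ)) hc]

namespace IsDualNorm

variable {E : Type*} [NormedAddCommGroup E] [InnerProductSpace ℝ E]
  {p : Seminorm ℝ E} {D : E → ℝ}

theorem inner_le (hD : IsDualNorm p D) (d : E) {z : E} (hz : p z ≤ 1) : ⟪d, z⟫ ≤ D d :=
  (hD d).1 ⟨z, hz, rfl⟩

theorem nonneg (hD : IsDualNorm p D) (d : E) : 0 ≤ D d := by
  simpa using hD.inner_le d (z := 0) (by simp)

theorem add_le (hD : IsDualNorm p D) (u v : E) : D (u + v) ≤ D u + D v :=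
  (hD (u + v)).2 <| by
    rintro _ ⟨z, hz, rfl⟩
    show ⟪u + v, z⟫ ≤ _
    rw [inner_add_left]
    exact add_le_add (hD.inner_le u hz) (hD.inner_le v hz)

theorem nonneg_of_le_mul_norm [Nontrivial E] (hD : IsDualNorm p D) {ζ : ℝ}
    (hζ : ∀ z : E, D z ≤ ζ * ‖z‖) : 0 ≤ ζ := by
  obtain ⟨z, hz⟩ := exists_ne (0 : E)
  exact nonneg_of_mul_nonneg_left ((hD.nonneg z).trans (hζ z)) (norm_pos_iff.2 hz)

theorem lmo_step_descent (hD : IsDualNorm p D) {f : E → ℝ} {f' : E → E} {L0 L1 γ ρ : ℝ}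
    (hL0 : 0 ≤ L0) (hL1 : 0 ≤ L1) (hγ : 0 ≤ γ) (hρ : 0 ≤ ρ) (hγL0 : γ * L0 ≤ 1)
    (hγρ : 2 * L1 * (γ * ρ) ≤ 1) {z d v : E}
    (hdesc : ∀ w, L1 * p (w - z) ≤ 1 →
      f w ≤ f z + ⟪f' z, w - z⟫ + (L0 + L1 * D (f' z)) / 2 * p (w - z) ^ 2)
    (hv : p v ≤ 1) (hdv : ⟪d, v⟫ = D d) {c : ℝ} (hc : D (d - f' z) ≤ c)
    (hc' : D (f' z - d) ≤ c) :
    f (z - (γ * min ρ ⟪d, v⟫) • v) + γ / 4 * (min ρ (D (f' z)) * D (f' z))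
      ≤ f z + 2 * γ * ρ * c := by
  rw [hdv]
  set η := min ρ (D d) with hη
  have hs : 0 ≤ γ * η := mul_nonneg hγ (le_min hρ (hD.nonneg d))
  have hdisp : z - (γ * η) • v - z = -((γ * η) • v) := sub_sub_cancel_left _ _
  have hp : p (z - (γ * η) • v - z) ≤ γ * η := by
    rw [hdisp, map_neg_eq_map, map_smul_eq_mul, Real.norm_of_nonneg hs]
    exact mul_le_of_le_one_right hs hv
  have hp_sq : p (z - (γ * η) • v - z) ^ 2 ≤ (γ * η) ^ 2 :=
    pow_le_pow_left₀ (apply_nonneg _ _) hp 2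
  have hclose : L1 * p (z - (γ * η) • v - z) ≤ 1 := by
    have : γ * η ≤ γ * ρ := mul_le_mul_of_nonneg_left (min_le_left _ _) hγ
    nlinarith [mul_le_mul_of_nonneg_left (hp.trans this) hL1]
  have hinner : D d - c ≤ ⟪f' z, v⟫ := by
    have := hD.inner_le (d - f' z) hv
    rw [inner_sub_left, hdv] at this
    linarith
  have hgrad : D (f' z) ≤ D d + c := by
    have := hD.add_le d (f' z - d)
    rw [add_sub_cancel] at this
    linarith
  have hscalar := lmo_step_scalar_bound hγ hρ hL1 hγL0 hγρ (hD.nonneg d) (hD.nonneg (f' z))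
    ((hD.nonneg _).trans hc) hgrad
  rw [← hη] at hscalar
  have hquad := mul_le_mul_of_nonneg_left hp_sq
    (by positivity [hD.nonneg (f' z)] : 0 ≤ (L0 + L1 * D (f' z)) / 2)
  have hdescent := hdesc _ hclose
  rw [hdisp] at hquad hdescent
  rw [inner_neg_right, real_inner_smul_right] at hdescent
  nlinarith [mul_le_mul_of_nonneg_left hinner hs]

end IsDualNorm

theorem sum_sqrt_le_sqrt_card_mul_sum {ι : Type*} (s : Finset ι) {T : ι → ℝ}
    (h0 : ∀ i, 0 ≤ T i) : ∑ i ∈ s, √(T i) ≤ √(s.card * ∑ i ∈ s, T i) := by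
  simpa [mul_comm] using Real.sum_sqrt_mul_sqrt_le s h0 (g := fun _ => 1) fun _ => zero_le_one

theorem sum_Icc_add_le_of_le_add {F H G : ℕ → ℝ} (h : ∀ k, F (k + 1) + H k ≤ F k + G k)
    (n : ℕ) : F (n + 1) + ∑ k ∈ Finset.Icc 1 n, H k ≤ F 1 + ∑ k ∈ Finset.Icc 1 n, G k := by
  induction n with
  | zero => simp
  | succ n ih =>
    rw [Finset.sum_Icc_succ_top (by omega), Finset.sum_Icc_succ_top (by omega)]
    linarith [h (n + 1)]

section Expectation

variable {Ω : Type*} {mΩ : MeasurableSpace Ω} {μ : Measure Ω}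

theorem MeasureTheory.Integrable.sqrt [IsFiniteMeasure μ] {X : Ω → ℝ} (hX : Integrable X μ)
    (h0 : 0 ≤ᵐ[μ] X) : Integrable (fun ω => √(X ω)) μ := by
  have hsq : Integrable (fun ω => √(X ω) ^ 2) μ :=
    hX.congr <| by filter_upwards [h0] with ω hω using (Real.sq_sqrt hω).symm
  exact ((memLp_two_iff_integrable_sq
    (Real.continuous_sqrt.comp_aestronglyMeasurable hX.aestronglyMeasurable)).2 hsq).integrable
    one_le_two

theorem integral_sqrt_le_sqrt_integral [IsProbabilityMeasure μ] {X : Ω → ℝ}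
    (hX : Integrable X μ) (h0 : 0 ≤ᵐ[μ] X) : ∫ ω, √(X ω) ∂μ ≤ √(∫ ω, X ω ∂μ) :=
  Real.strictConcaveOn_sqrt.concaveOn.le_map_integral Real.continuous_sqrt.continuousOn
    isClosed_Ici h0 hX (hX.sqrt h0)

theorem integral_le_sqrt_integral_sq [IsProbabilityMeasure μ] {X : Ω → ℝ}
    (hX : Integrable (fun ω => X ω ^ 2) μ) (h0 : ∀ ω, 0 ≤ X ω) :
    ∫ ω, X ω ∂μ ≤ √(∫ ω, X ω ^ 2 ∂μ) := by
  simpa only [Real.sqrt_sq (h0 _)] using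
    integral_sqrt_le_sqrt_integral hX (ae_of_all _ fun ω => sq_nonneg (X ω))

theorem MeasureTheory.Integrable.min_mul_self {ρ : ℝ} (hρ : 0 ≤ ρ) {X : Ω → ℝ}
    (hX : Integrable X μ) (h0 : ∀ ω, 0 ≤ X ω) :
    Integrable (fun ω => min ρ (X ω) * X ω) μ := by
  refine (hX.const_mul ρ).mono' ?_ (ae_of_all _ fun ω => ?_)
  · exact ((continuous_const.min continuous_id).mul continuous_id).comp_aestronglyMeasurable
      hX.aestronglyMeasurable
  · rw [Real.norm_of_nonneg (mul_nonneg (le_min hρ (h0 ω)) (h0 ω))]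
    exact mul_le_mul_of_nonneg_right (min_le_left _ _) (h0 ω)

theorem integral_le_sqrt_integral_min_mul_self_add_div [IsProbabilityMeasure μ] {ρ : ℝ}
    (hρ : 0 < ρ) {X : Ω → ℝ} (hX : Integrable X μ) (h0 : ∀ ω, 0 ≤ X ω) :
    ∫ ω, X ω ∂μ
      ≤ √(∫ ω, min ρ (X ω) * X ω ∂μ) + (∫ ω, min ρ (X ω) * X ω ∂μ) / ρ := by
  have hY0 : 0 ≤ᵐ[μ] fun ω => min ρ (X ω) * X ω :=
    ae_of_all _ fun ω => mul_nonneg (le_min hρ.le (h0 ω)) (h0 ω)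
  have hY := hX.min_mul_self hρ.le h0
  have hsqrtY := hY.sqrt hY0
  calc ∫ ω, X ω ∂μ
      ≤ ∫ ω, (√(min ρ (X ω) * X ω) + min ρ (X ω) * X ω / ρ) ∂μ :=
        integral_mono hX (hsqrtY.add (hY.div_const ρ))
          fun ω => le_sqrt_min_mul_self_add_div hρ (h0 ω)
    _ ≤ √(∫ ω, min ρ (X ω) * X ω ∂μ) + (∫ ω, min ρ (X ω) * X ω ∂μ) / ρ := by
        rw [integral_add hsqrtY (hY.div_const ρ), integral_div]
        gcongr
        exact integral_sqrt_le_sqrt_integral hY hY0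

theorem sum_integral_le_sqrt_card_mul_add_div [IsProbabilityMeasure μ] {ι : Type*} {ρ : ℝ}
    (hρ : 0 < ρ) {X : ι → Ω → ℝ} (hX : ∀ i, Integrable (X i) μ) (h0 : ∀ i ω, 0 ≤ X i ω)
    (s : Finset ι) :
    ∑ i ∈ s, ∫ ω, X i ω ∂μ
      ≤ √(s.card * ∑ i ∈ s, ∫ ω, min ρ (X i ω) * X i ω ∂μ)
        + (∑ i ∈ s, ∫ ω, min ρ (X i ω) * X i ω ∂μ) / ρ := by
  have hY0 : ∀ i, 0 ≤ ∫ ω, min ρ (X i ω) * X i ω ∂μ := fun i =>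
    integral_nonneg fun ω => mul_nonneg (le_min hρ.le (h0 i ω)) (h0 i ω)
  calc ∑ i ∈ s, ∫ ω, X i ω ∂μ
      ≤ ∑ i ∈ s, (√(∫ ω, min ρ (X i ω) * X i ω ∂μ) + (∫ ω, min ρ (X i ω) * X i ω ∂μ) / ρ) :=
        Finset.sum_le_sum fun i _ =>
          integral_le_sqrt_integral_min_mul_self_add_div hρ (hX i) (h0 i)
    _ ≤ _ := by
        rw [Finset.sum_add_distrib, ← Finset.sum_div]
        gcongr
        exact sum_sqrt_le_sqrt_card_mul_sum s hY0

theorem sum_integral_le_of_descent [IsProbabilityMeasure μ] {F H Λ : ℕ → Ω → ℝ}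
    {a c fmin F₁ : ℝ} (hc : 0 ≤ c) (hF : ∀ k, Integrable (F k) μ)
    (hH : ∀ k, Integrable (H k) μ) (hΛ : ∀ k, Integrable (fun ω => Λ k ω ^ 2) μ)
    (hΛ0 : ∀ k ω, 0 ≤ Λ k ω) (hF₁ : ∀ ω, F 1 ω = F₁) (hmin : ∀ k ω, fmin ≤ F k ω)
    (hstep : ∀ k ω, F (k + 1) ω + a * H k ω ≤ F k ω + c * Λ k ω) (n : ℕ) :
    a * ∑ k ∈ Finset.Icc 1 n, ∫ ω, H k ω ∂μ
      ≤ F₁ - fmin + c * ∑ k ∈ Finset.Icc 1 n, √(∫ ω, Λ k ω ^ 2 ∂μ) := by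
  have hΛint : ∀ k, Integrable (Λ k) μ := fun k =>
    ((hΛ k).sqrt (ae_of_all _ fun ω => sq_nonneg _)).congr
      (ae_of_all _ fun ω => Real.sqrt_sq (hΛ0 k ω))
  have hexp : ∀ k, ∫ ω, F (k + 1) ω ∂μ + a * ∫ ω, H k ω ∂μ
      ≤ ∫ ω, F k ω ∂μ + c * √(∫ ω, Λ k ω ^ 2 ∂μ) := fun k => by
    have : ∫ ω, (F (k + 1) ω + a * H k ω) ∂μ ≤ ∫ ω, (F k ω + c * Λ k ω) ∂μ :=
      integral_mono ((hF (k + 1)).add ((hH k).const_mul a))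
        ((hF k).add ((hΛint k).const_mul c)) (hstep k)
    rw [integral_add (hF _) ((hH k).const_mul a), integral_add (hF k) ((hΛint k).const_mul c),
      integral_const_mul, integral_const_mul] at this
    have := mul_le_mul_of_nonneg_left (integral_le_sqrt_integral_sq (hΛ k) (hΛ0 k)) hc
    linarith
  have htel := sum_Icc_add_le_of_le_add (F := fun k => ∫ ω, F k ω ∂μ) hexp n
  have hF₁' : ∫ ω, F 1 ω ∂μ = F₁ := by simp [hF₁]
  have hmin' : fmin ≤ ∫ ω, F (n + 1) ω ∂μ := by
    simpa using integral_mono (integrable_const fmin) (hF (n + 1)) (hmin (n + 1))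
  rw [Finset.mul_sum, Finset.mul_sum]
  linarith

end Expectation

theorem sqrt_add_div_le {u A ε ρ : ℝ} (hA : 0 ≤ A) (hε : 0 ≤ ε) (hρ : 0 < ρ)
    (hu : u ≤ 4 * A + 32 / 7 * ε) :
    √u + u / ρ ≤ 4 * √A + 8 * A / ρ + 4 * √ε + 8 * ε / ρ := by
  have hsqrt : √u ≤ 4 * √A + 4 * √ε := by
    rw [Real.sqrt_le_left (by positivity)]
    nlinarith [Real.sq_sqrt hA, Real.sq_sqrt hε,
      mul_nonneg (Real.sqrt_nonneg A) (Real.sqrt_nonneg ε)]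
  have hdiv : u / ρ ≤ 8 * A / ρ + 8 * ε / ρ := by
    rw [← add_div]
    gcongr
    linarith
  linarith

theorem rate_of_sum_bounds {n γ ρ Δ ε S T : ℝ} (hn : 0 < n) (hγ : 0 < γ) (hρ : 0 < ρ)
    (hΔ : 0 ≤ Δ) (hε : 0 ≤ ε) (hS : S ≤ √(n * T) + T / ρ)
    (hT : γ / 4 * T ≤ Δ + 8 / 7 * γ * n * ε) :
    1 / n * S ≤ 4 * √Δ / √(γ * n) + 8 * Δ / (γ * ρ * n) + 4 * √ε + 8 * ε / ρ := by
  have hmean : 1 / n * S ≤ √(T / n) + T / n / ρ := by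
    have hsq : √(n * T) = n * √(T / n) := by
      rw [show n * T = n ^ 2 * (T / n) by field_simp, Real.sqrt_mul (sq_nonneg n),
        Real.sqrt_sq hn.le]
    rw [one_div_mul_eq_div, div_le_iff₀ hn]
    calc S ≤ √(n * T) + T / ρ := hS
      _ = (√(T / n) + T / n / ρ) * n := by rw [hsq]; field_simp
  have hu : T / n ≤ 4 * (Δ / (γ * n)) + 32 / 7 * ε := by
    have hγT : T ≤ (4 * Δ + 32 / 7 * γ * n * ε) / γ := by
      rw [le_div_iff₀ hγ]
      linarith
    calc T / n ≤ (4 * Δ + 32 / 7 * γ * n * ε) / γ / n := by gcongr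
      _ = 4 * (Δ / (γ * n)) + 32 / 7 * ε := by field_simp
  have hA : 0 ≤ Δ / (γ * n) := by positivity
  calc 1 / n * S ≤ √(T / n) + T / n / ρ := hmean
    _ ≤ 4 * √(Δ / (γ * n)) + 8 * (Δ / (γ * n)) / ρ + 4 * √ε + 8 * ε / ρ :=
      sqrt_add_div_le hA hε hρ hu
    _ = 4 * √Δ / √(γ * n) + 8 * Δ / (γ * ρ * n) + 4 * √ε + 8 * ε / ρ := by
      rw [Real.sqrt_div' _ (by positivity)]
      field_simp

theorem GGNC_stochastic_rate_general
    {E : Type*} [NormedAddCommGroup E] [InnerProductSpace ℝ E]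
    {Ω : Type*} {mΩ : MeasurableSpace Ω} (μ : Measure Ω) [IsProbabilityMeasure μ]
    -- the (possibly non-Euclidean) norm `‖·‖` on `E` (`‖·‖₂` is the inner-product norm)
    (Nm : E → ℝ)
    (hNmsmul : ∀ (a : ℝ) (z : E), Nm (a • z) = |a| * Nm z)
    (hNmadd : ∀ z w : E, Nm (z + w) ≤ Nm z + Nm w)
    -- the dual norm `‖d‖_* = sup {⟨d,x⟩ : ‖x‖ ≤ 1}`
    (Dstar : E → ℝ)
    (hDstar : ∀ d : E, IsLUB ((fun z => ⟪d, z⟫) '' {z : E | Nm z ≤ 1}) (Dstar d))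
    -- the lmo: `lmo(d) ∈ argmin {⟨d,x⟩ : ‖x‖ ≤ 1}`, so `⟨d, lmo(d)⟩ = −‖d‖_*`
    (lmo : E → E)
    (hlmo : ∀ d : E, Nm (lmo d) ≤ 1 ∧ ∀ z : E, Nm z ≤ 1 → ⟪d, lmo d⟫ ≤ ⟪d, z⟫)
    (hlmo_eq : ∀ d : E, ⟪d, lmo d⟫ = -(Dstar d))
    (f : E → ℝ) (f' : E → E)
    -- `(L₀,L₁)`-smoothness (the condition `‖x−y‖ ≤ 1/L₁` is encoded as `L₁‖x−y‖ ≤ 1`)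
    (L0 L1 : ℝ) (hL0 : 0 ≤ L0) (hL1 : 0 ≤ L1)
    (hdesc : ∀ z w : E, L1 * Nm (w - z) ≤ 1 →
      f w ≤ f z + ⟪f' z, w - z⟫ + (L0 + L1 * Dstar (f' z)) / 2 * (Nm (w - z)) ^ 2)
    -- `f* = inf f > -∞`
    (fstar : ℝ) (hfstar : IsGLB (Set.range f) fstar)
    (n : ℕ) (hn : 1 ≤ n)
    -- parameters: `γ ≤ 1/L₀`, `γρ ≤ 1/(2L₁)`
    (γ ρ : ℝ) (hγ : 0 < γ) (hρ : 0 < ρ)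
    (hγL0 : γ * L0 ≤ 1) (hγρ : 2 * L1 * (γ * ρ) ≤ 1)
    -- the iterates, momentum estimator and stochastic gradients
    (x d : ℕ → Ω → E)
    (x1 : E) (hx1 : ∀ ω, x 1 ω = x1)
    (hx : ∀ (k : ℕ) (ω : Ω), x (k + 1) ω =
      x k ω - (γ * min ρ ⟪d k ω, -lmo (d k ω)⟫) • (-lmo (d k ω)))
    -- integrability of the quantities appearing in the statement
    (herrint : ∀ k, Integrable (fun ω => ‖d k ω - f' (x k ω)‖ ^ 2) μ)
    (hgradint : ∀ k, Integrable (fun ω => Dstar (f' (x k ω))) μ)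
    (hfint : ∀ k, Integrable (fun ω => f (x k ω)) μ)
    -- the norm-equivalence constant `ζ = sup ‖·‖_*/‖·‖₂`
    (ζ : ℝ) (hζ : ∀ z : E, Dstar z ≤ ζ * ‖z‖)
    -- the stochastic error term `ε_n`
    (εn : ℝ)
    (hεn : εn = (1 / (n : ℝ)) * ∑ k ∈ Finset.Icc 1 n,
      (7 / 4 * ρ * ζ * Real.sqrt (∫ ω, ‖d k ω - f' (x k ω)‖ ^ 2 ∂μ)
        + ζ / 4 * ∫ ω, ‖d k ω - f' (x k ω)‖ ^ 2 ∂μ)) :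
    (1 / (n : ℝ)) * ∑ k ∈ Finset.Icc 1 n, ∫ ω, Dstar (f' (x k ω)) ∂μ
      ≤ 4 * Real.sqrt (f x1 - fstar) / Real.sqrt (γ * n)
        + 8 * (f x1 - fstar) / (γ * ρ * n)
        + 4 * Real.sqrt εn + 8 * εn / ρ := by
  set p : Seminorm ℝ E := Seminorm.of Nm hNmadd hNmsmul
  have hD : IsDualNorm p Dstar := hDstar
  have hnpos : (0 : ℝ) < n := by exact_mod_cast hn
  have hΔ : 0 ≤ f x1 - fstar := sub_nonneg.2 (hfstar.1 ⟨x1, rfl⟩)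
  rcases subsingleton_or_nontrivial E with hE | hE
  · have hzero : ∀ z : E, ‖z‖ = 0 := fun z => by rw [Subsingleton.elim z 0, norm_zero]
    have hε : εn = 0 := by simp [hεn, hzero]
    refine rate_of_sum_bounds (T := 0) hnpos hγ hρ hΔ hε.ge ?_ (by simpa [hε] using hΔ)
    simpa using Finset.sum_nonpos fun k _ =>
      integral_nonpos fun ω => by simpa [hzero] using hζ (f' (x k ω))
  have hζ0 : 0 ≤ ζ := hD.nonneg_of_le_mul_norm hζ
  have hstep : ∀ k ω,
      f (x (k + 1) ω) + γ / 4 * (min ρ (Dstar (f' (x k ω))) * Dstar (f' (x k ω)))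
        ≤ f (x k ω) + 2 * γ * ρ * ζ * ‖d k ω - f' (x k ω)‖ := fun k ω => by
    rw [hx, mul_assoc (2 * γ * ρ)]
    exact hD.lmo_step_descent hL0 hL1 hγ.le hρ.le hγL0 hγρ (hdesc _)
      (by rw [map_neg_eq_map]; exact (hlmo _).1) (by rw [inner_neg_right, hlmo_eq, neg_neg])
      (hζ _) (by rw [norm_sub_rev]; exact hζ _)
  have hT := sum_integral_le_of_descent (by positivity) hfint
    (fun k => (hgradint k).min_mul_self hρ.le fun ω => hD.nonneg _) herrint
    (fun _ _ => norm_nonneg _) (fun ω => by rw [hx1]) (fun _ ω => hfstar.1 ⟨_, rfl⟩) hstep n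
  have hS := sum_integral_le_sqrt_card_mul_add_div hρ hgradint (fun _ _ => hD.nonneg _)
    (Finset.Icc 1 n)
  rw [Nat.card_Icc, add_tsub_cancel_right] at hS
  set W := ∑ k ∈ Finset.Icc 1 n, √(∫ ω, ‖d k ω - f' (x k ω)‖ ^ 2 ∂μ)
  set Q := ∑ k ∈ Finset.Icc 1 n, ∫ ω, ‖d k ω - f' (x k ω)‖ ^ 2 ∂μ
  have hnε : (n : ℝ) * εn = 7 / 4 * ρ * ζ * W + ζ / 4 * Q := by
    rw [hεn, ← mul_assoc, mul_one_div_cancel hnpos.ne', one_mul, Finset.sum_add_distrib,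
      Finset.mul_sum, Finset.mul_sum]
  have hW : 7 / 4 * ρ * ζ * W ≤ n * εn := by
    rw [hnε]
    linarith [(by positivity : 0 ≤ ζ / 4 * Q)]
  have hε0 : 0 ≤ εn := nonneg_of_mul_nonneg_right (by rw [hnε]; positivity) hnpos
  refine rate_of_sum_bounds hnpos hγ hρ hΔ hε0 hS ?_
  linarith [mul_le_mul_of_nonneg_left hW (by positivity : (0 : ℝ) ≤ 8 / 7 * γ)]

/-- Convergence of stochastic GGNC under `(L₀,L₁)`-smoothness:
`(1/n)Σ_{k=1}^n E‖∇f(x^k)‖_* ≤ 4√Δ/√(γn) + 8Δ/(γρn) + 4√ε_n + 8ε_n/ρ`, where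
`ε_n = (1/n)Σ_k [(7/4)ρζ√(E‖λ^k‖₂²) + (ζ/4)E‖λ^k‖₂²]`. -/
theorem GGNC_stochastic_rate
    {E : Type*} [NormedAddCommGroup E] [InnerProductSpace ℝ E] [FiniteDimensional ℝ E]
    {Ω : Type*} {mΩ : MeasurableSpace Ω} (μ : Measure Ω) [IsProbabilityMeasure μ]
    (ℱ : Filtration ℕ mΩ)
    -- the (possibly non-Euclidean) norm `‖·‖` on `E` (`‖·‖₂` is the inner-product norm)
    (Nm : E → ℝ)
    (hNm0 : Nm 0 = 0)
    (hNmpos : ∀ z : E, z ≠ 0 → 0 < Nm z)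
    (hNmsmul : ∀ (a : ℝ) (z : E), Nm (a • z) = |a| * Nm z)
    (hNmadd : ∀ z w : E, Nm (z + w) ≤ Nm z + Nm w)
    -- the dual norm `‖d‖_* = sup {⟨d,x⟩ : ‖x‖ ≤ 1}`
    (Dstar : E → ℝ)
    (hDstar : ∀ d : E, IsLUB ((fun z => ⟪d, z⟫) '' {z : E | Nm z ≤ 1}) (Dstar d))
    -- the lmo: `lmo(d) ∈ argmin {⟨d,x⟩ : ‖x‖ ≤ 1}`, so `⟨d, lmo(d)⟩ = −‖d‖_*`
    (lmo : E → E)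
    (hlmo : ∀ d : E, Nm (lmo d) ≤ 1 ∧ ∀ z : E, Nm z ≤ 1 → ⟪d, lmo d⟫ ≤ ⟪d, z⟫)
    (hlmo_eq : ∀ d : E, ⟪d, lmo d⟫ = -(Dstar d))
    -- `f` differentiable with gradient `f'`
    (f : E → ℝ) (f' : E → E)
    (hdiff : ∀ z, HasGradientAt f (f' z) z)
    -- `(L₀,L₁)`-smoothness (the condition `‖x−y‖ ≤ 1/L₁` is encoded as `L₁‖x−y‖ ≤ 1`)
    (L0 L1 : ℝ) (hL0 : 0 ≤ L0) (hL1 : 0 ≤ L1)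
    (hsmooth : ∀ z w : E, L1 * Nm (z - w) ≤ 1 →
      Dstar (f' z - f' w) ≤ (L0 + L1 * Dstar (f' z)) * Nm (z - w))
    (hdesc : ∀ z w : E, L1 * Nm (w - z) ≤ 1 →
      f w ≤ f z + ⟪f' z, w - z⟫ + (L0 + L1 * Dstar (f' z)) / 2 * (Nm (w - z)) ^ 2)
    -- `f* = inf f > -∞`
    (fstar : ℝ) (hfstar : IsGLB (Set.range f) fstar)
    (n : ℕ) (hn : 1 ≤ n)
    -- parameters: `γ ≤ 1/L₀`, `γρ ≤ 1/(2L₁)`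
    (γ ρ σ : ℝ) (hγ : 0 < γ) (hρ : 0 < ρ) (hσ : 0 ≤ σ)
    (hγL0 : γ * L0 ≤ 1) (hγρ : 2 * L1 * (γ * ρ) ≤ 1)
    (α : ℕ → ℝ) (hα : ∀ k, 1 ≤ k → 0 < α k ∧ α k ≤ 1)
    -- the iterates, momentum estimator and stochastic gradients
    (x d g : ℕ → Ω → E)
    (x1 : E) (hx1 : ∀ ω, x 1 ω = x1)
    (hd0 : ∀ ω, d 0 ω = 0)
    (hd : ∀ k, 1 ≤ k → ∀ ω, d k ω = α k • g k ω + (1 - α k) • d (k - 1) ω)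
    (hx : ∀ (k : ℕ) (ω : Ω), x (k + 1) ω =
      x k ω - (γ * min ρ ⟪d k ω, -lmo (d k ω)⟫) • (-lmo (d k ω)))
    -- the filtration is generated by the iterates
    (hx_adapted : ∀ k, StronglyMeasurable[ℱ k] (x k))
    (hd_adapted : ∀ k, StronglyMeasurable[ℱ (k + 1)] (d k))
    -- the stochastic gradient is conditionally unbiased with variance at most `σ²`
    (hg_unbiased : ∀ k, 1 ≤ k → μ[g k | ℱ k] =ᵐ[μ] fun ω => f' (x k ω))
    (hg_var : ∀ k, 1 ≤ k →
      ∀ᵐ ω ∂μ, (μ[fun ω' => ‖g k ω' - f' (x k ω')‖ ^ 2 | ℱ k]) ω ≤ σ ^ 2)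
    -- integrability of the quantities appearing in the statement
    (herrint : ∀ k, Integrable (fun ω => ‖d k ω - f' (x k ω)‖ ^ 2) μ)
    (hgradint : ∀ k, Integrable (fun ω => Dstar (f' (x k ω))) μ)
    (hfint : ∀ k, Integrable (fun ω => f (x k ω)) μ)
    -- the norm-equivalence constant `ζ = sup ‖·‖_*/‖·‖₂`
    (ζ : ℝ) (hζ : ∀ z : E, Dstar z ≤ ζ * ‖z‖)
    -- the stochastic error term `ε_n`
    (εn : ℝ)
    (hεn : εn = (1 / (n : ℝ)) * ∑ k ∈ Finset.Icc 1 n,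
      (7 / 4 * ρ * ζ * Real.sqrt (∫ ω, ‖d k ω - f' (x k ω)‖ ^ 2 ∂μ)
        + ζ / 4 * ∫ ω, ‖d k ω - f' (x k ω)‖ ^ 2 ∂μ)) :
    (1 / (n : ℝ)) * ∑ k ∈ Finset.Icc 1 n, ∫ ω, Dstar (f' (x k ω)) ∂μ
      ≤ 4 * Real.sqrt (f x1 - fstar) / Real.sqrt (γ * n)
        + 8 * (f x1 - fstar) / (γ * ρ * n)
        + 4 * Real.sqrt εn + 8 * εn / ρ :=
  GGNC_stochastic_rate_general (mΩ := mΩ) μ Nm hNmsmul hNmadd Dstar hDstar lmo hlmo hlmo_eq f f' L0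
    L1 hL0 hL1 hdesc fstar hfstar n hn γ ρ hγ hρ hγL0 hγρ x d x1 hx1 hx herrint hgradint hfint ζ hζ
    εn hεn
end

section
/- Suppose f : E → ℝ is differentiable with L-smooth gradient with respect to ‖·‖, β > 0, f* := inf_{x ∈ βD} f(x) > −∞, Δ := f(x¹) − f*, and x¹ ∈ βD := {x : ‖x‖ ≤ β}. Consider the iterates of S³CG (Variant 1): v^k = x^k − β·lmo(d^k), η_k = min{ρ, ⟨d^k, v^k⟩/‖v^k‖²}, x^{k+1} = x^k − γη_k v^k, with constant stepsize γ ≤ 1/L, γρ ≤ 1, α ∈ (0,1], where d^k = α·g_k + (1−α)·d^{k−1}, d⁰ = 0, and g_k is a conditionally unbiased stochastic gradient at x^k with conditional variance (in ‖·‖₂) at most σ². Let λ^k := d^k − ∇f(x^k), D₂ := sup{‖x − y‖₂ : x, y ∈ βD}, M := max{16β², 2}, M' := max{16D₂β², 3D₂}, and ε_n := (1/n)·Σ_{k=1}^n [ M'·ρ·E[‖λ^k‖₂] + 4D₂²·E[‖λ^k‖₂²] ]. Then for all u ∈ βD, (1/n)·Σ_{k=1}^n E[⟨∇f(x^k), x^k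 − u⟩] ≤ √(MΔ)/√(γn) + MΔ/(γρn) + √(ε_n) + ε_n/ρ. -/
open MeasureTheory
open scoped RealInnerProductSpace
open MeasureTheory
open scoped RealInnerProductSpace
set_option maxHeartbeats 1000000

private lemma SCGSS_sqrt_le_add (t s : ℝ) (ht : 0 ≤ t) (hs : 0 < s) :
    Real.sqrt t ≤ (t + s)/(2*Real.sqrt s) := by
  have hsq : 0 < Real.sqrt s := Real.sqrt_pos.2 hs
  rw [le_div_iff₀ (by positivity)]
  nlinarith [Real.sq_sqrt ht, Real.sq_sqrt hs.le, Real.sqrt_nonneg t,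
    sq_nonneg (Real.sqrt t - Real.sqrt s)]

private lemma SCGSS_sqrt_add (a b : ℝ) (ha : 0 ≤ a) (hb : 0 ≤ b) :
    Real.sqrt (a + b) ≤ Real.sqrt a + Real.sqrt b := by
  have h10 : a + b ≤ (Real.sqrt a + Real.sqrt b)^2 := by
    nlinarith [Real.sq_sqrt ha, Real.sq_sqrt hb,
      mul_nonneg (Real.sqrt_nonneg a) (Real.sqrt_nonneg b)]
  calc Real.sqrt (a+b) ≤ Real.sqrt ((Real.sqrt a + Real.sqrt b)^2) :=
        Real.sqrt_le_sqrt h10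
    _ = _ := Real.sqrt_sq (by positivity)

private lemma SCGSS_aux_nonneg {E : Type*} [NormedAddCommGroup E] [InnerProductSpace ℝ E]
    (Nm : E → ℝ) (hNm0 : Nm 0 = 0) (hNmpos : ∀ z : E, z ≠ 0 → 0 < Nm z) :
    ∀ z : E, 0 ≤ Nm z := by
  intro z
  rcases eq_or_ne z 0 with h | h
  · simp [h, hNm0]
  · exact (hNmpos z h).le

private lemma SCGSS_aux_lmoβ {E : Type*} [NormedAddCommGroup E] [InnerProductSpace ℝ E]
    (Nm : E → ℝ) (hNm0 : Nm 0 = 0) (hNmpos : ∀ z : E, z ≠ 0 → 0 < Nm z)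
    (hNmsmul : ∀ (a : ℝ) (z : E), Nm (a • z) = |a| * Nm z)
    (lmo : E → E)
    (hlmo : ∀ d : E, Nm (lmo d) ≤ 1 ∧ ∀ z : E, Nm z ≤ 1 → ⟪d, lmo d⟫ ≤ ⟪d, z⟫)
    (β : ℝ) (hβ : 0 < β) :
    ∀ w : E, Nm (β • lmo w) ≤ β := by
  intro w
  rw [hNmsmul, abs_of_pos hβ]
  have h1 := (hlmo w).1
  have h2 := SCGSS_aux_nonneg Nm hNm0 hNmpos (lmo w)
  have h3 : β * Nm (lmo w) ≤ β * 1 :=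
    mul_le_mul_of_nonneg_left h1 hβ.le
  linarith only [h3]

private lemma SCGSS_aux_dvpos {E : Type*} [NormedAddCommGroup E] [InnerProductSpace ℝ E]
    (Nm : E → ℝ)
    (hNmsmul : ∀ (a : ℝ) (z : E), Nm (a • z) = |a| * Nm z)
    (lmo : E → E)
    (hlmo : ∀ d : E, Nm (lmo d) ≤ 1 ∧ ∀ z : E, Nm z ≤ 1 → ⟪d, lmo d⟫ ≤ ⟪d, z⟫)
    (β : ℝ) (hβ : 0 < β) :
    ∀ (D X : E), Nm X ≤ β → ⟪D, β • lmo D⟫ ≤ ⟪D, X⟫ := by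
  intro D X hX
  have h1 : Nm (β⁻¹ • X) ≤ 1 := by
    rw [hNmsmul, abs_of_pos (inv_pos.2 hβ)]
    rw [inv_mul_le_iff₀ hβ]
    linarith
  have h2 := (hlmo D).2 _ h1
  rw [real_inner_smul_right] at h2
  rw [real_inner_smul_right]
  have h3 := mul_le_mul_of_nonneg_left h2 hβ.le
  calc β * ⟪D, lmo D⟫ ≤ β * (β⁻¹ * ⟪D, X⟫) := h3
    _ = ⟪D, X⟫ := by field_simp

private lemma SCGSS_aux_VD {E : Type*} [NormedAddCommGroup E] [InnerProductSpace ℝ E]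
    (Nm : E → ℝ)
    (hNmsmul : ∀ (a : ℝ) (z : E), Nm (a • z) = |a| * Nm z)
    (lmo : E → E)
    (hlmo : ∀ d : E, Nm (lmo d) ≤ 1 ∧ ∀ z : E, Nm z ≤ 1 → ⟪d, lmo d⟫ ≤ ⟪d, z⟫)
    (β : ℝ) (hβ : 0 < β) :
    ∀ (D X : E), Nm X ≤ β → 0 ≤ ⟪D, X - β • lmo D⟫ := by
  intro D X hX
  rw [inner_sub_right, sub_nonneg]
  exact SCGSS_aux_dvpos Nm hNmsmul lmo hlmo β hβ D X hX

private lemma SCGSS_aux_mem {E : Type*} [NormedAddCommGroup E] [InnerProductSpace ℝ E]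
    (Nm : E → ℝ) (hNm0 : Nm 0 = 0) (hNmpos : ∀ z : E, z ≠ 0 → 0 < Nm z)
    (hNmsmul : ∀ (a : ℝ) (z : E), Nm (a • z) = |a| * Nm z)
    (hNmadd : ∀ z w : E, Nm (z + w) ≤ Nm z + Nm w)
    (lmo : E → E)
    (hlmo : ∀ d : E, Nm (lmo d) ≤ 1 ∧ ∀ z : E, Nm z ≤ 1 → ⟪d, lmo d⟫ ≤ ⟪d, z⟫)
    (β γ ρ : ℝ) (hβ : 0 < β) (hγ : 0 < γ) (hρ : 0 < ρ) (hγρ : γ * ρ ≤ 1)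
    (X D : E) (hX : Nm X ≤ β) :
    Nm (X - (γ * min ρ (⟪D, X - β • lmo D⟫ / (Nm (X - β • lmo D)) ^ 2))
        • (X - β • lmo D)) ≤ β := by
  set η := min ρ (⟪D, X - β • lmo D⟫ / (Nm (X - β • lmo D)) ^ 2) with hηdef
  clear_value η
  have hη0 : 0 ≤ η := by
    rw [hηdef]
    exact le_min hρ.le
      (div_nonneg (SCGSS_aux_VD Nm hNmsmul lmo hlmo β hβ D X hX) (sq_nonneg _))
  have hηρ : η ≤ ρ := by rw [hηdef]; exact min_le_left _ _
  have hθ0 : 0 ≤ γ * η := mul_nonneg hγ.le hη0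
  have hθ1 : γ * η ≤ 1 :=
    le_trans (by linarith only [mul_le_mul_of_nonneg_left hηρ hγ.le]) hγρ
  have hsplit : X - (γ * η) • (X - β • lmo D)
      = (1 - γ * η) • X + (γ * η) • (β • lmo D) := by module
  rw [hsplit]
  have h4 := SCGSS_aux_lmoβ Nm hNm0 hNmpos hNmsmul lmo hlmo β hβ D
  have h5 := SCGSS_aux_nonneg Nm hNm0 hNmpos (β • lmo D)
  have h6 := SCGSS_aux_nonneg Nm hNm0 hNmpos X
  calc Nm _ ≤ Nm ((1 - γ*η) • X) + Nm ((γ*η) • (β • lmo D)) := hNmadd _ _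
    _ = |1 - γ*η| * Nm X + |γ*η| * Nm (β • lmo D) := by rw [hNmsmul, hNmsmul]
    _ ≤ (1-γ*η) * β + (γ*η) * β := by
        rw [abs_of_nonneg (by linarith only [hθ1]), abs_of_nonneg hθ0]
        have h7 : 0 ≤ (1 - γ*η) * (β - Nm X) :=
          mul_nonneg (by linarith only [hθ1]) (by linarith only [hX])
        have h8 : 0 ≤ (γ*η) * (β - Nm (β • lmo D)) :=
          mul_nonneg hθ0 (by linarith only [h4])
        nlinarith [h7, h8]
    _ = β := by ring

private lemma SCGSS_aux_key {E : Type*} [NormedAddCommGroup E] [InnerProductSpace ℝ E]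
    (Nm : E → ℝ) (hNm0 : Nm 0 = 0) (hNmpos : ∀ z : E, z ≠ 0 → 0 < Nm z)
    (hNmsmul : ∀ (a : ℝ) (z : E), Nm (a • z) = |a| * Nm z)
    (hNmadd : ∀ z w : E, Nm (z + w) ≤ Nm z + Nm w)
    (lmo : E → E)
    (hlmo : ∀ d : E, Nm (lmo d) ≤ 1 ∧ ∀ z : E, Nm z ≤ 1 → ⟪d, lmo d⟫ ≤ ⟪d, z⟫)
    (f : E → ℝ) (f' : E → E) (L β γ ρ D2 : ℝ)
    (hL : 0 < L) (hβ : 0 < β) (hγ : 0 < γ) (hρ : 0 < ρ)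
    (hLγ : L * γ ≤ 1) (hD2nn : 0 ≤ D2)
    (hdesc : ∀ z w : E, f w ≤ f z + ⟪f' z, w - z⟫ + L / 2 * (Nm (w - z)) ^ 2)
    (hD2 : ∀ z w : E, Nm z ≤ β → Nm w ≤ β → ‖z - w‖ ≤ D2)
    (X D : E) (hX : Nm X ≤ β) :
    0 ≤ f X - f (X - (γ * min ρ (⟪D, X - β • lmo D⟫ / (Nm (X - β • lmo D)) ^ 2))
          • (X - β • lmo D)) + γ*ρ*D2*‖D - f' X‖ ∧
    ⟪D, X - β • lmo D⟫ ≤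
      Real.sqrt (8*β^2/γ) *
        Real.sqrt (f X - f (X - (γ * min ρ (⟪D, X - β • lmo D⟫ /
            (Nm (X - β • lmo D)) ^ 2)) • (X - β • lmo D)) + γ*ρ*D2*‖D - f' X‖)
      + (2/(γ*ρ)) * (f X - f (X - (γ * min ρ (⟪D, X - β • lmo D⟫ /
            (Nm (X - β • lmo D)) ^ 2)) • (X - β • lmo D)) + γ*ρ*D2*‖D - f' X‖) := by
  set V := X - β • lmo D with hVdef
  set lam := D - f' X with hlamdef
  set η := min ρ (⟪D, V⟫ / (Nm V) ^ 2) with hηdef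
  have hG0 : 0 ≤ ⟪D, V⟫ := by
    rw [hVdef]; exact SCGSS_aux_VD Nm hNmsmul lmo hlmo β hβ D X hX
  have hNmV : Nm V ≤ 2*β := by
    have h13 : Nm V ≤ Nm X + Nm (-(β • lmo D)) := by
      rw [hVdef, sub_eq_add_neg]
      exact hNmadd _ _
    have h14 : Nm (-(β • lmo D)) = Nm (β • lmo D) := by
      rw [← neg_one_smul ℝ, hNmsmul]; simp
    have h15 := SCGSS_aux_lmoβ Nm hNm0 hNmpos hNmsmul lmo hlmo β hβ D
    rw [h14] at h13
    linarith
  have hVD2 : ‖V‖ ≤ D2 := by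
    rw [hVdef]
    exact hD2 X (β • lmo D) hX (SCGSS_aux_lmoβ Nm hNm0 hNmpos hNmsmul lmo hlmo β hβ D)
  have hVNneg : 0 ≤ Nm V := SCGSS_aux_nonneg Nm hNm0 hNmpos V
  have hVpos : V ≠ 0 → 0 < Nm V := hNmpos V
  clear_value V lam η
  have hη0 : 0 ≤ η := by
    rw [hηdef]; exact le_min hρ.le (div_nonneg hG0 (sq_nonneg _))
  have hηρ : η ≤ ρ := by rw [hηdef]; exact min_le_left _ _
  have hθ0 : 0 ≤ γ * η := mul_nonneg hγ.le hη0
  have hdesc' := hdesc X (X - (γ*η) • V)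
  have e1 : X - (γ*η) • V - X = -((γ*η) • V) := by abel
  rw [e1] at hdesc'
  have e2 : ⟪f' X, -((γ*η)•V)⟫ = -((γ*η) * ⟪f' X, V⟫) := by
    rw [inner_neg_right, real_inner_smul_right]
  rw [e2] at hdesc'
  have e3 : Nm (-((γ*η)•V)) = (γ*η) * Nm V := by
    rw [← neg_smul, hNmsmul, abs_neg, abs_of_nonneg hθ0]
  rw [e3] at hdesc'
  have hlamnn : 0 ≤ ‖lam‖ := norm_nonneg _
  have hfv : ⟪D, V⟫ - ‖lam‖ * D2 ≤ ⟪f' X, V⟫ := by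
    have h1 : f' X = D - lam := by rw [hlamdef]; abel
    have h2 : ⟪f' X, V⟫ = ⟪D, V⟫ - ⟪lam, V⟫ := by rw [h1, inner_sub_left]
    have h3 : ⟪lam, V⟫ ≤ ‖lam‖ * ‖V‖ := real_inner_le_norm _ _
    have h4 : ‖lam‖ * ‖V‖ ≤ ‖lam‖ * D2 :=
      mul_le_mul_of_nonneg_left hVD2 hlamnn
    linarith only [h2, h3, h4]
  have hmain : γ*η*⟪D, V⟫ - γ/2*η^2*(Nm V)^2 ≤
      f X - f (X - (γ*η) • V) + γ*ρ*D2*‖lam‖ := by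
    have h5 : L/2 * ((γ*η) * Nm V)^2 ≤ γ/2*η^2*(Nm V)^2 := by
      have h6 : 0 ≤ γ*η^2*(Nm V)^2 := by positivity
      have h6b := mul_le_mul_of_nonneg_right hLγ h6
      nlinarith [h6b]
    have h7 : (γ*η) * (⟪D, V⟫ - ‖lam‖ * D2) ≤ (γ*η) * ⟪f' X, V⟫ :=
      mul_le_mul_of_nonneg_left hfv hθ0
    have h8 : γ*η*(‖lam‖*D2) ≤ γ*ρ*D2*‖lam‖ := by
      have h8b := mul_le_mul_of_nonneg_right hηρ
        (mul_nonneg (mul_nonneg hγ.le hlamnn) hD2nn)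
      linarith only [h8b]
    linarith only [hdesc', h5, h7, h8]
  rcases eq_or_ne (Nm V) 0 with hNV | hNV
  · have hV0 : V = 0 := by
      by_contra h
      exact absurd hNV (ne_of_gt (hVpos h))
    rw [hV0]
    simp only [inner_zero_right, smul_zero, sub_zero, sub_self, zero_add]
    constructor
    · positivity
    · have h9 : 0 ≤ Real.sqrt (8*β^2/γ) * Real.sqrt (γ*ρ*D2*‖lam‖) := by positivity
      have h10 : 0 ≤ (2/(γ*ρ)) * (γ*ρ*D2*‖lam‖) := by positivity
      linarith
  · have hN : 0 < Nm V := lt_of_le_of_ne hVNneg (Ne.symm hNV)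
    have hN2 : 0 < (Nm V)^2 := by positivity
    have hN2' : (Nm V)^2 ≠ 0 := ne_of_gt hN2
    rcases le_total ρ (⟪D, V⟫ / (Nm V)^2) with hcase | hcase
    · -- η = ρ
      have hηeq : η = ρ := by rw [hηdef]; exact min_eq_left hcase
      have hGN : ρ * (Nm V)^2 ≤ ⟪D, V⟫ := (le_div_iff₀ hN2).1 hcase
      rw [hηeq] at hmain
      have ht2 : γ*ρ/2 * ⟪D, V⟫ ≤
          f X - f (X - (γ*ρ) • V) + γ*ρ*D2*‖lam‖ := by
        linarith only [hmain,
          mul_le_mul_of_nonneg_left hGN (show (0:ℝ) ≤ γ*ρ/2 by positivity)]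
      have hT0 : 0 ≤ f X - f (X - (γ*ρ) • V) + γ*ρ*D2*‖lam‖ := by
        linarith only [ht2, mul_nonneg (mul_nonneg hγ.le hρ.le) hG0]
      rw [hηeq]
      refine ⟨hT0, ?_⟩
      have h10 : ⟪D, V⟫ ≤ (2/(γ*ρ)) *
          (f X - f (X - (γ*ρ) • V) + γ*ρ*D2*‖lam‖) := by
        rw [div_mul_eq_mul_div, le_div_iff₀ (by positivity : (0:ℝ) < γ*ρ)]
        nlinarith [ht2]
      have h11 : 0 ≤ Real.sqrt (8*β^2/γ) *
          Real.sqrt (f X - f (X - (γ*ρ) • V) + γ*ρ*D2*‖lam‖) := by positivity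
      linarith
    · -- η = ⟪D,V⟫/(Nm V)²
      have hηeq : η = ⟪D, V⟫ / (Nm V)^2 := by rw [hηdef]; exact min_eq_right hcase
      rw [hηeq] at hmain
      have hident : γ*(⟪D, V⟫/(Nm V)^2)*⟪D, V⟫
          - γ/2*(⟪D, V⟫/(Nm V)^2)^2*(Nm V)^2
          = γ*⟪D, V⟫^2/(2*(Nm V)^2) := by
        field_simp
        ring
      rw [hident] at hmain
      have hT0 : 0 ≤ f X - f (X - (γ*(⟪D, V⟫/(Nm V)^2)) • V) + γ*ρ*D2*‖lam‖ :=
        le_trans (div_nonneg (mul_nonneg hγ.le (sq_nonneg _)) (by positivity)) hmain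
      rw [hηeq]
      refine ⟨hT0, ?_⟩
      set T : ℝ := f X - f (X - (γ*(⟪D, V⟫/(Nm V)^2)) • V) + γ*ρ*D2*‖lam‖ with hTdef
      clear_value T
      have hN4 : (Nm V)^2 ≤ 4*β^2 := by
        nlinarith [mul_nonneg (show (0:ℝ) ≤ 2*β - Nm V by linarith only [hNmV])
          (show (0:ℝ) ≤ 2*β + Nm V by linarith only [hVNneg, hNmV])]
      have h2N : (0:ℝ) < 2*(Nm V)^2 := by linarith
      have h15 : γ*⟪D, V⟫^2 ≤ T*(2*(Nm V)^2) := by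
        rw [div_le_iff₀ h2N] at hmain
        linarith
      have hGsq : ⟪D, V⟫^2 ≤ (8*β^2/γ) * T := by
        have h16 : T*(2*(Nm V)^2) ≤ 8*β^2*T := by
          nlinarith [mul_le_mul_of_nonneg_left hN4 hT0]
        rw [show (8*β^2/γ) * T = 8*β^2*T/γ from by ring, le_div_iff₀ hγ]
        nlinarith [h15, h16]
      have h17 : ⟪D, V⟫ ≤ Real.sqrt ((8*β^2/γ)*T) := by
        calc ⟪D, V⟫ = Real.sqrt (⟪D, V⟫^2) := (Real.sqrt_sq hG0).symm
          _ ≤ _ := Real.sqrt_le_sqrt hGsq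
      rw [Real.sqrt_mul (by positivity) T] at h17
      have h18 : 0 ≤ (2/(γ*ρ))*T := by
        have h19 : (0:ℝ) ≤ 2/(γ*ρ) := by positivity
        exact mul_nonneg h19 hT0
      linarith

private lemma SCGSS_aux_gap {E : Type*} [NormedAddCommGroup E] [InnerProductSpace ℝ E]
    (Nm : E → ℝ)
    (hNmsmul : ∀ (a : ℝ) (z : E), Nm (a • z) = |a| * Nm z)
    (lmo : E → E)
    (hlmo : ∀ d : E, Nm (lmo d) ≤ 1 ∧ ∀ z : E, Nm z ≤ 1 → ⟪d, lmo d⟫ ≤ ⟪d, z⟫)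
    (f' : E → E) (β D2 : ℝ) (hβ : 0 < β)
    (hD2 : ∀ z w : E, Nm z ≤ β → Nm w ≤ β → ‖z - w‖ ≤ D2)
    (u X D : E) (hu : Nm u ≤ β) (hX : Nm X ≤ β) :
    ⟪f' X, X - u⟫ ≤ ⟪D, X - β • lmo D⟫ + D2 * ‖D - f' X‖ := by
  have h3 : ⟪f' X, X - u⟫ = ⟪D, X - u⟫ - ⟪D - f' X, X - u⟫ := by
    rw [inner_sub_left]; ring
  have h4 : ⟪D, X - u⟫ ≤ ⟪D, X - β • lmo D⟫ := by
    rw [inner_sub_right, inner_sub_right]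
    have := SCGSS_aux_dvpos Nm hNmsmul lmo hlmo β hβ D u hu
    linarith
  have h5 : -⟪D - f' X, X - u⟫ ≤ D2 * ‖D - f' X‖ := by
    have h6 := abs_real_inner_le_norm (D - f' X) (X - u)
    have h7 : ‖X - u‖ ≤ D2 := hD2 X u hX hu
    have h8 := neg_abs_le ⟪D - f' X, X - u⟫
    have h9 : ‖D - f' X‖ * ‖X - u‖ ≤ ‖D - f' X‖ * D2 :=
      mul_le_mul_of_nonneg_left h7 (norm_nonneg _)
    nlinarith [h6, h8, h9]
  linarith

private lemma SCGSS_alg1 (w q nn γ ρ D2 S' Δ : ℝ) (hq : q ≠ 0) (hn : nn ≠ 0)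
    (hγ : γ ≠ 0) (hρ : ρ ≠ 0) (hA : Δ + γ*ρ*D2*S' = q*q*nn) :
    (1/nn) * ((w/(2*q) + 2/(γ*ρ)) * (Δ + γ*ρ*D2*S') + D2*S' + nn*(w*q/2))
      = w*q + 2*(Δ + γ*ρ*D2*S')/(γ*ρ*nn) + D2*S'/nn := by
  rw [hA]
  field_simp
  ring

set_option maxHeartbeats 1000000 in

/-- Convergence of S³CG (Variant 1) on `βD`: for every `u ∈ βD`,
`(1/n)Σ_{k=1}^n E⟨∇f(x^k), x^k − u⟩ ≤ √(MΔ)/√(γn) + MΔ/(γρn) + √ε_n + ε_n/ρ`, where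
`ε_n = (1/n)Σ_k [M'ρE‖λ^k‖₂ + 4D₂²E‖λ^k‖₂²]`, `M = max{16β², 2}`,
`M' = max{16D₂β², 3D₂}`. -/
theorem SCGSS_variant1_rate
    {E : Type*} [NormedAddCommGroup E] [InnerProductSpace ℝ E] [FiniteDimensional ℝ E]
    {Ω : Type*} {mΩ : MeasurableSpace Ω} (μ : Measure Ω) [IsProbabilityMeasure μ]
    (ℱ : Filtration ℕ mΩ)
    -- the (possibly non-Euclidean) norm `‖·‖` on `E` (`‖·‖₂` is the inner-product norm)
    (Nm : E → ℝ)
    (hNm0 : Nm 0 = 0)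
    (hNmpos : ∀ z : E, z ≠ 0 → 0 < Nm z)
    (hNmsmul : ∀ (a : ℝ) (z : E), Nm (a • z) = |a| * Nm z)
    (hNmadd : ∀ z w : E, Nm (z + w) ≤ Nm z + Nm w)
    -- the dual norm `‖d‖_* = sup {⟨d,x⟩ : ‖x‖ ≤ 1}`
    (Dstar : E → ℝ)
    (hDstar : ∀ d : E, IsLUB ((fun z => ⟪d, z⟫) '' {z : E | Nm z ≤ 1}) (Dstar d))
    -- the linear minimization oracle `lmo(d) ∈ argmin {⟨d,x⟩ : ‖x‖ ≤ 1}`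
    (lmo : E → E)
    (hlmo : ∀ d : E, Nm (lmo d) ≤ 1 ∧ ∀ z : E, Nm z ≤ 1 → ⟪d, lmo d⟫ ≤ ⟪d, z⟫)
    -- `f` differentiable with gradient `f'`
    (f : E → ℝ) (f' : E → E)
    (hdiff : ∀ z, HasGradientAt f (f' z) z)
    -- `L`-smoothness and the associated descent inequality
    (L : ℝ) (hL : 0 < L)
    (hsmooth : ∀ z w : E, Dstar (f' z - f' w) ≤ L * Nm (z - w))
    (hdesc : ∀ z w : E, f w ≤ f z + ⟪f' z, w - z⟫ + L / 2 * (Nm (w - z)) ^ 2)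
    -- constraint radius and `f* = inf_{x ∈ βD} f(x) > -∞`
    (β : ℝ) (hβ : 0 < β)
    (fstar : ℝ) (hfstar : IsGLB (f '' {z : E | Nm z ≤ β}) fstar)
    (n : ℕ) (hn : 1 ≤ n)
    -- parameters: `γ ≤ 1/L`, `γρ ≤ 1`, `α ∈ (0,1]`
    (γ ρ σ : ℝ) (hγ : 0 < γ) (hρ : 0 < ρ) (hσ : 0 ≤ σ)
    (hγL : γ ≤ 1 / L) (hγρ : γ * ρ ≤ 1)
    (α : ℝ) (hα : 0 < α ∧ α ≤ 1)
    -- the iterates: `v^k = x^k − β·lmo(d^k)`, `η_k = min{ρ, ⟨d^k,v^k⟩/‖v^k‖²}`,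
    -- `x^{k+1} = x^k − γη_k v^k`, with `x¹ ∈ βD` deterministic
    (x d g : ℕ → Ω → E)
    (x1 : E) (hx1 : ∀ ω, x 1 ω = x1) (hx1mem : Nm x1 ≤ β)
    (hd0 : ∀ ω, d 0 ω = 0)
    (hd : ∀ k, 1 ≤ k → ∀ ω, d k ω = α • g k ω + (1 - α) • d (k - 1) ω)
    (hx : ∀ (k : ℕ) (ω : Ω), x (k + 1) ω =
      x k ω - (γ * min ρ (⟪d k ω, x k ω - β • lmo (d k ω)⟫ /
          (Nm (x k ω - β • lmo (d k ω))) ^ 2)) • (x k ω - β • lmo (d k ω)))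
    -- the filtration is generated by the iterates
    (hx_adapted : ∀ k, StronglyMeasurable[ℱ k] (x k))
    (hd_adapted : ∀ k, StronglyMeasurable[ℱ (k + 1)] (d k))
    -- the stochastic gradient is conditionally unbiased with variance at most `σ²`
    (hg_unbiased : ∀ k, 1 ≤ k → μ[g k | ℱ k] =ᵐ[μ] fun ω => f' (x k ω))
    (hg_var : ∀ k, 1 ≤ k →
      ∀ᵐ ω ∂μ, (μ[fun ω' => ‖g k ω' - f' (x k ω')‖ ^ 2 | ℱ k]) ω ≤ σ ^ 2)
    -- integrability of the quantities appearing in the statement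
    (herrint2 : ∀ k, Integrable (fun ω => ‖d k ω - f' (x k ω)‖ ^ 2) μ)
    (herrint1 : ∀ k, Integrable (fun ω => ‖d k ω - f' (x k ω)‖) μ)
    (hgapint : ∀ (k : ℕ) (u : E), Integrable (fun ω => ⟪f' (x k ω), x k ω - u⟫) μ)
    (hfint : ∀ k, Integrable (fun ω => f (x k ω)) μ)
    -- the Euclidean diameter `D₂` of `βD` and the constants `M`, `M'`, `ε_n`
    (D2 : ℝ) (hD2 : ∀ z w : E, Nm z ≤ β → Nm w ≤ β → ‖z - w‖ ≤ D2)
    (M M' : ℝ) (hM : M = max (16 * β ^ 2) 2) (hM' : M' = max (16 * D2 * β ^ 2) (3 * D2))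
    (εn : ℝ)
    (hεn : εn = (1 / (n : ℝ)) * ∑ k ∈ Finset.Icc 1 n,
      (M' * ρ * ∫ ω, ‖d k ω - f' (x k ω)‖ ∂μ
        + 4 * D2 ^ 2 * ∫ ω, ‖d k ω - f' (x k ω)‖ ^ 2 ∂μ)) :
    ∀ u : E, Nm u ≤ β →
      (1 / (n : ℝ)) * ∑ k ∈ Finset.Icc 1 n, ∫ ω, ⟪f' (x k ω), x k ω - u⟫ ∂μ
        ≤ Real.sqrt (M * (f x1 - fstar)) / Real.sqrt (γ * n)
          + M * (f x1 - fstar) / (γ * ρ * n)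
          + Real.sqrt εn + εn / ρ := by

  intro u hu
  have hNneg : ∀ z : E, 0 ≤ Nm z := SCGSS_aux_nonneg Nm hNm0 hNmpos
  have hD2nonneg : 0 ≤ D2 := by
    have := hD2 x1 x1 hx1mem hx1mem
    simpa using this
  have hM2 : (2:ℝ) ≤ M := hM ▸ le_max_right _ _
  have hM16 : 16 * β ^ 2 ≤ M := hM ▸ le_max_left _ _
  have hM'16 : 16 * D2 * β ^ 2 ≤ M' := hM' ▸ le_max_left _ _
  have hM'3 : 3 * D2 ≤ M' := hM' ▸ le_max_right _ _
  have hM'nonneg : 0 ≤ M' := le_trans (by positivity) hM'3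
  have hn' : (0:ℝ) < n := by
    have h0 : (1:ℝ) ≤ n := by exact_mod_cast hn
    linarith only [h0]
  have hLγ : L * γ ≤ 1 := by
    rw [le_div_iff₀ hL] at hγL; linarith only [hγL]
  have hΔ0 : 0 ≤ f x1 - fstar := by
    have h0 : fstar ≤ f x1 := hfstar.1 ⟨x1, hx1mem, rfl⟩
    linarith only [h0]
  have hmem : ∀ k, 1 ≤ k → ∀ ω, Nm (x k ω) ≤ β := by
    intro k hk
    induction k, hk using Nat.le_induction with
    | base => intro ω; rw [hx1]; exact hx1mem
    | succ k hk ih =>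
      intro ω
      rw [hx k ω]
      exact SCGSS_aux_mem Nm hNm0 hNmpos hNmsmul hNmadd lmo hlmo β γ ρ hβ hγ hρ hγρ
        (x k ω) (d k ω) (ih ω)
  have hkey : ∀ (k:ℕ) (ω:Ω), Nm (x k ω) ≤ β →
      0 ≤ f (x k ω) - f (x (k+1) ω) + γ*ρ*D2*‖d k ω - f' (x k ω)‖ ∧
      ⟪d k ω, x k ω - β • lmo (d k ω)⟫ ≤
        Real.sqrt (8*β^2/γ) *
          Real.sqrt (f (x k ω) - f (x (k+1) ω) + γ*ρ*D2*‖d k ω - f' (x k ω)‖)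
        + (2/(γ*ρ)) * (f (x k ω) - f (x (k+1) ω) + γ*ρ*D2*‖d k ω - f' (x k ω)‖) := by
    intro k ω hX
    rw [hx k ω]
    exact SCGSS_aux_key Nm hNm0 hNmpos hNmsmul hNmadd lmo hlmo f f' L β γ ρ D2
      hL hβ hγ hρ hLγ hD2nonneg hdesc hD2 (x k ω) (d k ω) hX
  have hpath : ∀ k, 1 ≤ k → ∀ ω, ⟪f' (x k ω), x k ω - u⟫ ≤
      Real.sqrt (8*β^2/γ) *
        Real.sqrt (f (x k ω) - f (x (k+1) ω) + γ*ρ*D2*‖d k ω - f' (x k ω)‖)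
      + (2/(γ*ρ)) * (f (x k ω) - f (x (k+1) ω) + γ*ρ*D2*‖d k ω - f' (x k ω)‖)
      + D2 * ‖d k ω - f' (x k ω)‖ := by
    intro k hk ω
    have hX : Nm (x k ω) ≤ β := hmem k hk ω
    have h1 := (hkey k ω hX).2
    have h2 := SCGSS_aux_gap Nm hNmsmul lmo hlmo f' β D2 hβ hD2
      u (x k ω) (d k ω) hu hX
    linarith
  have htInt : ∀ k:ℕ, Integrable
      (fun ω => f (x k ω) - f (x (k+1) ω) + γ*ρ*D2*‖d k ω - f' (x k ω)‖) μ :=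
    fun k => ((hfint k).sub (hfint (k+1))).add ((herrint1 k).const_mul _)
  have hSnn : ∀ k:ℕ, 0 ≤ ∫ ω, ‖d k ω - f' (x k ω)‖ ∂μ :=
    fun k => integral_nonneg fun ω => norm_nonneg _
  have hQnn : ∀ k:ℕ, 0 ≤ ∫ ω, ‖d k ω - f' (x k ω)‖^2 ∂μ :=
    fun k => integral_nonneg fun ω => sq_nonneg _
  have hS'ex : ∃ S' : ℝ, S' = ∑ k ∈ Finset.Icc 1 n, ∫ ω, ‖d k ω - f' (x k ω)‖ ∂μ :=
    ⟨_, rfl⟩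
  obtain ⟨S', hS'def⟩ := hS'ex
  have hS'0 : 0 ≤ S' := hS'def ▸ Finset.sum_nonneg fun k _ => hSnn k
  have hεnS : M' * ρ * S' ≤ n * εn := by
    rw [hεn, hS'def]
    rw [show (n:ℝ) * ((1/n) * ∑ k ∈ Finset.Icc 1 n,
        (M' * ρ * ∫ ω, ‖d k ω - f' (x k ω)‖ ∂μ
          + 4 * D2 ^ 2 * ∫ ω, ‖d k ω - f' (x k ω)‖ ^ 2 ∂μ)) =
        ∑ k ∈ Finset.Icc 1 n,
        (M' * ρ * ∫ ω, ‖d k ω - f' (x k ω)‖ ∂μ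
          + 4 * D2 ^ 2 * ∫ ω, ‖d k ω - f' (x k ω)‖ ^ 2 ∂μ) from by
      field_simp]
    rw [Finset.mul_sum]
    refine Finset.sum_le_sum fun k _ => ?_
    have h1 : 0 ≤ 4 * D2^2 * ∫ ω, ‖d k ω - f' (x k ω)‖^2 ∂μ :=
      mul_nonneg (by positivity) (hQnn k)
    linarith only [h1]
  have hεn0 : 0 ≤ εn := by
    have h1 : 0 ≤ M' * ρ * S' := mul_nonneg (mul_nonneg hM'nonneg hρ.le) hS'0
    have h2 : 0 ≤ (n:ℝ) * εn := le_trans h1 hεnS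
    have h3 : (n:ℝ)*0 ≤ (n:ℝ)*εn := by simpa using h2
    exact le_of_mul_le_mul_left h3 hn'

  have hteleF : ∀ m:ℕ, ∑ k ∈ Finset.Icc 1 m,
      ((∫ ω, f (x k ω) ∂μ) - (∫ ω, f (x (k+1) ω) ∂μ))
      = (∫ ω, f (x 1 ω) ∂μ) - (∫ ω, f (x (m+1) ω) ∂μ) := by
    intro m
    induction m with
    | zero => simp
    | succ m ih =>
      rw [Finset.sum_Icc_succ_top (by omega : 1 ≤ m+1), ih]
      ring
  have hF1 : (∫ ω, f (x 1 ω) ∂μ) = f x1 := by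
    simp only [hx1]
    simp
  have hFn : fstar ≤ ∫ ω, f (x (n+1) ω) ∂μ := by
    have h1 : ∀ ω, fstar ≤ f (x (n+1) ω) :=
      fun ω => hfstar.1 ⟨x (n+1) ω, hmem (n+1) (by omega) ω, rfl⟩
    calc fstar = ∫ _ω, fstar ∂μ := by simp
      _ ≤ _ := integral_mono (integrable_const _) (hfint (n+1)) h1
  have hTkeq : ∀ k:ℕ,
      (∫ ω, (f (x k ω) - f (x (k+1) ω) + γ*ρ*D2*‖d k ω - f' (x k ω)‖) ∂μ)
      = (∫ ω, f (x k ω) ∂μ) - (∫ ω, f (x (k+1) ω) ∂μ)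
        + γ*ρ*D2*(∫ ω, ‖d k ω - f' (x k ω)‖ ∂μ) := by
    intro k
    have hi1 : Integrable (fun ω => f (x k ω) - f (x (k+1) ω)) μ :=
      (hfint k).sub (hfint (k+1))
    have hi2 : Integrable (fun ω => γ*ρ*D2*‖d k ω - f' (x k ω)‖) μ :=
      (herrint1 k).const_mul _
    rw [integral_add hi1 hi2, integral_sub (hfint k) (hfint (k+1)),
      integral_const_mul]
  have hT'ex : ∃ T' : ℝ, T' = ∑ k ∈ Finset.Icc 1 n,
      ∫ ω, (f (x k ω) - f (x (k+1) ω) + γ*ρ*D2*‖d k ω - f' (x k ω)‖) ∂μ := ⟨_, rfl⟩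
  obtain ⟨T', hT'def⟩ := hT'ex
  have hT'A : T' ≤ (f x1 - fstar) + γ*ρ*D2*S' := by
    rw [hT'def]
    calc ∑ k ∈ Finset.Icc 1 n,
          ∫ ω, (f (x k ω) - f (x (k+1) ω) + γ*ρ*D2*‖d k ω - f' (x k ω)‖) ∂μ
        = ∑ k ∈ Finset.Icc 1 n,
            (((∫ ω, f (x k ω) ∂μ) - (∫ ω, f (x (k+1) ω) ∂μ))
              + γ*ρ*D2*(∫ ω, ‖d k ω - f' (x k ω)‖ ∂μ)) :=
          Finset.sum_congr rfl fun k _ => hTkeq k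
      _ = ((∫ ω, f (x 1 ω) ∂μ) - (∫ ω, f (x (n+1) ω) ∂μ)) + γ*ρ*D2*S' := by
          rw [Finset.sum_add_distrib, hteleF n, ← Finset.mul_sum, ← hS'def]
      _ ≤ (f x1 - fstar) + γ*ρ*D2*S' := by
          rw [hF1]; linarith only [hFn]
  have hTknn : ∀ k ∈ Finset.Icc 1 n,
      0 ≤ ∫ ω, (f (x k ω) - f (x (k+1) ω) + γ*ρ*D2*‖d k ω - f' (x k ω)‖) ∂μ :=
    fun k hk => integral_nonneg fun ω =>
      (hkey k ω (hmem k (Finset.mem_Icc.1 hk).1 ω)).1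
  have hT'0 : 0 ≤ T' := hT'def ▸ Finset.sum_nonneg hTknn
  have hA0 : 0 ≤ (f x1 - fstar) + γ*ρ*D2*S' := by
    have h1 : 0 ≤ γ*ρ*D2*S' := by positivity
    linarith only [h1, hΔ0]
  rcases hA0.lt_or_eq with hApos | hAzero
  · -- main case A > 0
    have hsex : ∃ s : ℝ, s = ((f x1 - fstar) + γ*ρ*D2*S') / n := ⟨_, rfl⟩
    obtain ⟨s, hsdef⟩ := hsex
    have hs : 0 < s := hsdef ▸ div_pos hApos hn'
    have hsq : 0 < Real.sqrt s := Real.sqrt_pos.2 hs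
    have hsqne : Real.sqrt s ≠ 0 := ne_of_gt hsq
    have hnne : (n:ℝ) ≠ 0 := ne_of_gt hn'
    have h4 : Real.sqrt s * Real.sqrt s = s := Real.mul_self_sqrt hs.le
    have hc1ex : ∃ c1 : ℝ, c1 = Real.sqrt (8*β^2/γ)/(2*Real.sqrt s) + 2/(γ*ρ) :=
      ⟨_, rfl⟩
    obtain ⟨c1, hc1def⟩ := hc1ex
    have hc10 : 0 ≤ c1 := hc1def ▸ by positivity
    have hKex : ∃ K : ℝ, K = Real.sqrt (8*β^2/γ) * Real.sqrt s / 2 := ⟨_, rfl⟩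
    obtain ⟨K, hKdef⟩ := hKex
    have hEk : ∀ k ∈ Finset.Icc 1 n,
        (∫ ω, ⟪f' (x k ω), x k ω - u⟫ ∂μ) ≤
          c1 * (∫ ω, (f (x k ω) - f (x (k+1) ω) + γ*ρ*D2*‖d k ω - f' (x k ω)‖) ∂μ)
          + D2 * (∫ ω, ‖d k ω - f' (x k ω)‖ ∂μ) + K := by
      intro k hk
      have hk1 : 1 ≤ k := (Finset.mem_Icc.1 hk).1
      have hptw : ∀ ω, ⟪f' (x k ω), x k ω - u⟫ ≤
          c1 * (f (x k ω) - f (x (k+1) ω) + γ*ρ*D2*‖d k ω - f' (x k ω)‖)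
          + D2 * ‖d k ω - f' (x k ω)‖ + K := by
        intro ω
        have h1 := hpath k hk1 ω
        have ht0 := (hkey k ω (hmem k hk1 ω)).1
        set t : ℝ := f (x k ω) - f (x (k+1) ω) + γ*ρ*D2*‖d k ω - f' (x k ω)‖
          with htdef
        clear_value t
        have h2 : Real.sqrt t ≤ (t + s)/(2*Real.sqrt s) :=
          SCGSS_sqrt_le_add t s ht0 hs
        have hc0 : 0 ≤ Real.sqrt (8*β^2/γ) := Real.sqrt_nonneg _
        have h3 : Real.sqrt (8*β^2/γ) * Real.sqrt t ≤
            Real.sqrt (8*β^2/γ) * ((t + s)/(2*Real.sqrt s)) :=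
          mul_le_mul_of_nonneg_left h2 hc0
        have hgen : ∀ cc q tt : ℝ, q ≠ 0 →
            cc*((tt + q*q)/(2*q)) = cc/(2*q)*tt + cc*q/2 := by
          intro cc q tt hq; field_simp
        have h5 := hgen (Real.sqrt (8*β^2/γ)) (Real.sqrt s) t hsqne
        rw [h4] at h5
        rw [← hKdef] at h5
        rw [hc1def]
        have h6 := h5 ▸ h3
        linarith only [h1, h6]
      have hi1 : Integrable (fun ω => c1 * (f (x k ω) - f (x (k+1) ω)
          + γ*ρ*D2*‖d k ω - f' (x k ω)‖)) μ := (htInt k).const_mul _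
      have hi2 : Integrable (fun ω => D2 * ‖d k ω - f' (x k ω)‖) μ :=
        (herrint1 k).const_mul _
      have hi12 : Integrable (fun ω => c1 * (f (x k ω) - f (x (k+1) ω)
          + γ*ρ*D2*‖d k ω - f' (x k ω)‖) + D2 * ‖d k ω - f' (x k ω)‖) μ :=
        hi1.add hi2
      refine le_trans (integral_mono (hgapint k u) ?_ hptw) ?_
      · exact hi12.add (integrable_const _)
      · rw [integral_add hi12 (integrable_const _), integral_add hi1 hi2,
          integral_const_mul, integral_const_mul, integral_const]
        simp
    have hsum : ∑ k ∈ Finset.Icc 1 n, ∫ ω, ⟪f' (x k ω), x k ω - u⟫ ∂μ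
        ≤ c1 * T' + D2 * S' + n * K := by
      calc ∑ k ∈ Finset.Icc 1 n, ∫ ω, ⟪f' (x k ω), x k ω - u⟫ ∂μ
          ≤ ∑ k ∈ Finset.Icc 1 n,
            (c1 * (∫ ω, (f (x k ω) - f (x (k+1) ω)
                + γ*ρ*D2*‖d k ω - f' (x k ω)‖) ∂μ)
              + D2 * (∫ ω, ‖d k ω - f' (x k ω)‖ ∂μ) + K) := Finset.sum_le_sum hEk
        _ = c1 * T' + D2 * S' + n * K := by
            rw [Finset.sum_add_distrib, Finset.sum_add_distrib,
              ← Finset.mul_sum, ← Finset.mul_sum, ← hT'def, ← hS'def,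
              Finset.sum_const, Nat.card_Icc]
            simp [nsmul_eq_mul]
    have hmainineq : (1/(n:ℝ)) * ∑ k ∈ Finset.Icc 1 n,
        ∫ ω, ⟪f' (x k ω), x k ω - u⟫ ∂μ
        ≤ Real.sqrt (8*β^2/γ) * Real.sqrt s
          + 2*((f x1 - fstar) + γ*ρ*D2*S')/(γ*ρ*n) + D2*S'/n := by
      have h1 : (1/(n:ℝ)) * ∑ k ∈ Finset.Icc 1 n, ∫ ω, ⟪f' (x k ω), x k ω - u⟫ ∂μ
          ≤ (1/(n:ℝ)) * (c1 * T' + D2 * S' + n * K) :=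
        mul_le_mul_of_nonneg_left hsum (by positivity)
      have hAs : (f x1 - fstar) + γ*ρ*D2*S' = Real.sqrt s * Real.sqrt s * n := by
        rw [h4, hsdef]; field_simp
      have h5 : (1/(n:ℝ)) * (c1 * ((f x1 - fstar) + γ*ρ*D2*S') + D2 * S' + n * K)
          = Real.sqrt (8*β^2/γ) * Real.sqrt s
            + 2*((f x1 - fstar) + γ*ρ*D2*S')/(γ*ρ*n) + D2*S'/n := by
        rw [hc1def, hKdef]
        exact SCGSS_alg1 (Real.sqrt (8*β^2/γ)) (Real.sqrt s) n γ ρ D2 S'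
          (f x1 - fstar) hsqne hnne hγ.ne' hρ.ne' hAs
      refine le_trans h1 ?_
      calc (1/(n:ℝ)) * (c1 * T' + D2 * S' + n * K)
          ≤ (1/(n:ℝ)) * (c1 * ((f x1 - fstar) + γ*ρ*D2*S') + D2 * S' + n * K) := by
            have h3 : c1 * T' ≤ c1 * ((f x1 - fstar) + γ*ρ*D2*S') :=
              mul_le_mul_of_nonneg_left hT'A hc10
            exact mul_le_mul_of_nonneg_left (by linarith only [h3]) (by positivity)
        _ = _ := h5
    have hsqrtsplit : Real.sqrt (8*β^2/γ) * Real.sqrt s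
        ≤ Real.sqrt (M*(f x1 - fstar))/Real.sqrt (γ*n) + Real.sqrt εn := by
      have h7 : Real.sqrt (8*β^2/γ) * Real.sqrt s = Real.sqrt ((8*β^2/γ) * s) :=
        (Real.sqrt_mul (by positivity) s).symm
      have h8 : (8*β^2/γ) * s = 8*β^2*(f x1 - fstar)/(γ*n) + 8*β^2*ρ*D2*S'/n := by
        rw [hsdef]
        field_simp
      have ha0 : 0 ≤ 8*β^2*(f x1 - fstar)/(γ*n) :=
        div_nonneg (mul_nonneg (by positivity) hΔ0) (by positivity)
      have hb0 : 0 ≤ 8*β^2*ρ*D2*S'/n := by positivity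
      have h9 : Real.sqrt (8*β^2*(f x1 - fstar)/(γ*n) + 8*β^2*ρ*D2*S'/n)
          ≤ Real.sqrt (8*β^2*(f x1 - fstar)/(γ*n))
            + Real.sqrt (8*β^2*ρ*D2*S'/n) := SCGSS_sqrt_add _ _ ha0 hb0
      have h11 : Real.sqrt (8*β^2*(f x1 - fstar)/(γ*n))
          ≤ Real.sqrt (M*(f x1 - fstar))/Real.sqrt (γ*n) := by
        rw [← Real.sqrt_div (mul_nonneg (by linarith) hΔ0) (γ*n)]
        apply Real.sqrt_le_sqrt
        refine (div_le_div_iff_of_pos_right (by positivity : (0:ℝ) < γ*n)).2 ?_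
        linarith only [mul_nonneg
          (show (0:ℝ) ≤ M - 8*β^2 by linarith only [hM16, sq_nonneg β]) hΔ0]
      have h14 : Real.sqrt (8*β^2*ρ*D2*S'/n) ≤ Real.sqrt εn := by
        apply Real.sqrt_le_sqrt
        rw [div_le_iff₀ hn']
        linarith only [hεnS,
          mul_le_mul_of_nonneg_right hM'16 (mul_nonneg hρ.le hS'0),
          mul_nonneg (mul_nonneg (mul_nonneg
            (show (0:ℝ) ≤ 8*β^2 by positivity) hρ.le) hD2nonneg) hS'0]
      calc Real.sqrt (8*β^2/γ) * Real.sqrt s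
          = Real.sqrt ((8*β^2/γ) * s) := h7
        _ = Real.sqrt (8*β^2*(f x1 - fstar)/(γ*n) + 8*β^2*ρ*D2*S'/n) := by rw [h8]
        _ ≤ Real.sqrt (8*β^2*(f x1 - fstar)/(γ*n))
            + Real.sqrt (8*β^2*ρ*D2*S'/n) := h9
        _ ≤ _ := by linarith only [h11, h14]
    have h2A : 2*((f x1 - fstar) + γ*ρ*D2*S')/(γ*ρ*n)
        = 2*(f x1 - fstar)/(γ*ρ*n) + 2*D2*S'/n := by
      field_simp
    have h2Δ : 2*(f x1 - fstar)/(γ*ρ*n) ≤ M*(f x1 - fstar)/(γ*ρ*n) := by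
      refine (div_le_div_iff_of_pos_right (by positivity : (0:ℝ) < γ*ρ*n)).2 ?_
      linarith only [mul_nonneg (show (0:ℝ) ≤ M - 2 by linarith only [hM2]) hΔ0]
    have h3D : 3*D2*S'/n ≤ εn/ρ := by
      rw [div_le_div_iff₀ hn' hρ]
      linarith only [hεnS,
        mul_le_mul_of_nonneg_right hM'3 (mul_nonneg hρ.le hS'0)]
    have h3D' : 2*D2*S'/(n:ℝ) + D2*S'/n ≤ εn/ρ := by
      have e : 2*D2*S'/(n:ℝ) + D2*S'/n = 3*D2*S'/n := by ring
      rw [e]; exact h3D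
    calc (1/(n:ℝ)) * ∑ k ∈ Finset.Icc 1 n, ∫ ω, ⟪f' (x k ω), x k ω - u⟫ ∂μ
        ≤ Real.sqrt (8*β^2/γ) * Real.sqrt s
          + 2*((f x1 - fstar) + γ*ρ*D2*S')/(γ*ρ*n) + D2*S'/n := hmainineq
      _ = Real.sqrt (8*β^2/γ) * Real.sqrt s + 2*(f x1 - fstar)/(γ*ρ*n)
          + (2*D2*S'/n + D2*S'/n) := by rw [h2A]; ring
      _ ≤ (Real.sqrt (M*(f x1 - fstar))/Real.sqrt (γ*n) + Real.sqrt εn)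
          + M*(f x1 - fstar)/(γ*ρ*n) + εn/ρ :=
        add_le_add (add_le_add hsqrtsplit h2Δ) h3D'
      _ = Real.sqrt (M*(f x1 - fstar))/Real.sqrt (γ*n)
          + M*(f x1 - fstar)/(γ*ρ*n) + Real.sqrt εn + εn/ρ := by ring
  · -- degenerate case A = 0
    have hAz : (f x1 - fstar) + γ*ρ*D2*S' = 0 := hAzero.symm
    have hγρD : 0 ≤ γ*ρ*D2*S' := by positivity
    have hΔz : f x1 - fstar = 0 := le_antisymm (by linarith only [hAz, hγρD]) hΔ0
    have hDS : D2*S' = 0 := by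
      have h2 : γ*ρ*(D2*S') = 0 := by linear_combination hAz - hΔz
      rcases mul_eq_zero.1 h2 with h3 | h3
      · exact absurd h3 (ne_of_gt (mul_pos hγ hρ))
      · exact h3
    have hT'z : T' = 0 := le_antisymm (by linarith only [hT'A, hAz]) hT'0
    have hTkz : ∀ k ∈ Finset.Icc 1 n,
        (∫ ω, (f (x k ω) - f (x (k+1) ω) + γ*ρ*D2*‖d k ω - f' (x k ω)‖) ∂μ) = 0 :=
      fun k hk => (Finset.sum_eq_zero_iff_of_nonneg hTknn).1
        (hT'def.symm.trans hT'z) k hk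
    have hEk0 : ∀ k ∈ Finset.Icc 1 n,
        (∫ ω, ⟪f' (x k ω), x k ω - u⟫ ∂μ) ≤
          D2 * ∫ ω, ‖d k ω - f' (x k ω)‖ ∂μ := by
      intro k hk
      have hk1 := (Finset.mem_Icc.1 hk).1
      have hnn : 0 ≤ fun ω =>
          (f (x k ω) - f (x (k+1) ω) + γ*ρ*D2*‖d k ω - f' (x k ω)‖) :=
        fun ω => (hkey k ω (hmem k hk1 ω)).1
      have hae := (integral_eq_zero_iff_of_nonneg hnn (htInt k)).1 (hTkz k hk)
      have hle : (fun ω => ⟪f' (x k ω), x k ω - u⟫) ≤ᵐ[μ]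
          fun ω => D2 * ‖d k ω - f' (x k ω)‖ := by
        filter_upwards [hae] with ω hω
        have hω' : f (x k ω) - f (x (k+1) ω) + γ*ρ*D2*‖d k ω - f' (x k ω)‖ = 0 := by
          simpa using hω
        have h1 := hpath k hk1 ω
        rw [hω'] at h1
        simpa using h1
      calc (∫ ω, ⟪f' (x k ω), x k ω - u⟫ ∂μ)
          ≤ ∫ ω, D2 * ‖d k ω - f' (x k ω)‖ ∂μ :=
            integral_mono_ae (hgapint k u) ((herrint1 k).const_mul D2) hle
        _ = D2 * ∫ ω, ‖d k ω - f' (x k ω)‖ ∂μ := integral_const_mul _ _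
    have hsum0 : ∑ k ∈ Finset.Icc 1 n, ∫ ω, ⟪f' (x k ω), x k ω - u⟫ ∂μ ≤ 0 := by
      calc ∑ k ∈ Finset.Icc 1 n, ∫ ω, ⟪f' (x k ω), x k ω - u⟫ ∂μ
          ≤ ∑ k ∈ Finset.Icc 1 n, D2 * ∫ ω, ‖d k ω - f' (x k ω)‖ ∂μ :=
            Finset.sum_le_sum hEk0
        _ = D2 * S' := by rw [hS'def, Finset.mul_sum]
        _ = 0 := hDS
    have hLHS : (1/(n:ℝ)) * ∑ k ∈ Finset.Icc 1 n,
        ∫ ω, ⟪f' (x k ω), x k ω - u⟫ ∂μ ≤ 0 := by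
      calc (1/(n:ℝ)) * ∑ k ∈ Finset.Icc 1 n, ∫ ω, ⟪f' (x k ω), x k ω - u⟫ ∂μ
          ≤ (1/(n:ℝ)) * 0 := mul_le_mul_of_nonneg_left hsum0 (by positivity)
        _ = 0 := mul_zero _
    have ht1 : 0 ≤ Real.sqrt (M*(f x1 - fstar))/Real.sqrt (γ*n) := by positivity
    have ht2 : M*(f x1 - fstar)/(γ*ρ*n) = 0 := by rw [hΔz]; simp
    have ht3 : 0 ≤ Real.sqrt εn := Real.sqrt_nonneg _
    have ht4 : 0 ≤ εn/ρ := div_nonneg hεn0 hρ.le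
    linarith only [hLHS, ht1, ht2, ht3, ht4]
end

section
/- Suppose f : E → ℝ is differentiable with L-smooth gradient with respect to ‖·‖, β > 0, f* := inf_{x ∈ βD} f(x) > −∞, Δ := f(x¹) − f*, and x¹ ∈ βD := {x : ‖x‖ ≤ β}. Consider the iterates of S³CG (Variant 2): v^k = x^k − β·lmo(d^k), η_k = min{ρ, ⟨d^k, v^k⟩/(4β²)}, x^{k+1} = x^k − γη_k v^k, with constant stepsize γ ≤ 1/L, γρ ≤ 1, α ∈ (0,1], where d^k = α·g_k + (1−α)·d^{k−1}, d⁰ = 0, and g_k is a conditionally unbiased stochastic gradient at x^k with conditional variance (in ‖·‖₂) at most σ². Let λ^k := d^k − ∇f(x^k), D₂ := sup{‖x − y‖₂ : x, y ∈ βD}, M := max{16β², 2}, M' := max{16D₂β², 3D₂}, and ε_n := (1/n)·Σ_{k=1}^n [ M'·ρ·E[‖λ^k‖₂] + 4D₂²·E[‖λ^k‖₂²] ]. Then for all u ∈ βD, (1/n)·Σ_{k=1}^n E[⟨∇f(x^k), x^k − u⟩] ≤ √(MΔ)/√(γn) + MΔ/(γρn) + √(ε_n) + ε_n/ρ. -/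
/-!
At a feasible iterate the step sees the Frank–Wolfe gap `h = ⟨d, x − β·lmo d⟩`, which dominates
`⟨d, x − u⟩` for every `u ∈ βD`; replacing `d` by `∇f(x)` there costs `D₂‖λ‖₂`. The descent
inequality with `γL ≤ 1` and `‖x − β·lmo d‖ ≤ 2β` shows that the step decreases `f` by at least
`γ(ηh − 2η²β²) − γρD₂‖λ‖₂`, and the choice `η = min{ρ, h/(4β²)}` makes this gain at least
`min{ρh/2, h²/(8β²)}`, so that `h ≤ (2/ρ + 4β²/t)·gain + t/2` for every `t > 0`. Summed over the
iterations the decreases telescope to at most `(f(x¹) − f*)/γ`. Taking expectations with `t` fixed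
keeps every bound linear; optimizing over `t` afterwards produces the square-root term.
-/

open MeasureTheory
open scoped RealInnerProductSpace

theorem le_two_mul_sqrt_mul_of_forall_le {a b c : ℝ} (hb : 0 ≤ b) (hc : 0 < c)
    (h : ∀ t > 0, a ≤ b / t + c * t) : a ≤ 2 * √(b * c) := by
  rcases hb.eq_or_lt with rfl | hb
  · simp only [zero_mul, Real.sqrt_zero, mul_zero]
    refine le_of_forall_pos_le_add fun ε hε ↦ ?_
    simpa [mul_div_cancel₀ _ hc.ne'] using h (ε / c) (by positivity)
  · have hsb := Real.sq_sqrt hb.le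
    have hsc := Real.sq_sqrt hc.le
    calc a ≤ b / (√b / √c) + c * (√b / √c) := h _ (by positivity)
      _ = 2 * (√b * √c) := by
        rw [← hsb, ← hsc]
        field_simp
        rw [Real.sqrt_sq (by positivity), Real.sqrt_sq (by positivity)]
        ring
      _ = 2 * √(b * c) := by rw [Real.sqrt_mul hb.le]

theorem le_mul_min_step_gain_add {h ρ β t : ℝ} (hh : 0 ≤ h) (hρ : 0 < ρ) (hβ : 0 < β)
    (ht : 0 < t) :
    h ≤ (2 / ρ + 4 * β ^ 2 / t) * (min ρ (h / (4 * β ^ 2)) * h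
      - 2 * min ρ (h / (4 * β ^ 2)) ^ 2 * β ^ 2) + t / 2 := by
  have hβ2 : 0 < 4 * β ^ 2 := by positivity
  rcases le_total ρ (h / (4 * β ^ 2)) with hle | hle
  · rw [min_eq_left hle]
    have hρh : ρ * (4 * β ^ 2) ≤ h := (le_div_iff₀ hβ2).1 hle
    have hgain : ρ * h / 2 ≤ ρ * h - 2 * ρ ^ 2 * β ^ 2 := by nlinarith
    have hgain0 : 0 ≤ ρ * h - 2 * ρ ^ 2 * β ^ 2 := (by positivity : 0 ≤ ρ * h / 2).trans hgain
    calc h = 2 / ρ * (ρ * h / 2) := by field_simp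
      _ ≤ 2 / ρ * (ρ * h - 2 * ρ ^ 2 * β ^ 2) := by gcongr
      _ ≤ (2 / ρ + 4 * β ^ 2 / t) * (ρ * h - 2 * ρ ^ 2 * β ^ 2) + t / 2 := by
        nlinarith [mul_nonneg (by positivity : 0 ≤ 4 * β ^ 2 / t) hgain0]
  · rw [min_eq_right hle]
    have hgain :
        h / (4 * β ^ 2) * h - 2 * (h / (4 * β ^ 2)) ^ 2 * β ^ 2 = h ^ 2 / (8 * β ^ 2) := by
      field_simp
      ring
    rw [hgain]
    have hamgm : h ≤ h ^ 2 / (2 * t) + t / 2 := by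
      rw [div_add_div _ _ (by positivity) two_ne_zero, le_div_iff₀ (by positivity)]
      nlinarith [sq_nonneg (h - t)]
    calc h ≤ 4 * β ^ 2 / t * (h ^ 2 / (8 * β ^ 2)) + t / 2 := by
          convert hamgm using 2
          field_simp
          ring
      _ ≤ (2 / ρ + 4 * β ^ 2 / t) * (h ^ 2 / (8 * β ^ 2)) + t / 2 := by
        gcongr
        exact le_add_of_nonneg_left (by positivity)

theorem sum_integral_le_of_forall_sum_le {Ω ι : Type*} {mΩ : MeasurableSpace Ω}
    {μ : Measure Ω} [IsProbabilityMeasure μ] {s : Finset ι} {G e : ι → Ω → ℝ} {a b : ℝ}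
    (hG : ∀ i ∈ s, Integrable (G i) μ) (he : ∀ i ∈ s, Integrable (e i) μ)
    (h : ∀ ω, ∑ i ∈ s, G i ω ≤ a + b * ∑ i ∈ s, e i ω) :
    ∑ i ∈ s, ∫ ω, G i ω ∂μ ≤ a + b * ∑ i ∈ s, ∫ ω, e i ω ∂μ := by
  have he' := integrable_finsetSum s he
  rw [← integral_finsetSum s hG, ← integral_finsetSum s he]
  calc ∫ ω, ∑ i ∈ s, G i ω ∂μ ≤ ∫ ω, (a + b * ∑ i ∈ s, e i ω) ∂μ :=
        integral_mono (integrable_finsetSum s hG) ((integrable_const a).add (he'.const_mul b)) h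
    _ = a + b * ∫ ω, ∑ i ∈ s, e i ω ∂μ := by
        rw [integral_add (integrable_const a) (he'.const_mul b), integral_const,
          integral_const_mul, probReal_univ, one_smul]

noncomputable def s3cgStep {E : Type*} [NormedAddCommGroup E] [InnerProductSpace ℝ E]
    (lmo : E → E) (β γ ρ : ℝ) (x d : E) : E :=
  x - (γ * min ρ (⟪d, x - β • lmo d⟫ / (4 * β ^ 2))) • (x - β • lmo d)

section Step

variable {E : Type*} [NormedAddCommGroup E] [InnerProductSpace ℝ E] {p : Seminorm ℝ E}
  {f : E → ℝ} {f' : E → E} {L β γ ρ D2 : ℝ}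

theorem inner_smul_le_of_forall_inner_le (hβ : 0 < β) {d w z : E}
    (hw : ∀ y, p y ≤ 1 → ⟪d, w⟫ ≤ ⟪d, y⟫) (hz : p z ≤ β) : ⟪d, β • w⟫ ≤ ⟪d, z⟫ := by
  have hz' : p (β⁻¹ • z) ≤ 1 := by
    rw [map_smul_eq_mul, Real.norm_eq_abs, abs_of_pos (inv_pos.2 hβ)]
    exact inv_mul_le_one_of_le₀ hz hβ.le
  have := mul_le_mul_of_nonneg_left (hw _ hz') hβ.le
  rwa [real_inner_smul_right, mul_inv_cancel_left₀ hβ.ne', ← real_inner_smul_right] at this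

theorem inner_sub_le_inner_sub_smul (hβ : 0 < β) {d w u x : E}
    (hw : ∀ y, p y ≤ 1 → ⟪d, w⟫ ≤ ⟪d, y⟫) (hu : p u ≤ β) :
    ⟪d, x - u⟫ ≤ ⟪d, x - β • w⟫ := by
  rw [inner_sub_right, inner_sub_right]
  linarith [inner_smul_le_of_forall_inner_le hβ hw hu]

theorem inner_sub_smul_nonneg (hβ : 0 < β) {d w x : E}
    (hw : ∀ y, p y ≤ 1 → ⟪d, w⟫ ≤ ⟪d, y⟫) (hx : p x ≤ β) : 0 ≤ ⟪d, x - β • w⟫ := by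
  simpa using inner_sub_le_inner_sub_smul hβ hw hx (x := x)

theorem step_gain_le_of_descent (hγ : 0 < γ) (hL : 0 ≤ L) (hγL : γ * L ≤ 1)
    {x v d : E} {η : ℝ} (hη : 0 ≤ η) (hηρ : η ≤ ρ) (hpv : p v ≤ 2 * β) (hv : ‖v‖ ≤ D2)
    (hdesc : ∀ y, f y ≤ f x + ⟪f' x, y - x⟫ + L / 2 * p (y - x) ^ 2) :
    η * ⟪d, v⟫ - 2 * η ^ 2 * β ^ 2
      ≤ (f x - f (x - (γ * η) • v)) / γ + ρ * D2 * ‖d - f' x‖ := by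
  have hγη : 0 ≤ γ * η := by positivity
  have hdesc := hdesc (x - (γ * η) • v)
  have hstep : x - (γ * η) • v - x = -((γ * η) • v) := by abel
  rw [hstep, inner_neg_right, real_inner_smul_right, map_neg_eq_map, map_smul_eq_mul,
    Real.norm_eq_abs, abs_of_nonneg hγη] at hdesc
  have herr : ⟪d - f' x, v⟫ ≤ ‖d - f' x‖ * D2 :=
    (real_inner_le_norm _ _).trans (mul_le_mul_of_nonneg_left hv (norm_nonneg _))
  have hsplit : ⟪f' x, v⟫ = ⟪d, v⟫ - ⟪d - f' x, v⟫ := by rw [inner_sub_left]; ring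
  have hquad : L / 2 * (γ * η * p v) ^ 2 ≤ 2 * γ * η ^ 2 * β ^ 2 := by
    have := pow_le_pow_left₀ (apply_nonneg p v) hpv 2
    nlinarith [mul_le_mul_of_nonneg_right hγL (by positivity : 0 ≤ 2 * γ * η ^ 2 * β ^ 2),
      mul_le_mul_of_nonneg_left this (by positivity : 0 ≤ L / 2 * (γ * η) ^ 2)]
  have hD2 : 0 ≤ D2 := (norm_nonneg v).trans hv
  have hcross : γ * η * (‖d - f' x‖ * D2) ≤ γ * ρ * (‖d - f' x‖ * D2) := by gcongr
  have hgain : γ * (η * ⟪d, v⟫ - 2 * η ^ 2 * β ^ 2)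
      ≤ f x - f (x - (γ * η) • v) + γ * (ρ * D2 * ‖d - f' x‖) := by
    have := mul_le_mul_of_nonneg_left herr hγη
    rw [hsplit] at hdesc
    linarith
  rw [div_add' _ _ _ hγ.ne', le_div_iff₀ hγ]
  linarith

theorem apply_smul_le (hβ : 0 ≤ β) {w : E} (hw : p w ≤ 1) : p (β • w) ≤ β := by
  rw [map_smul_eq_mul, Real.norm_eq_abs, abs_of_nonneg hβ]
  exact mul_le_of_le_one_right hβ hw

variable {lmo : E → E} {x d : E}

theorem apply_s3cgStep_le (hβ : 0 < β) (hγ : 0 ≤ γ) (hρ : 0 ≤ ρ) (hγρ : γ * ρ ≤ 1)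
    (hlmo : p (lmo d) ≤ 1 ∧ ∀ y, p y ≤ 1 → ⟪d, lmo d⟫ ≤ ⟪d, y⟫) (hx : p x ≤ β) :
    p (s3cgStep lmo β γ ρ x d) ≤ β := by
  set η := min ρ (⟪d, x - β • lmo d⟫ / (4 * β ^ 2))
  have hη : 0 ≤ η := le_min hρ (by have := inner_sub_smul_nonneg hβ hlmo.2 hx; positivity)
  have hθ : γ * η ≤ 1 := (mul_le_mul_of_nonneg_left (min_le_left _ _) hγ).trans hγρ
  have hw : β • lmo d ∈ p.closedBall 0 β :=
    p.mem_closedBall_zero.2 (apply_smul_le hβ.le hlmo.1)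
  have hstep : s3cgStep lmo β γ ρ x d = x + (γ * η) • (β • lmo d - x) := by
    unfold s3cgStep
    module
  rw [hstep, ← p.mem_closedBall_zero]
  exact (p.convex_closedBall 0 β).add_smul_sub_mem (p.mem_closedBall_zero.2 hx) hw
    ⟨by positivity, hθ⟩

theorem s3cgStep_gap_le (hβ : 0 < β) (hγ : 0 < γ) (hρ : 0 < ρ) (hL : 0 ≤ L)
    (hγL : γ * L ≤ 1) (hlmo : p (lmo d) ≤ 1 ∧ ∀ y, p y ≤ 1 → ⟪d, lmo d⟫ ≤ ⟪d, y⟫)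
    (hdesc : ∀ y, f y ≤ f x + ⟪f' x, y - x⟫ + L / 2 * p (y - x) ^ 2)
    (hD2 : ∀ z w, p z ≤ β → p w ≤ β → ‖z - w‖ ≤ D2) (hx : p x ≤ β) {u : E} (hu : p u ≤ β)
    {t : ℝ} (ht : 0 < t) :
    ⟪f' x, x - u⟫ ≤ (2 / ρ + 4 * β ^ 2 / t) * ((f x - f (s3cgStep lmo β γ ρ x d)) / γ
      + ρ * D2 * ‖d - f' x‖) + t / 2 + D2 * ‖d - f' x‖ := by
  set h := ⟪d, x - β • lmo d⟫
  have hh : 0 ≤ h := inner_sub_smul_nonneg hβ hlmo.2 hx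
  have hw : p (β • lmo d) ≤ β := apply_smul_le hβ.le hlmo.1
  have hpv : p (x - β • lmo d) ≤ 2 * β := (map_sub_le_add p _ _).trans (by linarith)
  have hgain := step_gain_le_of_descent (d := d) (η := min ρ (h / (4 * β ^ 2))) hγ hL hγL
    (le_min hρ.le (by positivity)) (min_le_left _ _) hpv (hD2 _ _ hx hw) hdesc
  have herr : -(‖d - f' x‖ * D2) ≤ ⟪d - f' x, x - u⟫ :=
    (neg_le_neg ((abs_real_inner_le_norm _ _).trans
      (mul_le_mul_of_nonneg_left (hD2 _ _ hx hu) (norm_nonneg _)))).trans (neg_abs_le _)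
  calc ⟪f' x, x - u⟫ = ⟪d, x - u⟫ - ⟪d - f' x, x - u⟫ := by rw [inner_sub_left]; ring
    _ ≤ h + D2 * ‖d - f' x‖ := by
      linarith [inner_sub_le_inner_sub_smul hβ hlmo.2 hu (x := x)]
    _ ≤ _ := by
      gcongr
      exact (le_mul_min_step_gain_add hh hρ hβ ht).trans (by gcongr; exact hgain)

theorem s3cg_sum_gap_le (hβ : 0 < β) (hγ : 0 < γ) (hρ : 0 < ρ) (hL : 0 ≤ L)
    (hγL : γ * L ≤ 1) (hγρ : γ * ρ ≤ 1)
    (hlmo : ∀ d, p (lmo d) ≤ 1 ∧ ∀ y, p y ≤ 1 → ⟪d, lmo d⟫ ≤ ⟪d, y⟫)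
    (hdesc : ∀ z w, f w ≤ f z + ⟪f' z, w - z⟫ + L / 2 * p (w - z) ^ 2)
    (hD2 : ∀ z w, p z ≤ β → p w ≤ β → ‖z - w‖ ≤ D2)
    {fstar : ℝ} (hfstar : ∀ z, p z ≤ β → fstar ≤ f z)
    {x d : ℕ → E} (hx1 : p (x 1) ≤ β) (hx : ∀ k, x (k + 1) = s3cgStep lmo β γ ρ (x k) (d k))
    {n : ℕ} (hn : 1 ≤ n) {u : E} (hu : p u ≤ β) {t : ℝ} (ht : 0 < t) :
    ∑ k ∈ Finset.Icc 1 n, ⟪f' (x k), x k - u⟫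
      ≤ (2 / ρ + 4 * β ^ 2 / t) * ((f (x 1) - fstar) / γ
          + ρ * D2 * ∑ k ∈ Finset.Icc 1 n, ‖d k - f' (x k)‖)
        + n * (t / 2) + D2 * ∑ k ∈ Finset.Icc 1 n, ‖d k - f' (x k)‖ := by
  have hfeas : ∀ k, 1 ≤ k → p (x k) ≤ β := fun k hk ↦ by
    induction k, hk using Nat.le_induction with
    | base => exact hx1
    | succ k _ ih => exact hx k ▸ apply_s3cgStep_le hβ hγ.le hρ.le hγρ (hlmo _) ih
  have htele : ∑ k ∈ Finset.Icc 1 n, (f (x k) - f (x (k + 1))) = f (x 1) - f (x (n + 1)) := by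
    rw [← neg_sub, ← Finset.sum_Icc_sub hn (fun k ↦ f (x k)), ← Finset.sum_neg_distrib]
    simp only [neg_sub]
  calc ∑ k ∈ Finset.Icc 1 n, ⟪f' (x k), x k - u⟫
      ≤ ∑ k ∈ Finset.Icc 1 n, ((2 / ρ + 4 * β ^ 2 / t) * ((f (x k) - f (x (k + 1))) / γ
          + ρ * D2 * ‖d k - f' (x k)‖) + t / 2 + D2 * ‖d k - f' (x k)‖) := by
        refine Finset.sum_le_sum fun k hk ↦ ?_
        rw [hx k]
        exact s3cgStep_gap_le hβ hγ hρ hL hγL (hlmo _) (hdesc _) hD2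
          (hfeas k (Finset.mem_Icc.1 hk).1) hu ht
    _ = (2 / ρ + 4 * β ^ 2 / t) * ((f (x 1) - f (x (n + 1))) / γ
          + ρ * D2 * ∑ k ∈ Finset.Icc 1 n, ‖d k - f' (x k)‖)
        + n * (t / 2) + D2 * ∑ k ∈ Finset.Icc 1 n, ‖d k - f' (x k)‖ := by
        simp only [Finset.sum_add_distrib, ← Finset.mul_sum, ← Finset.sum_div, htele,
          Finset.sum_const, Nat.card_Icc, nsmul_eq_mul]
        push_cast
        ring
    _ ≤ _ := by
        gcongr
        exact hfstar _ (hfeas _ (by omega))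

end Step

theorem avg_le_of_forall_le {A S Δ β γ ρ D2 N : ℝ} (hN : 0 < N) (hγ : 0 < γ) (hρ : 0 < ρ)
    (hΔ : 0 ≤ Δ) (hS : 0 ≤ S) (hD2 : 0 ≤ D2)
    (h : ∀ t > 0, A ≤ (2 / ρ + 4 * β ^ 2 / t) * (Δ / γ + ρ * D2 * S) + N * (t / 2) + D2 * S) :
    1 / N * A ≤ 2 / ρ * (Δ / (γ * N) + ρ * D2 * (S / N)) + D2 * (S / N)
      + √(8 * β ^ 2 * (Δ / (γ * N) + ρ * D2 * (S / N))) := by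
  set s := S / N
  set b := Δ / (γ * N) + ρ * D2 * s
  have hopt : 1 / N * A - 2 / ρ * b - D2 * s ≤ 2 * √(4 * β ^ 2 * b * (1 / 2)) := by
    refine le_two_mul_sqrt_mul_of_forall_le (by positivity) one_half_pos fun t ht ↦ ?_
    have hNb : Δ / γ + ρ * D2 * S = N * b := by simp only [b, s]; field_simp
    have hNs : S = N * s := by simp only [s]; field_simp
    have := h t ht
    rw [hNb, hNs] at this
    have hA : 1 / N * A ≤ 2 / ρ * b + D2 * s + (4 * β ^ 2 * b / t + 1 / 2 * t) :=
      calc 1 / N * A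
          ≤ 1 / N * ((2 / ρ + 4 * β ^ 2 / t) * (N * b) + N * (t / 2) + D2 * (N * s)) := by
            gcongr
        _ = 2 / ρ * b + D2 * s + (4 * β ^ 2 * b / t + 1 / 2 * t) := by field_simp; ring
    linarith
  have hsqrt : 2 * √(4 * β ^ 2 * b * (1 / 2)) = √(8 * β ^ 2 * b) := by
    rw [show 8 * β ^ 2 * b = 2 ^ 2 * (4 * β ^ 2 * b * (1 / 2)) by ring,
      Real.sqrt_mul (by positivity : (0 : ℝ) ≤ 2 ^ 2), Real.sqrt_sq two_pos.le]
  linarith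

theorem s3cg_rate_of_avg_le {a s Δ β γ ρ D2 M M' ε N : ℝ} (hN : 0 < N) (hγ : 0 < γ)
    (hρ : 0 < ρ) (hΔ : 0 ≤ Δ) (hs : 0 ≤ s) (hD2 : 0 ≤ D2)
    (hM : M = max (16 * β ^ 2) 2) (hM' : M' = max (16 * D2 * β ^ 2) (3 * D2))
    (hε : M' * ρ * s ≤ ε)
    (h : a ≤ 2 / ρ * (Δ / (γ * N) + ρ * D2 * s) + D2 * s
      + √(8 * β ^ 2 * (Δ / (γ * N) + ρ * D2 * s))) :
    a ≤ √(M * Δ) / √(γ * N) + M * Δ / (γ * ρ * N) + √ε + ε / ρ := by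
  have hM16 : 16 * β ^ 2 ≤ M := hM ▸ le_max_left _ _
  have hM2 : 2 ≤ M := hM ▸ le_max_right _ _
  have hM'16 : 16 * D2 * β ^ 2 ≤ M' := hM' ▸ le_max_left _ _
  have hM'3 : 3 * D2 ≤ M' := hM' ▸ le_max_right _ _
  have hsqrt : √(8 * β ^ 2 * (Δ / (γ * N) + ρ * D2 * s)) ≤ √(M * Δ) / √(γ * N) + √ε := by
    have hε0 : 0 ≤ ε := (mul_nonneg (mul_nonneg (by linarith) hρ.le) hs).trans hε
    have hMΔ : 8 * β ^ 2 * (Δ / (γ * N)) ≤ M * Δ / (γ * N) := by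
      rw [mul_div_assoc]
      exact mul_le_mul_of_nonneg_right (by nlinarith) (by positivity)
    have hM'ρ : 8 * β ^ 2 * (ρ * D2 * s) ≤ M' * ρ * s := by
      nlinarith [mul_le_mul_of_nonneg_right hM'16 (by positivity : 0 ≤ ρ * s),
        mul_nonneg (mul_nonneg (by linarith : 0 ≤ D2) (sq_nonneg β)) (by positivity : 0 ≤ ρ * s)]
    rw [← Real.sqrt_div' _ (by positivity : 0 ≤ γ * N), Real.sqrt_le_iff]
    refine ⟨by positivity, ?_⟩
    nlinarith [Real.sq_sqrt (by positivity : 0 ≤ M * Δ / (γ * N)), Real.sq_sqrt hε0,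
      mul_nonneg (Real.sqrt_nonneg (M * Δ / (γ * N))) (Real.sqrt_nonneg ε)]
  have hbias : 2 / ρ * (Δ / (γ * N) + ρ * D2 * s) ≤ M * Δ / (γ * ρ * N) + 2 * D2 * s := by
    rw [show 2 / ρ * (Δ / (γ * N) + ρ * D2 * s) = 2 * Δ / (γ * ρ * N) + 2 * D2 * s by
      field_simp]
    gcongr
  have herr : 3 * D2 * s ≤ ε / ρ := by
    rw [le_div_iff₀ hρ]
    nlinarith [mul_le_mul_of_nonneg_right hM'3 (by positivity : 0 ≤ s * ρ)]
  linarith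

theorem SCGSS_variant2_rate_general
    {E : Type*} [NormedAddCommGroup E] [InnerProductSpace ℝ E]
    {Ω : Type*} {mΩ : MeasurableSpace Ω} (μ : Measure Ω) [IsProbabilityMeasure μ]
    -- the (possibly non-Euclidean) norm `‖·‖` on `E` (`‖·‖₂` is the inner-product norm)
    (Nm : E → ℝ)
    (hNmsmul : ∀ (a : ℝ) (z : E), Nm (a • z) = |a| * Nm z)
    (hNmadd : ∀ z w : E, Nm (z + w) ≤ Nm z + Nm w)
    -- the linear minimization oracle `lmo(d) ∈ argmin {⟨d,x⟩ : ‖x‖ ≤ 1}`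
    (lmo : E → E)
    (hlmo : ∀ d : E, Nm (lmo d) ≤ 1 ∧ ∀ z : E, Nm z ≤ 1 → ⟪d, lmo d⟫ ≤ ⟪d, z⟫)
    (f : E → ℝ) (f' : E → E)
    -- `L`-smoothness and the associated descent inequality
    (L : ℝ) (hL : 0 < L)
    (hdesc : ∀ z w : E, f w ≤ f z + ⟪f' z, w - z⟫ + L / 2 * (Nm (w - z)) ^ 2)
    -- constraint radius and `f* = inf_{x ∈ βD} f(x) > -∞`
    (β : ℝ) (hβ : 0 < β)
    (fstar : ℝ) (hfstar : IsGLB (f '' {z : E | Nm z ≤ β}) fstar)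
    (n : ℕ) (hn : 1 ≤ n)
    -- parameters: `γ ≤ 1/L`, `γρ ≤ 1`, `α ∈ (0,1]`
    (γ ρ : ℝ) (hγ : 0 < γ) (hρ : 0 < ρ)
    (hγL : γ ≤ 1 / L) (hγρ : γ * ρ ≤ 1)
    -- the iterates: `v^k = x^k − β·lmo(d^k)`, `η_k = min{ρ, ⟨d^k,v^k⟩/(4β²)}`,
    -- `x^{k+1} = x^k − γη_k v^k`, with `x¹ ∈ βD` deterministic
    (x d : ℕ → Ω → E)
    (x1 : E) (hx1 : ∀ ω, x 1 ω = x1) (hx1mem : Nm x1 ≤ β)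
    (hx : ∀ (k : ℕ) (ω : Ω), x (k + 1) ω =
      x k ω - (γ * min ρ (⟪d k ω, x k ω - β • lmo (d k ω)⟫ /
          (4 * β ^ 2))) • (x k ω - β • lmo (d k ω)))
    -- integrability of the quantities appearing in the statement
    (herrint1 : ∀ k, Integrable (fun ω => ‖d k ω - f' (x k ω)‖) μ)
    (hgapint : ∀ (k : ℕ) (u : E), Integrable (fun ω => ⟪f' (x k ω), x k ω - u⟫) μ)
    -- the Euclidean diameter `D₂` of `βD` and the constants `M`, `M'`, `ε_n`
    (D2 : ℝ) (hD2 : ∀ z w : E, Nm z ≤ β → Nm w ≤ β → ‖z - w‖ ≤ D2)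
    (M M' : ℝ) (hM : M = max (16 * β ^ 2) 2) (hM' : M' = max (16 * D2 * β ^ 2) (3 * D2))
    (εn : ℝ)
    (hεn : εn = (1 / (n : ℝ)) * ∑ k ∈ Finset.Icc 1 n,
      (M' * ρ * ∫ ω, ‖d k ω - f' (x k ω)‖ ∂μ
        + 4 * D2 ^ 2 * ∫ ω, ‖d k ω - f' (x k ω)‖ ^ 2 ∂μ)) :
    ∀ u : E, Nm u ≤ β →
      (1 / (n : ℝ)) * ∑ k ∈ Finset.Icc 1 n, ∫ ω, ⟪f' (x k ω), x k ω - u⟫ ∂μ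
        ≤ Real.sqrt (M * (f x1 - fstar)) / Real.sqrt (γ * n)
          + M * (f x1 - fstar) / (γ * ρ * n)
          + Real.sqrt εn + εn / ρ := by
  intro u hu
  let p : Seminorm ℝ E := Seminorm.of Nm hNmadd fun a z ↦ by rw [hNmsmul, Real.norm_eq_abs]
  have hΔ : 0 ≤ f x1 - fstar := sub_nonneg.2 (hfstar.1 ⟨x1, hx1mem, rfl⟩)
  have hD2nn : 0 ≤ D2 := (norm_nonneg _).trans (hD2 x1 x1 hx1mem hx1mem)
  have hγL : γ * L ≤ 1 := (le_div_iff₀ hL).1 hγL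
  have hε : M' * ρ * ((∑ k ∈ Finset.Icc 1 n, ∫ ω, ‖d k ω - f' (x k ω)‖ ∂μ) / n) ≤ εn := by
    rw [hεn, mul_div_assoc', div_eq_inv_mul, one_div]
    refine mul_le_mul_of_nonneg_left ?_ (by positivity)
    rw [Finset.mul_sum]
    exact Finset.sum_le_sum fun k _ ↦ le_add_of_nonneg_right
      (mul_nonneg (by positivity) (integral_nonneg fun ω ↦ by positivity))
  refine s3cg_rate_of_avg_le (by positivity) hγ hρ hΔ (by positivity) hD2nn hM hM' hε
    (avg_le_of_forall_le (by positivity) hγ hρ hΔ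
      (Finset.sum_nonneg fun k _ ↦ integral_nonneg fun ω ↦ norm_nonneg _) hD2nn
      fun t ht ↦ ((sum_integral_le_of_forall_sum_le
        (a := (2 / ρ + 4 * β ^ 2 / t) * ((f x1 - fstar) / γ) + n * (t / 2))
        (b := (2 / ρ + 4 * β ^ 2 / t) * (ρ * D2) + D2) (fun k _ ↦ hgapint k u)
        (fun k _ ↦ herrint1 k) fun ω ↦ ?_).trans_eq (by ring)))
  have := s3cg_sum_gap_le (p := p) (x := (x · ω)) hβ hγ hρ hL.le hγL hγρ hlmo hdesc hD2
    (fun z hz ↦ hfstar.1 ⟨z, hz, rfl⟩) ((hx1 ω).symm ▸ hx1mem) (hx · ω) hn hu ht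
  rw [hx1] at this
  linarith

/-- Convergence of S³CG (Variant 2) on `βD`: for every `u ∈ βD`,
`(1/n)Σ_{k=1}^n E⟨∇f(x^k), x^k − u⟩ ≤ √(MΔ)/√(γn) + MΔ/(γρn) + √ε_n + ε_n/ρ`, where
`ε_n = (1/n)Σ_k [M'ρE‖λ^k‖₂ + 4D₂²E‖λ^k‖₂²]`, `M = max{16β², 2}`,
`M' = max{16D₂β², 3D₂}`. -/
theorem SCGSS_variant2_rate
    {E : Type*} [NormedAddCommGroup E] [InnerProductSpace ℝ E] [FiniteDimensional ℝ E]
    {Ω : Type*} {mΩ : MeasurableSpace Ω} (μ : Measure Ω) [IsProbabilityMeasure μ]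
    (ℱ : Filtration ℕ mΩ)
    -- the (possibly non-Euclidean) norm `‖·‖` on `E` (`‖·‖₂` is the inner-product norm)
    (Nm : E → ℝ)
    (hNm0 : Nm 0 = 0)
    (hNmpos : ∀ z : E, z ≠ 0 → 0 < Nm z)
    (hNmsmul : ∀ (a : ℝ) (z : E), Nm (a • z) = |a| * Nm z)
    (hNmadd : ∀ z w : E, Nm (z + w) ≤ Nm z + Nm w)
    -- the dual norm `‖d‖_* = sup {⟨d,x⟩ : ‖x‖ ≤ 1}`
    (Dstar : E → ℝ)
    (hDstar : ∀ d : E, IsLUB ((fun z => ⟪d, z⟫) '' {z : E | Nm z ≤ 1}) (Dstar d))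
    -- the linear minimization oracle `lmo(d) ∈ argmin {⟨d,x⟩ : ‖x‖ ≤ 1}`
    (lmo : E → E)
    (hlmo : ∀ d : E, Nm (lmo d) ≤ 1 ∧ ∀ z : E, Nm z ≤ 1 → ⟪d, lmo d⟫ ≤ ⟪d, z⟫)
    -- `f` differentiable with gradient `f'`
    (f : E → ℝ) (f' : E → E)
    (hdiff : ∀ z, HasGradientAt f (f' z) z)
    -- `L`-smoothness and the associated descent inequality
    (L : ℝ) (hL : 0 < L)
    (hsmooth : ∀ z w : E, Dstar (f' z - f' w) ≤ L * Nm (z - w))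
    (hdesc : ∀ z w : E, f w ≤ f z + ⟪f' z, w - z⟫ + L / 2 * (Nm (w - z)) ^ 2)
    -- constraint radius and `f* = inf_{x ∈ βD} f(x) > -∞`
    (β : ℝ) (hβ : 0 < β)
    (fstar : ℝ) (hfstar : IsGLB (f '' {z : E | Nm z ≤ β}) fstar)
    (n : ℕ) (hn : 1 ≤ n)
    -- parameters: `γ ≤ 1/L`, `γρ ≤ 1`, `α ∈ (0,1]`
    (γ ρ σ : ℝ) (hγ : 0 < γ) (hρ : 0 < ρ) (hσ : 0 ≤ σ)
    (hγL : γ ≤ 1 / L) (hγρ : γ * ρ ≤ 1)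
    (α : ℝ) (hα : 0 < α ∧ α ≤ 1)
    -- the iterates: `v^k = x^k − β·lmo(d^k)`, `η_k = min{ρ, ⟨d^k,v^k⟩/(4β²)}`,
    -- `x^{k+1} = x^k − γη_k v^k`, with `x¹ ∈ βD` deterministic
    (x d g : ℕ → Ω → E)
    (x1 : E) (hx1 : ∀ ω, x 1 ω = x1) (hx1mem : Nm x1 ≤ β)
    (hd0 : ∀ ω, d 0 ω = 0)
    (hd : ∀ k, 1 ≤ k → ∀ ω, d k ω = α • g k ω + (1 - α) • d (k - 1) ω)
    (hx : ∀ (k : ℕ) (ω : Ω), x (k + 1) ω =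
      x k ω - (γ * min ρ (⟪d k ω, x k ω - β • lmo (d k ω)⟫ /
          (4 * β ^ 2))) • (x k ω - β • lmo (d k ω)))
    -- the filtration is generated by the iterates
    (hx_adapted : ∀ k, StronglyMeasurable[ℱ k] (x k))
    (hd_adapted : ∀ k, StronglyMeasurable[ℱ (k + 1)] (d k))
    -- the stochastic gradient is conditionally unbiased with variance at most `σ²`
    (hg_unbiased : ∀ k, 1 ≤ k → μ[g k | ℱ k] =ᵐ[μ] fun ω => f' (x k ω))
    (hg_var : ∀ k, 1 ≤ k →
      ∀ᵐ ω ∂μ, (μ[fun ω' => ‖g k ω' - f' (x k ω')‖ ^ 2 | ℱ k]) ω ≤ σ ^ 2)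
    -- integrability of the quantities appearing in the statement
    (herrint2 : ∀ k, Integrable (fun ω => ‖d k ω - f' (x k ω)‖ ^ 2) μ)
    (herrint1 : ∀ k, Integrable (fun ω => ‖d k ω - f' (x k ω)‖) μ)
    (hgapint : ∀ (k : ℕ) (u : E), Integrable (fun ω => ⟪f' (x k ω), x k ω - u⟫) μ)
    (hfint : ∀ k, Integrable (fun ω => f (x k ω)) μ)
    -- the Euclidean diameter `D₂` of `βD` and the constants `M`, `M'`, `ε_n`
    (D2 : ℝ) (hD2 : ∀ z w : E, Nm z ≤ β → Nm w ≤ β → ‖z - w‖ ≤ D2)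
    (M M' : ℝ) (hM : M = max (16 * β ^ 2) 2) (hM' : M' = max (16 * D2 * β ^ 2) (3 * D2))
    (εn : ℝ)
    (hεn : εn = (1 / (n : ℝ)) * ∑ k ∈ Finset.Icc 1 n,
      (M' * ρ * ∫ ω, ‖d k ω - f' (x k ω)‖ ∂μ
        + 4 * D2 ^ 2 * ∫ ω, ‖d k ω - f' (x k ω)‖ ^ 2 ∂μ)) :
    ∀ u : E, Nm u ≤ β →
      (1 / (n : ℝ)) * ∑ k ∈ Finset.Icc 1 n, ∫ ω, ⟪f' (x k ω), x k ω - u⟫ ∂μ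
        ≤ Real.sqrt (M * (f x1 - fstar)) / Real.sqrt (γ * n)
          + M * (f x1 - fstar) / (γ * ρ * n)
          + Real.sqrt εn + εn / ρ :=
  SCGSS_variant2_rate_general (mΩ := mΩ) μ Nm hNmsmul hNmadd lmo hlmo f f' L hL hdesc β hβ fstar
    hfstar n hn γ ρ hγ hρ hγL hγρ x d x1 hx1 hx1mem hx herrint1 hgapint D2 hD2 M M' hM hM' εn hεn
end
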